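/- arXiv:2511.19754 — 10 statements merged into one kernel-verified Lean document; each statement's English description precedes it below -/
import Mathlib

section
/- Let n ≥ 1, let u₀ ∈ ℝ and u ∈ ℝⁿ satisfy u₀ ≥ 0, uᵢ ≥ 0 for all i, and u₀ ≤ Σ_{i=1}^n uᵢ. Define H : ℝⁿ × ℝ → ℝ by H(x, t) = u₀·t + Σ_{i=1}^n uᵢ·max(0, xᵢ − t). Then H is submodular on ℝⁿ × ℝ: for all (x, t), (x′, t′) ∈ ℝⁿ × ℝ, H(x, t) + H(x′, t′) ≥ H(x ⊔ x′, max(t, t′)) + H(x ⊓ x′, min(t, t′)). -/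
/-- Convexity-style helper for `max 0`. -/
lemma max0_pair (p q r s : ℝ) (hsum : p + s = q + r) (hq : q ≤ p) (hr : r ≤ p) :
    max 0 q + max 0 r ≤ max 0 p + max 0 s := by
  simp only [max_def]
  split_ifs <;> linarith

/-- Per-coordinate submodularity of `(a, t) ↦ max 0 (a - t)`. -/
lemma key (a b t t' : ℝ) :
    max 0 (max a b - max t t') + max 0 (min a b - min t t')
      ≤ max 0 (a - t) + max 0 (b - t') := by
  rcases le_total a b with h | h <;> rcases le_total t t' with h' | h' <;>
    simp only [max_eq_left, max_eq_right, min_eq_left, min_eq_right, h, h']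
  · linarith
  · linarith [max0_pair (b - t') (b - t) (a - t') (a - t) (by ring) (by linarith) (by linarith)]
  · linarith [max0_pair (a - t) (a - t') (b - t) (b - t') (by ring) (by linarith) (by linarith)]
  · linarith

/-- The function `H (x, t) = u₀·t + ∑ i, uᵢ·max(0, xᵢ − t)` is
(continuous) submodular on `ℝⁿ × ℝ`. -/
theorem stmt_0 (n : ℕ) (hn : 1 ≤ n) (u₀ : ℝ) (u : Fin n → ℝ)
    (hu₀ : 0 ≤ u₀) (hu : ∀ i, 0 ≤ u i) (hsum : u₀ ≤ ∑ i, u i)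
    (H : (Fin n → ℝ) → ℝ → ℝ)
    (hH : ∀ x t, H x t = u₀ * t + ∑ i, u i * max 0 (x i - t)) :
    ∀ (x x' : Fin n → ℝ) (t t' : ℝ),
      H x t + H x' t' ≥ H (x ⊔ x') (max t t') + H (x ⊓ x') (min t t') := by
  intro x x' t t'
  simp only [hH, Pi.sup_apply, Pi.inf_apply]
  have hmod : u₀ * max t t' + u₀ * min t t' = u₀ * t + u₀ * t' := by
    rcases le_total t t' with h | h <;>
      simp [max_eq_left, max_eq_right, min_eq_left, min_eq_right, h] <;> ring
  have hsum2 :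
      (∑ i, u i * max 0 (max (x i) (x' i) - max t t'))
        + ∑ i, u i * max 0 (min (x i) (x' i) - min t t')
      ≤ (∑ i, u i * max 0 (x i - t)) + ∑ i, u i * max 0 (x' i - t') := by
    rw [← Finset.sum_add_distrib, ← Finset.sum_add_distrib]
    apply Finset.sum_le_sum
    intro i _
    rw [← mul_add, ← mul_add]
    exact mul_le_mul_of_nonneg_left (key (x i) (x' i) t t') (hu i)
  linarith
end

section
/- Let n ≥ 1, let u₀ ∈ ℝ and u ∈ ℝⁿ satisfy u₀ ≥ 0, uᵢ ≥ 0 for all i, and u₀ ≤ Σ_{i=1}^n uᵢ. For each i ∈ {1,…,n} let hⁱ : ℤ → ℝ be antitone (monotonically decreasing). Define F : ℤⁿ → ℝ by F(x) = min_{j∈{1,…,n}} [ u₀·hʲ(x_j) + Σ_{i=1}^n uᵢ·max(0, hⁱ(xᵢ) − hʲ(x_j)) ]. Then F is lattice submodular: F(x) + F(y) ≥ F(x ⊔ y) + F(x ⊓ y) for all x, y ∈ ℤⁿ. -/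
open Finset


private lemma lemA (n : ℕ) (hn : 1 ≤ n) (u₀ : ℝ) (u : Fin n → ℝ)
    (hu₀ : 0 ≤ u₀) (hu : ∀ i, 0 ≤ u i) (hsum : u₀ ≤ ∑ i, u i)
    (b : Fin n → ℝ) (t : ℝ) :
    ∃ j, u₀ * b j + ∑ i, u i * max 0 (b i - b j)
        ≤ u₀ * t + ∑ i, u i * max 0 (b i - t) := by
  classical
  set A := univ.filter (fun i : Fin n => b i ≤ t) with hA
  set B := univ.filter (fun i : Fin n => ¬ b i ≤ t) with hB
  -- sum simplification
  have sum_eq : ∀ r : ℝ, (∀ i ∈ A, b i ≤ r) → (∀ i ∈ B, r ≤ b i) →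
      ∑ i, u i * max 0 (b i - r) = ∑ i ∈ B, u i * (b i - r) := by
    intro r h1 h2
    rw [← Finset.sum_filter_add_sum_filter_not univ (fun i => b i ≤ t)]
    have e1 : ∑ i ∈ A, u i * max 0 (b i - r) = 0 := by
      apply Finset.sum_eq_zero
      intro i hi
      rw [max_eq_left (by linarith [h1 i hi])]
      ring
    have e2 : ∑ i ∈ B, u i * max 0 (b i - r) = ∑ i ∈ B, u i * (b i - r) := by
      apply Finset.sum_congr rfl
      intro i hi
      rw [max_eq_right (by linarith [h2 i hi])]
    rw [← hA, ← hB, e1, e2, zero_add]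
  have htA : ∀ i ∈ A, b i ≤ t := fun i hi => (Finset.mem_filter.mp hi).2
  have htB : ∀ i ∈ B, t ≤ b i := fun i hi => le_of_not_ge (Finset.mem_filter.mp hi).2
  have htB' : ∀ i ∈ B, t < b i := fun i hi => lt_of_not_ge (Finset.mem_filter.mp hi).2
  set S := ∑ i ∈ B, u i with hS
  have hSnn : 0 ≤ S := Finset.sum_nonneg (fun i _ => hu i)
  have rhs_eq : ∑ i, u i * max 0 (b i - t) = ∑ i ∈ B, u i * (b i - t) :=
    sum_eq t htA htB
  -- case 1: A nonempty and S ≤ u₀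
  have case1 : A.Nonempty → S ≤ u₀ → ∃ j, u₀ * b j + ∑ i, u i * max 0 (b i - b j) ≤ u₀ * t + ∑ i, u i * max 0 (b i - t) := by
    intro hAne hSu
    obtain ⟨j, hjA, hjmax⟩ := Finset.exists_max_image A b hAne
    refine ⟨j, ?_⟩
    have hbjt : b j ≤ t := htA j hjA
    have lhs_eq : ∑ i, u i * max 0 (b i - b j) = ∑ i ∈ B, u i * (b i - b j) :=
      sum_eq (b j) hjmax (fun i hi => le_trans hbjt (htB i hi))
    rw [lhs_eq, rhs_eq]
    have expand : ∑ i ∈ B, u i * (b i - b j)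
        = ∑ i ∈ B, u i * (b i - t) + S * (t - b j) := by
      rw [hS, Finset.sum_mul, ← Finset.sum_add_distrib]
      apply Finset.sum_congr rfl
      intro i _; ring
    rw [expand]
    nlinarith [mul_le_mul_of_nonneg_right hSu (sub_nonneg.mpr hbjt)]
  -- case 2: B nonempty and u₀ ≤ S
  have case2 : B.Nonempty → u₀ ≤ S → ∃ j, u₀ * b j + ∑ i, u i * max 0 (b i - b j) ≤ u₀ * t + ∑ i, u i * max 0 (b i - t) := by
    intro hBne hSu
    obtain ⟨j, hjB, hjmin⟩ := Finset.exists_min_image B b hBne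
    refine ⟨j, ?_⟩
    have hbjt : t ≤ b j := htB j hjB
    have lhs_eq : ∑ i, u i * max 0 (b i - b j) = ∑ i ∈ B, u i * (b i - b j) :=
      sum_eq (b j) (fun i hi => le_trans (htA i hi) hbjt) hjmin
    rw [lhs_eq, rhs_eq]
    have expand : ∑ i ∈ B, u i * (b i - b j)
        = ∑ i ∈ B, u i * (b i - t) - S * (b j - t) := by
      rw [hS, Finset.sum_mul, ← Finset.sum_sub_distrib]
      apply Finset.sum_congr rfl
      intro i _; ring
    rw [expand]
    nlinarith [mul_le_mul_of_nonneg_right hSu (sub_nonneg.mpr hbjt)]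
  by_cases hAne : A.Nonempty
  · rcases le_total S u₀ with h1 | h1
    · exact case1 hAne h1
    · by_cases hBne : B.Nonempty
      · exact case2 hBne h1
      · have : S = 0 := by
          rw [hS, Finset.not_nonempty_iff_eq_empty.mp hBne, Finset.sum_empty]
        exact case1 hAne (this ▸ hu₀)
  · have hBuniv : B = univ := by
      rw [hB]
      rw [Finset.filter_eq_self]
      intro i _
      intro hle
      exact hAne ⟨i, Finset.mem_filter.mpr ⟨Finset.mem_univ i, hle⟩⟩
    have hBne : B.Nonempty := by
      rw [hBuniv]
      exact Finset.univ_nonempty_iff.mpr ⟨⟨0, hn⟩⟩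
    have hSall : u₀ ≤ S := by rw [hS, hBuniv]; exact hsum
    exact case2 hBne hSall

private lemma key_pt (a b s t : ℝ) :
    max 0 (min a b - min s t) + max 0 (max a b - max s t)
      ≤ max 0 (a - s) + max 0 (b - t) := by
  simp only [max_def, min_def]
  split_ifs <;> linarith

/-- With antitone `hⁱ : ℤ → ℝ`, the function
`F(x) = min_j [ u₀·hʲ(x_j) + ∑ i, uᵢ·max(0, hⁱ(xᵢ) − hʲ(x_j)) ]` is lattice
submodular on `ℤⁿ`. -/
theorem stmt_2 (n : ℕ) (hn : 1 ≤ n) (u₀ : ℝ) (u : Fin n → ℝ)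
    (hu₀ : 0 ≤ u₀) (hu : ∀ i, 0 ≤ u i) (hsum : u₀ ≤ ∑ i, u i)
    (h : Fin n → ℤ → ℝ) (hanti : ∀ i, Antitone (h i))
    (F : (Fin n → ℤ) → ℝ)
    (hF : ∀ x, F x = ⨅ j : Fin n,
      (u₀ * h j (x j) + ∑ i, u i * max 0 (h i (x i) - h j (x j)))) :
    ∀ x y : Fin n → ℤ, F x + F y ≥ F (x ⊔ y) + F (x ⊓ y) := by
  have hne : Nonempty (Fin n) := ⟨⟨0, hn⟩⟩
  set G : (Fin n → ℤ) → ℝ → ℝ :=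
    fun z t => u₀ * t + ∑ i, u i * max 0 (h i (z i) - t) with hG
  -- F z ≤ G z t for every real t
  have hF_le : ∀ z t, F z ≤ G z t := by
    intro z t
    obtain ⟨j, hj⟩ := lemA n hn u₀ u hu₀ hu hsum (fun i => h i (z i)) t
    calc F z ≤ G z (h j (z j)) := by
          rw [hF]
          exact ciInf_le (Set.Finite.bddBelow (Set.finite_range _)) j
      _ ≤ G z t := hj
  -- F z attains G z (h j (z j)) for some j
  have hF_att : ∀ z, ∃ j, F z = G z (h j (z j)) := by
    intro z
    obtain ⟨j, hj⟩ := Finite.exists_min (fun j : Fin n => G z (h j (z j)))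
    refine ⟨j, ?_⟩
    rw [hF]
    exact le_antisymm (ciInf_le (Set.Finite.bddBelow (Set.finite_range _)) j)
      (le_ciInf hj)
  intro x y
  obtain ⟨j, hx⟩ := hF_att x
  obtain ⟨k, hy⟩ := hF_att y
  set s := h j (x j)
  set t := h k (y k)
  have hsup : ∀ i, h i ((x ⊔ y) i) = min (h i (x i)) (h i (y i)) := by
    intro i
    have : (x ⊔ y) i = max (x i) (y i) := rfl
    rw [this]
    rcases le_total (x i) (y i) with hc | hc
    · rw [max_eq_right hc, min_eq_right (hanti i hc)]
    · rw [max_eq_left hc, min_eq_left (hanti i hc)]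
  have hinf : ∀ i, h i ((x ⊓ y) i) = max (h i (x i)) (h i (y i)) := by
    intro i
    have : (x ⊓ y) i = min (x i) (y i) := rfl
    rw [this]
    rcases le_total (x i) (y i) with hc | hc
    · rw [min_eq_left hc, max_eq_left (hanti i hc)]
    · rw [min_eq_right hc, max_eq_right (hanti i hc)]
  have key : G (x ⊔ y) (min s t) + G (x ⊓ y) (max s t) ≤ G x s + G y t := by
    rw [hG]
    simp only
    have hsum_le : ∑ i, u i * max 0 (h i ((x ⊔ y) i) - min s t)
        + ∑ i, u i * max 0 (h i ((x ⊓ y) i) - max s t)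
        ≤ ∑ i, u i * max 0 (h i (x i) - s) + ∑ i, u i * max 0 (h i (y i) - t) := by
      rw [← Finset.sum_add_distrib, ← Finset.sum_add_distrib]
      apply Finset.sum_le_sum
      intro i _
      rw [hsup i, hinf i, ← mul_add, ← mul_add]
      exact mul_le_mul_of_nonneg_left (key_pt _ _ _ _) (hu i)
    have : u₀ * min s t + u₀ * max s t = u₀ * s + u₀ * t := by
      rw [← mul_add, ← mul_add, min_add_max]
    linarith
  have h1 : F (x ⊔ y) ≤ G (x ⊔ y) (min s t) := hF_le _ _
  have h2 : F (x ⊓ y) ≤ G (x ⊓ y) (max s t) := hF_le _ _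
  rw [ge_iff_le, hx, hy]
  linarith
end

section
/- Let F : ℤⁿ → ℝ satisfy: (i) F is antitone, i.e., x ≤ x′ componentwise implies F(x) ≥ F(x′); (ii) there exists r ∈ ℝ such that F(x + 1) = F(x) + r for all x ∈ ℤⁿ, where 1 is the all-ones vector; (iii) F(x ⊓ y) = max(F(x), F(y)) for all x, y ∈ ℤⁿ. Then F is lattice submodular (so F is L-convex), and for every c ∈ ℝ the function F^c : ℤⁿ → ℝ defined by F^c(x) = max(F(x), c) is L♮-convex: for all x, y ∈ ℤⁿ and every integer α ≥ 0, F^c(x) + F^c(y) ≥ F^c((x − α·1) ⊔ y) + F^c(x ⊓ (y + α·1)). -/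
/-- If `F : ℤⁿ → ℝ` is antitone, satisfies `F(x + 1) = F(x) + r`
for all `x`, and `F(x ⊓ y) = max(F x, F y)`, then `F` is lattice submodular
(hence L-convex), and for every `c ∈ ℝ` the function `F^c(x) = max(F x, c)` is
L♮-convex. -/
theorem stmt_3 (n : ℕ) (F : (Fin n → ℤ) → ℝ) (r : ℝ)
    (hanti : ∀ x x' : Fin n → ℤ, x ≤ x' → F x' ≤ F x)
    (hr : ∀ x : Fin n → ℤ, F (x + 1) = F x + r)
    (hmax : ∀ x y : Fin n → ℤ, F (x ⊓ y) = max (F x) (F y)) :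
    (∀ x y : Fin n → ℤ, F x + F y ≥ F (x ⊔ y) + F (x ⊓ y)) ∧
    (∀ c : ℝ, ∀ x y : Fin n → ℤ, ∀ α : ℤ, 0 ≤ α →
      max (F x) c + max (F y) c ≥
        max (F (((fun i => x i - α) : Fin n → ℤ) ⊔ y)) c
          + max (F (x ⊓ ((fun i => y i + α) : Fin n → ℤ))) c) := by
  have hrle : r ≤ 0 := by
    have h1 := hr 0
    have h2 := hanti 0 (0 + 1) (by intro i; simp)
    linarith
  have hshift : ∀ (k : ℕ) (x : Fin n → ℤ), F (fun i => x i + k) = F x + k * r := by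
    intro k
    induction k with
    | zero => intro x; simp
    | succ k ih =>
      intro x
      have h : (fun i => x i + ((k : ℕ) + 1 : ℕ)) = ((fun i => x i + (k : ℕ)) + 1) := by
        funext i; simp only [Pi.add_apply, Pi.one_apply]; push_cast; ring
      rw [h, hr, ih]; push_cast; ring
  constructor
  · intro x y
    have h1 := hmax x y
    have hx := hanti x (x ⊔ y) le_sup_left
    have hy := hanti y (x ⊔ y) le_sup_right
    rcases max_cases (F x) (F y) with ⟨he, _⟩ | ⟨he, _⟩ <;> linarith
  · intro c x y α hα
    lift α to ℕ using hα
    set x' : Fin n → ℤ := fun i => x i - (α : ℤ) with hx'def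
    have hFx' : F x = F x' + α * r := by
      have h := hshift α x'
      have he : (fun i => x' i + ((α : ℕ) : ℤ)) = x := by funext i; simp [hx'def]
      rw [he] at h; exact h
    have heq : x ⊓ (fun i => y i + (α : ℤ)) = (fun i => (x' ⊓ y) i + ((α : ℕ) : ℤ)) := by
      funext i; simp only [Pi.inf_apply, hx'def]; omega
    have hFin : F (x ⊓ (fun i => y i + (α : ℤ))) = max (F x') (F y) + α * r := by
      rw [heq, hshift α (x' ⊓ y), hmax]
    have hA1 : F (x' ⊔ y) ≤ F x' := hanti x' (x' ⊔ y) le_sup_left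
    have hA2 : F (x' ⊔ y) ≤ F y := hanti y (x' ⊔ y) le_sup_right
    have har : (α : ℝ) * r ≤ 0 := mul_nonpos_of_nonneg_of_nonpos (by positivity) hrle
    rw [hFin]
    rcases le_total (F x') (F y) with h1 | h1
    · rw [max_eq_right h1]
      rcases max_cases (F x) c with ⟨e1, l1⟩ | ⟨e1, l1⟩ <;>
      rcases max_cases (F y) c with ⟨e2, l2⟩ | ⟨e2, l2⟩ <;>
      rcases max_cases (F (x' ⊔ y)) c with ⟨e3, l3⟩ | ⟨e3, l3⟩ <;>
      rcases max_cases (F y + (α : ℝ) * r) c with ⟨e4, l4⟩ | ⟨e4, l4⟩ <;>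
      rw [e1, e2, e3, e4] <;> linarith
    · rw [max_eq_left h1]
      rcases max_cases (F x) c with ⟨e1, l1⟩ | ⟨e1, l1⟩ <;>
      rcases max_cases (F y) c with ⟨e2, l2⟩ | ⟨e2, l2⟩ <;>
      rcases max_cases (F (x' ⊔ y)) c with ⟨e3, l3⟩ | ⟨e3, l3⟩ <;>
      rcases max_cases (F x' + (α : ℝ) * r) c with ⟨e4, l4⟩ | ⟨e4, l4⟩ <;>
      rw [e1, e2, e3, e4] <;> linarith
end

section
/- Let a, b ∈ ℝⁿ and a₀, b₀ ∈ ℝ, and suppose there exist indices i, j ∈ {1,…,n} and reals α, β ≥ 0 such that a − b = α·eᵢ − β·e_j, where e_k denotes the k-th standard unit vector. Then the function F : ℤⁿ → ℝ defined by F(x) = max(aᵀx + a₀, bᵀx + b₀) is lattice submodular: F(x) + F(y) ≥ F(x ⊔ y) + F(x ⊓ y) for all x, y ∈ ℤⁿ. -/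
/-- Scalar convexity-type lemma: if `u + v = s + t` and `u` lies between
`min s t` and `max s t`, then `u⁺ + v⁺ ≤ s⁺ + t⁺`. -/
lemma key_pos_part (s t u v : ℝ) (huv : u + v = s + t)
    (h1 : min s t ≤ u) (h2 : u ≤ max s t) :
    max u 0 + max v 0 ≤ max s 0 + max t 0 := by
  rcases le_total s t with h | h <;>
    simp only [min_eq_left, min_eq_right, max_eq_left, max_eq_right, h] at h1 h2 <;>
    rcases le_total u 0 with hu | hu <;>
    rcases le_total v 0 with hv | hv <;>
    rcases le_total s 0 with hs | hs <;>
    rcases le_total t 0 with ht | ht <;>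
    simp [max_def] <;> split_ifs <;> linarith

/-- If `a − b = α·eᵢ − β·e_j` for some indices `i, j` and reals
`α, β ≥ 0`, then `F(x) = max(aᵀx + a₀, bᵀx + b₀)` is lattice submodular on `ℤⁿ`. -/
theorem stmt_5 (n : ℕ) (a b : Fin n → ℝ) (a₀ b₀ : ℝ)
    (hab : ∃ i j : Fin n, ∃ α β : ℝ, 0 ≤ α ∧ 0 ≤ β ∧
      a - b = α • (Pi.single i 1 : Fin n → ℝ) - β • (Pi.single j 1 : Fin n → ℝ))
    (F : (Fin n → ℤ) → ℝ)
    (hF : ∀ x : Fin n → ℤ,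
      F x = max (∑ k, a k * (x k : ℝ) + a₀) (∑ k, b k * (x k : ℝ) + b₀)) :
    ∀ x y : Fin n → ℤ, F x + F y ≥ F (x ⊔ y) + F (x ⊓ y) := by
  obtain ⟨i, j, α, β, hα, hβ, hab⟩ := hab
  intro x y
  set A : (Fin n → ℤ) → ℝ := fun z => ∑ k, a k * (z k : ℝ) + a₀ with hA
  set B : (Fin n → ℤ) → ℝ := fun z => ∑ k, b k * (z k : ℝ) + b₀ with hB
  -- modularity of linear functions
  have mod : ∀ c : Fin n → ℝ, (∑ k, c k * ((x ⊔ y) k : ℝ)) + (∑ k, c k * ((x ⊓ y) k : ℝ))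
      = (∑ k, c k * (x k : ℝ)) + (∑ k, c k * (y k : ℝ)) := by
    intro c
    rw [← Finset.sum_add_distrib, ← Finset.sum_add_distrib]
    refine Finset.sum_congr rfl fun k _ => ?_
    have : ((x ⊔ y) k : ℝ) + ((x ⊓ y) k : ℝ) = (x k : ℝ) + (y k : ℝ) := by
      have := max_add_min (x k) (y k)
      push_cast [Pi.sup_apply, Pi.inf_apply]
      exact_mod_cast this
    rw [← mul_add, ← mul_add, this]
  have modA : A (x ⊔ y) + A (x ⊓ y) = A x + A y := by
    simp only [hA]; have := mod a; ring_nf; ring_nf at this; linarith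
  have modB : B (x ⊔ y) + B (x ⊓ y) = B x + B y := by
    simp only [hB]; have := mod b; ring_nf; ring_nf at this; linarith
  -- the difference A - B is α zᵢ - β z_j + c
  have gdiff : ∀ z : Fin n → ℤ, A z - B z = α * (z i : ℝ) - β * (z j : ℝ) + (a₀ - b₀) := by
    intro z
    have hsum : ∀ (k₀ : Fin n), (∑ k, (Pi.single k₀ 1 : Fin n → ℝ) k * (z k : ℝ)) = (z k₀ : ℝ) := by
      intro k₀
      simp [Pi.single_apply, ite_mul, Finset.sum_ite_eq']
    have : (∑ k, (a k - b k) * (z k : ℝ))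
        = α * (z i : ℝ) - β * (z j : ℝ) := by
      have : ∀ k, a k - b k = α * (Pi.single i 1 : Fin n → ℝ) k - β * (Pi.single j 1 : Fin n → ℝ) k := by
        intro k
        have := congrFun hab k
        simpa [Pi.sub_apply, Pi.smul_apply, smul_eq_mul] using this
      calc (∑ k, (a k - b k) * (z k : ℝ))
          = ∑ k, (α * (Pi.single i 1 : Fin n → ℝ) k * (z k : ℝ) - β * (Pi.single j 1 : Fin n → ℝ) k * (z k : ℝ)) := by
            refine Finset.sum_congr rfl fun k _ => ?_
            rw [this k]; ring
        _ = α * (∑ k, (Pi.single i 1 : Fin n → ℝ) k * (z k : ℝ)) - β * (∑ k, (Pi.single j 1 : Fin n → ℝ) k * (z k : ℝ)) := by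
            rw [Finset.sum_sub_distrib, Finset.mul_sum, Finset.mul_sum]
            congr 1 <;> exact Finset.sum_congr rfl fun k _ => by ring
        _ = α * (z i : ℝ) - β * (z j : ℝ) := by rw [hsum, hsum]
    have hs : (∑ k, (a k - b k) * (z k : ℝ))
        = (∑ k, a k * (z k : ℝ)) - ∑ k, b k * (z k : ℝ) := by
      rw [← Finset.sum_sub_distrib]
      exact Finset.sum_congr rfl fun k _ => by ring
    simp only [hA, hB]
    rw [← this, hs]
    ring
  set s := A x - B x
  set t := A y - B y
  set u := A (x ⊔ y) - B (x ⊔ y)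
  set v := A (x ⊓ y) - B (x ⊓ y)
  have huv : u + v = s + t := by simp only [s, t, u, v]; linarith
  have hsup : ∀ k, ((x ⊔ y) k : ℝ) = max (x k : ℝ) (y k : ℝ) := by
    intro k; push_cast [Pi.sup_apply]; ring
  have hsupi := hsup i
  have hsupj := hsup j
  have hbet1 : min s t ≤ u := by
    simp only [s, t, u, gdiff, min_le_iff]
    rw [hsupi, hsupj]
    rcases le_total (x j : ℝ) (y j : ℝ) with h | h
    · right
      rw [max_eq_right h]
      have : (y i : ℝ) ≤ max (x i : ℝ) (y i : ℝ) := le_max_right _ _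
      nlinarith
    · left
      rw [max_eq_left h]
      have : (x i : ℝ) ≤ max (x i : ℝ) (y i : ℝ) := le_max_left _ _
      nlinarith
  have hbet2 : u ≤ max s t := by
    simp only [s, t, u, gdiff, le_max_iff]
    rw [hsupi, hsupj]
    rcases le_total (x i : ℝ) (y i : ℝ) with h | h
    · right
      rw [max_eq_right h]
      have : (y j : ℝ) ≤ max (x j : ℝ) (y j : ℝ) := le_max_right _ _
      nlinarith
    · left
      rw [max_eq_left h]
      have : (x j : ℝ) ≤ max (x j : ℝ) (y j : ℝ) := le_max_left _ _
      nlinarith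
  have hkey := key_pos_part s t u v huv hbet1 hbet2
  have hFz : ∀ z : Fin n → ℤ, F z = B z + max (A z - B z) 0 := by
    intro z
    rw [hF z]
    simp only [hA, hB]
    rcases le_total (∑ k, a k * (z k : ℝ) + a₀) (∑ k, b k * (z k : ℝ) + b₀) with h | h
    · rw [max_eq_right h, max_eq_right (by linarith)]; ring
    · rw [max_eq_left h, max_eq_left (by linarith)]; ring
  rw [hFz x, hFz y, hFz (x ⊔ y), hFz (x ⊓ y)]
  have := modB
  simp only [ge_iff_le]
  linarith [hkey]
end

section
/- Let a, b ∈ ℝⁿ and a₀, b₀ ∈ ℝ, and suppose there exist indices i, j ∈ {1,…,n} and a real α ≥ 0 such that a − b = α·(eᵢ − e_j), where e_k denotes the k-th standard unit vector. Then F : ℤⁿ → ℝ defined by F(x) = max(aᵀx + a₀, bᵀx + b₀) is L-convex: F(x) + F(y) ≥ F(x ⊔ y) + F(x ⊓ y) for all x, y ∈ ℤⁿ, and F(x + 1) = F(x) + r for all x ∈ ℤⁿ, where r = Σ_{k=1}^n a_k and 1 is the all-ones vector. -/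
private lemma aux_max_shift (p q : ℝ) : max p q = q + max (p - q) 0 := by
  rcases le_total p q with h | h
  · rw [max_eq_right h, max_eq_right (by linarith)]; ring
  · rw [max_eq_left h, max_eq_left (by linarith)]; ring

private lemma aux_max (p q s t : ℝ) (h1 : s + t = p + q) (h2 : s ≤ max p q)
    (h3 : t ≤ max p q) : max s 0 + max t 0 ≤ max p 0 + max q 0 := by
  have hp1 := le_max_left p (0:ℝ)
  have hp2 := le_max_right p (0:ℝ)
  have hq1 := le_max_left q (0:ℝ)
  have hq2 := le_max_right q (0:ℝ)
  rcases le_total s 0 with hs | hs <;> rcases le_total t 0 with ht | ht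
  · rw [max_eq_right hs, max_eq_right ht]; linarith
  · rw [max_eq_right hs, max_eq_left ht]
    rcases le_max_iff.mp h3 with h | h <;> linarith
  · rw [max_eq_left hs, max_eq_right ht]
    rcases le_max_iff.mp h2 with h | h <;> linarith
  · rw [max_eq_left hs, max_eq_left ht]; linarith

/-- If `a − b = α·(eᵢ − e_j)` for some indices `i, j` and a real
`α ≥ 0`, then `F(x) = max(aᵀx + a₀, bᵀx + b₀)` is L-convex on `ℤⁿ`: it is lattice
submodular and `F(x + 1) = F(x) + ∑ k, a_k` for all `x`. -/
theorem stmt_6 (n : ℕ) (a b : Fin n → ℝ) (a₀ b₀ : ℝ)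
    (hab : ∃ i j : Fin n, ∃ α : ℝ, 0 ≤ α ∧
      a - b = α • ((Pi.single i 1 : Fin n → ℝ) - (Pi.single j 1 : Fin n → ℝ)))
    (F : (Fin n → ℤ) → ℝ)
    (hF : ∀ x : Fin n → ℤ,
      F x = max (∑ k, a k * (x k : ℝ) + a₀) (∑ k, b k * (x k : ℝ) + b₀)) :
    (∀ x y : Fin n → ℤ, F x + F y ≥ F (x ⊔ y) + F (x ⊓ y)) ∧
    (∀ x : Fin n → ℤ, F (x + 1) = F x + ∑ k, a k) := by
  obtain ⟨i, j, α, hα, hd⟩ := hab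
  have hk : ∀ k, a k - b k
      = α * ((if k = i then (1:ℝ) else 0) - (if k = j then 1 else 0)) := by
    intro k
    have := congrFun hd k
    simpa [Pi.single_apply] using this
  -- difference of the two linear parts
  have hg : ∀ x : Fin n → ℤ,
      (∑ k, a k * (x k : ℝ)) - (∑ k, b k * (x k : ℝ))
        = α * ((x i : ℝ) - (x j : ℝ)) := by
    intro x
    rw [← Finset.sum_sub_distrib]
    have : ∀ k ∈ Finset.univ, a k * (x k : ℝ) - b k * (x k : ℝ)
        = α * ((if k = i then (1:ℝ) else 0) - (if k = j then 1 else 0)) * (x k : ℝ) := by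
      intro k _
      rw [← sub_mul, hk k]
    rw [Finset.sum_congr rfl this]
    simp [sub_mul, mul_sub, ite_mul, mul_assoc, Finset.sum_sub_distrib]
  -- modularity of linear sums
  have hmod : ∀ (c : Fin n → ℝ) (x y : Fin n → ℤ),
      (∑ k, c k * (((x ⊔ y) k : ℤ) : ℝ)) + (∑ k, c k * (((x ⊓ y) k : ℤ) : ℝ))
        = (∑ k, c k * (x k : ℝ)) + ∑ k, c k * (y k : ℝ) := by
    intro c x y
    rw [← Finset.sum_add_distrib, ← Finset.sum_add_distrib]
    apply Finset.sum_congr rfl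
    intro k _
    have h1 : ((x ⊔ y) k) + ((x ⊓ y) k) = x k + y k := by
      simp [Pi.sup_apply, Pi.inf_apply, max_add_min]
    have h2 : (((x ⊔ y) k : ℤ) : ℝ) + (((x ⊓ y) k : ℤ) : ℝ) = (x k : ℝ) + (y k : ℝ) := by
      exact_mod_cast congrArg (Int.cast : ℤ → ℝ) h1
    rw [← mul_add, ← mul_add, h2]
  constructor
  · intro x y
    set u := x ⊔ y with hu
    set v := x ⊓ y with hv
    have ha' := hmod a x y
    have hb' := hmod b x y
    -- bound on g at sup
    have hgu : (∑ k, a k * ((u k : ℤ) : ℝ)) - (∑ k, b k * ((u k : ℤ) : ℝ))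
        ≤ max ((∑ k, a k * ((x k : ℤ) : ℝ)) - (∑ k, b k * ((x k : ℤ) : ℝ)))
              ((∑ k, a k * ((y k : ℤ) : ℝ)) - (∑ k, b k * ((y k : ℤ) : ℝ))) := by
      rw [hg u, hg x, hg y]
      rcases le_total (x i) (y i) with h | h
      · apply le_max_of_le_right
        have hui : u i = y i := by
          simp only [hu, Pi.sup_apply]; exact sup_eq_right.mpr h
        have huj : y j ≤ u j := by
          simp only [hu, Pi.sup_apply]; exact le_sup_right
        have : ((u i : ℤ) : ℝ) - ((u j : ℤ) : ℝ) ≤ ((y i : ℤ) : ℝ) - ((y j : ℤ) : ℝ) := by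
          rw [hui]
          have : ((y j : ℤ) : ℝ) ≤ ((u j : ℤ) : ℝ) := by exact_mod_cast huj
          linarith
        exact mul_le_mul_of_nonneg_left this hα
      · apply le_max_of_le_left
        have hui : u i = x i := by
          simp only [hu, Pi.sup_apply]; exact sup_eq_left.mpr h
        have huj : x j ≤ u j := by
          simp only [hu, Pi.sup_apply]; exact le_sup_left
        have : ((u i : ℤ) : ℝ) - ((u j : ℤ) : ℝ) ≤ ((x i : ℤ) : ℝ) - ((x j : ℤ) : ℝ) := by
          rw [hui]
          have : ((x j : ℤ) : ℝ) ≤ ((u j : ℤ) : ℝ) := by exact_mod_cast huj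
          linarith
        exact mul_le_mul_of_nonneg_left this hα
    -- bound on g at inf
    have hgv : (∑ k, a k * ((v k : ℤ) : ℝ)) - (∑ k, b k * ((v k : ℤ) : ℝ))
        ≤ max ((∑ k, a k * ((x k : ℤ) : ℝ)) - (∑ k, b k * ((x k : ℤ) : ℝ)))
              ((∑ k, a k * ((y k : ℤ) : ℝ)) - (∑ k, b k * ((y k : ℤ) : ℝ))) := by
      rw [hg v, hg x, hg y]
      rcases le_total (x j) (y j) with h | h
      · apply le_max_of_le_left
        have hvj : v j = x j := by
          simp only [hv, Pi.inf_apply]; exact inf_eq_left.mpr h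
        have hvi : v i ≤ x i := by
          simp only [hv, Pi.inf_apply]; exact inf_le_left
        have : ((v i : ℤ) : ℝ) - ((v j : ℤ) : ℝ) ≤ ((x i : ℤ) : ℝ) - ((x j : ℤ) : ℝ) := by
          rw [hvj]
          have : ((v i : ℤ) : ℝ) ≤ ((x i : ℤ) : ℝ) := by exact_mod_cast hvi
          linarith
        exact mul_le_mul_of_nonneg_left this hα
      · apply le_max_of_le_right
        have hvj : v j = y j := by
          simp only [hv, Pi.inf_apply]; exact inf_eq_right.mpr h
        have hvi : v i ≤ y i := by
          simp only [hv, Pi.inf_apply]; exact inf_le_right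
        have : ((v i : ℤ) : ℝ) - ((v j : ℤ) : ℝ) ≤ ((y i : ℤ) : ℝ) - ((y j : ℤ) : ℝ) := by
          rw [hvj]
          have : ((v i : ℤ) : ℝ) ≤ ((y i : ℤ) : ℝ) := by exact_mod_cast hvi
          linarith
        exact mul_le_mul_of_nonneg_left this hα
    rw [hF x, hF y, hF u, hF v]
    rw [aux_max_shift (∑ k, a k * ((x k : ℤ) : ℝ) + a₀) (∑ k, b k * ((x k : ℤ) : ℝ) + b₀),
        aux_max_shift (∑ k, a k * ((y k : ℤ) : ℝ) + a₀) (∑ k, b k * ((y k : ℤ) : ℝ) + b₀),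
        aux_max_shift (∑ k, a k * ((u k : ℤ) : ℝ) + a₀) (∑ k, b k * ((u k : ℤ) : ℝ) + b₀),
        aux_max_shift (∑ k, a k * ((v k : ℤ) : ℝ) + a₀) (∑ k, b k * ((v k : ℤ) : ℝ) + b₀)]
    have key := aux_max
      ((∑ k, a k * ((x k : ℤ) : ℝ) + a₀) - (∑ k, b k * ((x k : ℤ) : ℝ) + b₀))
      ((∑ k, a k * ((y k : ℤ) : ℝ) + a₀) - (∑ k, b k * ((y k : ℤ) : ℝ) + b₀))
      ((∑ k, a k * ((u k : ℤ) : ℝ) + a₀) - (∑ k, b k * ((u k : ℤ) : ℝ) + b₀))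
      ((∑ k, a k * ((v k : ℤ) : ℝ) + a₀) - (∑ k, b k * ((v k : ℤ) : ℝ) + b₀))
      (by linarith)
      (by rcases le_max_iff.mp hgu with h | h
          · exact le_max_of_le_left (by linarith)
          · exact le_max_of_le_right (by linarith))
      (by rcases le_max_iff.mp hgv with h | h
          · exact le_max_of_le_left (by linarith)
          · exact le_max_of_le_right (by linarith))
    linarith
  · intro x
    rw [hF x, hF (x + 1)]
    have hsum : (∑ k, b k) = ∑ k, a k := by
      have : (∑ k, (a k - b k)) = ∑ k, α * ((if k = i then (1:ℝ) else 0) - (if k = j then 1 else 0)) := by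
        exact Finset.sum_congr rfl fun k _ => hk k
      have h0 : (∑ k, (a k - b k)) = 0 := by
        rw [this]; simp [mul_sub, Finset.sum_sub_distrib]
      rw [Finset.sum_sub_distrib] at h0
      linarith
    have ha1 : (∑ k, a k * (((x + 1) k : ℤ) : ℝ)) = (∑ k, a k * ((x k : ℤ) : ℝ)) + ∑ k, a k := by
      rw [← Finset.sum_add_distrib]
      apply Finset.sum_congr rfl
      intro k _
      simp only [Pi.add_apply, Pi.one_apply]
      push_cast
      ring
    have hb1 : (∑ k, b k * (((x + 1) k : ℤ) : ℝ)) = (∑ k, b k * ((x k : ℤ) : ℝ)) + ∑ k, a k := by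
      rw [← hsum, ← Finset.sum_add_distrib]
      apply Finset.sum_congr rfl
      intro k _
      simp only [Pi.add_apply, Pi.one_apply]
      push_cast
      ring
    rw [ha1, hb1,
        show (∑ k, a k * ((x k : ℤ) : ℝ)) + (∑ k, a k) + a₀
          = (∑ k, a k * ((x k : ℤ) : ℝ) + a₀) + ∑ k, a k by ring,
        show (∑ k, b k * ((x k : ℤ) : ℝ)) + (∑ k, a k) + b₀
          = (∑ k, b k * ((x k : ℤ) : ℝ) + b₀) + ∑ k, a k by ring,
        max_add_add_right]
end

section
/- Let f : ℤⁿ → ℝ be L♮-convex. Fix any p ∈ ℤⁿ and any permutation δ of {1,…,n}, and set p^k = p + Σ_{j=1}^k e_{δ(j)} for k = 0, 1, …, n. Then for every x ∈ ℤⁿ, f(x) ≥ f(p⁰) + Σ_{i=1}^n [ f(pⁱ) − f(pⁱ⁻¹) ]·(x_{δ(i)} − p_{δ(i)}). (That is, every shifted extremal polymatroid inequality is valid for the epigraph of f.) -/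
namespace SEPI7

/-- prefix 0/1 vector with `k` ones (in the first `k` coordinates) -/
def q (n k : ℕ) : Fin n → ℤ := fun i => if (i : ℕ) < k then 1 else 0

variable {n : ℕ}

/-- the affine function of the SEPI (for `p = 0`, `δ = id`) -/
noncomputable def lin (g : (Fin n → ℤ) → ℝ) (z : Fin n → ℤ) : ℝ :=
  g (q n 0) + ∑ i : Fin n, (g (q n ((i : ℕ) + 1)) - g (q n (i : ℕ))) * (z i : ℝ)

noncomputable def Phi (g : (Fin n → ℤ) → ℝ) (z : Fin n → ℤ) : ℝ := g z - lin g z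

/-- `L`-distance of a point to the unit cube, used as induction measure -/
def W (z : Fin n → ℤ) : ℕ := ∑ i : Fin n, ((z i - 1).toNat + (-(z i)).toNat)

lemma lin_add (g : (Fin n → ℤ) → ℝ) {x y x' y' : Fin n → ℤ}
    (h : ∀ i, x' i + y' i = x i + y i) :
    lin g x' + lin g y' = lin g x + lin g y := by
  unfold lin
  have key : ∀ (a b : Fin n → ℤ),
      (g (q n 0) + ∑ i : Fin n, (g (q n ((i:ℕ)+1)) - g (q n (i:ℕ))) * (a i : ℝ))
      + (g (q n 0) + ∑ i : Fin n, (g (q n ((i:ℕ)+1)) - g (q n (i:ℕ))) * (b i : ℝ))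
      = 2 * g (q n 0) + ∑ i : Fin n,
          (g (q n ((i:ℕ)+1)) - g (q n (i:ℕ))) * ((a i : ℝ) + (b i : ℝ)) := by
    intro a b
    simp only [mul_add]
    rw [Finset.sum_add_distrib]
    ring
  rw [key, key]
  congr 1
  apply Finset.sum_congr rfl
  intro i _
  congr 1
  exact_mod_cast h i

lemma Phi_ineq (g : (Fin n → ℤ) → ℝ)
    (hg : ∀ x y : Fin n → ℤ, ∀ α : ℤ, 0 ≤ α →
      g x + g y ≥ g (((fun i => x i - α) : Fin n → ℤ) ⊔ y)
        + g (x ⊓ ((fun i => y i + α) : Fin n → ℤ)))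
    (x y : Fin n → ℤ) (α : ℤ) (hα : 0 ≤ α) :
    Phi g x + Phi g y ≥ Phi g (((fun i => x i - α) : Fin n → ℤ) ⊔ y)
        + Phi g (x ⊓ ((fun i => y i + α) : Fin n → ℤ)) := by
  have hsum : ∀ i, ((((fun i => x i - α) : Fin n → ℤ) ⊔ y) i)
      + ((x ⊓ ((fun i => y i + α) : Fin n → ℤ)) i) = x i + y i := by
    intro i
    simp only [Pi.sup_apply, Pi.inf_apply]
    omega
  have hl := lin_add g hsum
  have := hg x y α hα
  unfold Phi
  linarith

lemma sum_q (g : (Fin n → ℤ) → ℝ) : ∀ k ≤ n,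
    ∑ i : Fin n, (g (q n ((i:ℕ)+1)) - g (q n (i:ℕ))) * ((q n k i : ℤ) : ℝ)
      = g (q n k) - g (q n 0) := by
  intro k hk
  induction k with
  | zero => simp [q]
  | succ k ih =>
    have hk' : k < n := hk
    have step : ∀ i : Fin n, (g (q n ((i:ℕ)+1)) - g (q n (i:ℕ))) * ((q n (k+1) i : ℤ) : ℝ)
        = (g (q n ((i:ℕ)+1)) - g (q n (i:ℕ))) * ((q n k i : ℤ) : ℝ)
          + (if i = (⟨k, hk'⟩ : Fin n) then g (q n (k+1)) - g (q n k) else 0) := by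
      intro i
      unfold q
      rcases lt_trichotomy (i : ℕ) k with h | h | h
      · have h1 : (i:ℕ) < k + 1 := by omega
        have h2 : i ≠ (⟨k, hk'⟩ : Fin n) := by
          intro he; rw [he] at h; simp at h
        simp [h, h1, h2]
      · have h1 : (i:ℕ) < k + 1 := by omega
        have h2 : i = (⟨k, hk'⟩ : Fin n) := by
          apply Fin.ext; simpa using h
        simp [h, h1, h2]
      · have h1 : ¬ ((i:ℕ) < k + 1) := by omega
        have h2 : i ≠ (⟨k, hk'⟩ : Fin n) := by
          intro he; rw [he] at h; simp at h
        simp [h1, h2, not_lt_of_gt h]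
    rw [Finset.sum_congr rfl (fun i _ => step i), Finset.sum_add_distrib,
      Finset.sum_ite_eq' Finset.univ (⟨k, hk'⟩ : Fin n), ih (le_of_lt hk')]
    simp

lemma cube_nonneg (Φ : (Fin n → ℤ) → ℝ)
    (hsub : ∀ x y : Fin n → ℤ, Φ x + Φ y ≥ Φ (x ⊔ y) + Φ (x ⊓ y))
    (hq : ∀ k ≤ n, Φ (q n k) = 0) :
    ∀ (m : ℕ) (z : Fin n → ℤ), (∀ i, z i = 0 ∨ z i = 1) →
      (Finset.univ.filter (fun i => z i = 0)).card ≤ m → Φ z ≥ 0 := by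
  intro m
  induction m with
  | zero =>
    intro z hz hc
    have hall : ∀ i, z i = 1 := by
      intro i
      rcases hz i with h | h
      · exfalso
        have : i ∈ Finset.univ.filter (fun i => z i = 0) := by simp [h]
        have := Finset.card_pos.mpr ⟨i, this⟩
        omega
      · exact h
    have : z = q n n := by
      funext i; rw [hall i]; unfold q; simp [i.isLt]
    rw [this, hq n le_rfl]
  | succ m ih =>
    intro z hz hc
    by_cases hne : (Finset.univ.filter (fun i => z i = 0)).Nonempty
    · set Z := Finset.univ.filter (fun i => z i = 0) with hZ
      set a := Z.min' hne with ha
      have haZ : a ∈ Z := Z.min'_mem hne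
      have haz : z a = 0 := by
        have := haZ; rw [hZ] at this; simpa using this
      have hbelow : ∀ i : Fin n, (i : ℕ) < (a : ℕ) → z i = 1 := by
        intro i hi
        rcases hz i with h | h
        · exfalso
          have hiZ : i ∈ Z := by rw [hZ]; simp [h]
          have := Z.min'_le i hiZ
          rw [← ha] at this
          exact absurd (Fin.lt_def.mpr hi) (not_lt_of_ge this)
        · exact h
      have han : (a : ℕ) + 1 ≤ n := a.isLt
      have hsup : z ⊔ q n ((a:ℕ)+1) = fun i => if i = a then 1 else z i := by
        funext i
        simp only [Pi.sup_apply]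
        unfold q
        rcases lt_trichotomy (i : ℕ) (a : ℕ) with h | h | h
        · have h2 : i ≠ a := fun he => by rw [he] at h; omega
          rw [hbelow i h]
          simp [h2, Nat.lt_succ_of_lt h]
        · have h2 : i = a := Fin.ext h
          rw [h2, haz]
          simp
        · have h2 : i ≠ a := fun he => by rw [he] at h; omega
          have h3 : ¬ ((i:ℕ) < (a:ℕ)+1) := by omega
          have h4 : 0 ≤ z i := by rcases hz i with h' | h' <;> omega
          simp [h2, h3, max_eq_left h4]
      have hinf : z ⊓ q n ((a:ℕ)+1) = q n (a : ℕ) := by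
        funext i
        simp only [Pi.inf_apply]
        unfold q
        rcases lt_trichotomy (i : ℕ) (a : ℕ) with h | h | h
        · rw [hbelow i h]
          simp [h, Nat.lt_succ_of_lt h]
        · have h2 : i = a := Fin.ext h
          rw [h2, haz]
          simp [h]
        · have h3 : ¬ ((i:ℕ) < (a:ℕ)+1) := by omega
          have h4 : 0 ≤ z i := by rcases hz i with h' | h' <;> omega
          simp [h3, not_lt_of_gt h, min_eq_right h4]
      set z' : Fin n → ℤ := fun i => if i = a then 1 else z i with hz'
      have hz'cube : ∀ i, z' i = 0 ∨ z' i = 1 := by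
        intro i; rw [hz']; by_cases h : i = a
        · simp [h]
        · simpa [h] using hz i
      have hz'card : (Finset.univ.filter (fun i => z' i = 0)).card ≤ m := by
        have hfe : Finset.univ.filter (fun i => z' i = 0) = Z.erase a := by
          ext i
          rw [hZ, hz']
          simp only [Finset.mem_filter, Finset.mem_univ, true_and, Finset.mem_erase]
          by_cases h : i = a
          · simp [h]
          · simp [h]
        rw [hfe]
        have := Finset.card_erase_of_mem haZ
        omega
      have h1 := ih z' hz'cube hz'card
      have h2 := hsub z (q n ((a:ℕ)+1))
      rw [hsup, hinf] at h2
      rw [hq ((a:ℕ)+1) han, hq (a:ℕ) (le_of_lt a.isLt)] at h2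
      linarith
    · have hall : ∀ i, z i = 1 := by
        intro i
        rcases hz i with h | h
        · exact absurd ⟨i, by simp [h]⟩ hne
        · exact h
      have : z = q n n := by
        funext i; rw [hall i]; unfold q; simp [i.isLt]
      rw [this, hq n le_rfl]

lemma phi_nonneg (Φ : (Fin n → ℤ) → ℝ)
    (hΦ : ∀ x y : Fin n → ℤ, ∀ α : ℤ, 0 ≤ α →
      Φ x + Φ y ≥ Φ (((fun i => x i - α) : Fin n → ℤ) ⊔ y)
        + Φ (x ⊓ ((fun i => y i + α) : Fin n → ℤ)))
    (hq : ∀ k ≤ n, Φ (q n k) = 0) :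
    ∀ z, Φ z ≥ 0 := by
  have hsub : ∀ x y : Fin n → ℤ, Φ x + Φ y ≥ Φ (x ⊔ y) + Φ (x ⊓ y) := by
    intro x y
    have e1 : ((fun i => x i - (0:ℤ)) : Fin n → ℤ) = x := by funext i; ring
    have e2 : ((fun i => y i + (0:ℤ)) : Fin n → ℤ) = y := by funext i; ring
    have := hΦ x y 0 le_rfl
    rwa [e1, e2] at this
  have hcube : ∀ z : Fin n → ℤ, (∀ i, z i = 0 ∨ z i = 1) → Φ z ≥ 0 := by
    intro z hz
    exact cube_nonneg Φ hsub hq (Finset.univ.filter (fun i => z i = 0)).card z hz le_rfl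
  suffices h : ∀ (N : ℕ) (z : Fin n → ℤ), W z ≤ N → Φ z ≥ 0 by
    intro z; exact h (W z) z le_rfl
  intro N
  induction N with
  | zero =>
    intro z hW
    apply hcube
    intro i
    have hW0 : W z = 0 := Nat.le_zero.mp hW
    unfold W at hW0
    have h0 := (Finset.sum_eq_zero_iff.mp hW0) i (Finset.mem_univ i)
    omega
  | succ N ih =>
    intro z hW
    by_cases hgood : ∀ i, z i = 0 ∨ z i = 1
    · exact hcube z hgood
    · push_neg at hgood
      obtain ⟨i0, hi0⟩ := hgood
      by_cases hA : ∃ i, 2 ≤ z i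
      · -- reduce the maximum
        obtain ⟨iA, hiA⟩ := hA
        have hne : (Finset.univ : Finset (Fin n)).Nonempty := ⟨iA, Finset.mem_univ iA⟩
        set M := Finset.univ.sup' hne z with hMdef
        have hM : 2 ≤ M := le_trans hiA (Finset.le_sup' z (Finset.mem_univ iA))
        obtain ⟨istar, -, hstar⟩ := Finset.exists_mem_eq_sup' hne z
        have hle : ∀ i, z i ≤ M := fun i => Finset.le_sup' z (Finset.mem_univ i)
        have h2 := hΦ z (q n 0) (M - 1) (by omega)
        set x' := (((fun i => z i - (M-1)) : Fin n → ℤ) ⊔ q n 0) with hx'def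
        set y' := (z ⊓ ((fun i => q n 0 i + (M-1)) : Fin n → ℤ)) with hy'def
        have hx' : ∀ i, x' i = max (z i - (M-1)) 0 := by
          intro i
          simp [hx'def, Pi.sup_apply, q]
        have hy' : ∀ i, y' i = min (z i) (M-1) := by
          intro i
          simp [hy'def, Pi.inf_apply, q]
        have hx'cube : Φ x' ≥ 0 := by
          apply hcube
          intro i
          rw [hx' i]
          have := hle i
          omega
        have hWy' : W y' < W z := by
          unfold W
          apply Finset.sum_lt_sum
          · intro i _
            rw [hy' i]
            have := hle i
            omega
          · refine ⟨istar, Finset.mem_univ istar, ?_⟩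
            rw [hy' istar, ← hstar]
            omega
        have hy'0 : Φ y' ≥ 0 := ih y' (by omega)
        have hq0 : Φ (q n 0) = 0 := hq 0 (Nat.zero_le n)
        linarith
      · -- reduce the minimum
        push_neg at hA
        have hm0 : z i0 ≤ -1 := by
          have := hA i0
          omega
        have hne : (Finset.univ : Finset (Fin n)).Nonempty := ⟨i0, Finset.mem_univ i0⟩
        set m := Finset.univ.inf' hne z with hmdef
        have hm : m ≤ -1 := le_trans (Finset.inf'_le z (Finset.mem_univ i0)) hm0
        obtain ⟨istar, -, hstar⟩ := Finset.exists_mem_eq_inf' hne z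
        have hle : ∀ i, m ≤ z i := fun i => Finset.inf'_le z (Finset.mem_univ i)
        have h2 := hΦ (q n n) z (-m) (by omega)
        set x' := (((fun i => q n n i - (-m)) : Fin n → ℤ) ⊔ z) with hx'def
        set y' := ((q n n) ⊓ ((fun i => z i + (-m)) : Fin n → ℤ)) with hy'def
        have hqn : ∀ i : Fin n, q n n i = 1 := by
          intro i; simp [q, i.isLt]
        have hx' : ∀ i, x' i = max (1 + m) (z i) := by
          intro i
          simp only [hx'def, Pi.sup_apply, hqn i]
          ring_nf
        have hy' : ∀ i, y' i = min 1 (z i - m) := by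
          intro i
          simp only [hy'def, Pi.inf_apply, hqn i]
          ring_nf
        have hy'cube : Φ y' ≥ 0 := by
          apply hcube
          intro i
          rw [hy' i]
          have := hle i
          omega
        have hWx' : W x' < W z := by
          unfold W
          apply Finset.sum_lt_sum
          · intro i _
            rw [hx' i]
            have := hle i
            omega
          · refine ⟨istar, Finset.mem_univ istar, ?_⟩
            rw [hx' istar, ← hstar]
            omega
        have hx'0 : Φ x' ≥ 0 := ih x' (by omega)
        have hqn0 : Φ (q n n) = 0 := hq n le_rfl
        linarith

/-- main lemma: validity of the SEPI for `p = 0`, `δ = id` -/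
lemma key (g : (Fin n → ℤ) → ℝ)
    (hg : ∀ x y : Fin n → ℤ, ∀ α : ℤ, 0 ≤ α →
      g x + g y ≥ g (((fun i => x i - α) : Fin n → ℤ) ⊔ y)
        + g (x ⊓ ((fun i => y i + α) : Fin n → ℤ)))
    (z : Fin n → ℤ) : g z ≥ lin g z := by
  have hq : ∀ k ≤ n, Phi g (q n k) = 0 := by
    intro k hk
    unfold Phi lin
    rw [sum_q g k hk]
    ring
  have := phi_nonneg (Phi g) (Phi_ineq g hg) hq z
  unfold Phi at this
  linarith

end SEPI7

/-- Validity of the shifted extremal polymatroid inequalities.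
If `f : ℤⁿ → ℝ` is L♮-convex, `p ∈ ℤⁿ`, `δ` is a permutation of `{1,…,n}`, and
`p^k = p + ∑_{j=1}^k e_{δ(j)}` (encoded as `p i + (if δ⁻¹ i < k then 1 else 0)`),
then for every `x ∈ ℤⁿ`,
`f(x) ≥ f(p⁰) + ∑ i [f(pⁱ) − f(pⁱ⁻¹)]·(x_{δ(i)} − p_{δ(i)})`. -/
theorem stmt_7 (n : ℕ) (f : (Fin n → ℤ) → ℝ)
    (hf : ∀ x y : Fin n → ℤ, ∀ α : ℤ, 0 ≤ α →
      f x + f y ≥ f (((fun i => x i - α) : Fin n → ℤ) ⊔ y)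
        + f (x ⊓ ((fun i => y i + α) : Fin n → ℤ)))
    (p : Fin n → ℤ) (δ : Equiv.Perm (Fin n))
    (P : ℕ → Fin n → ℤ)
    (hP : ∀ k i, P k i = p i + if ((δ.symm i : Fin n) : ℕ) < k then 1 else 0) :
    ∀ x : Fin n → ℤ,
      f x ≥ f (P 0) + ∑ i : Fin n,
        (f (P ((i : ℕ) + 1)) - f (P (i : ℕ))) * ((x (δ i) : ℝ) - (p (δ i) : ℝ)) := by
  intro x
  -- conjugated function: translate by p and permute by δ
  set g : (Fin n → ℤ) → ℝ := fun z => f (fun j => p j + z (δ.symm j)) with hgdef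
  have hgP : ∀ k, g (SEPI7.q n k) = f (P k) := by
    intro k
    show f (fun j => p j + SEPI7.q n k (δ.symm j)) = f (P k)
    congr 1
    funext j
    rw [hP k j]
    rfl
  have hg : ∀ x y : Fin n → ℤ, ∀ α : ℤ, 0 ≤ α →
      g x + g y ≥ g (((fun i => x i - α) : Fin n → ℤ) ⊔ y)
        + g (x ⊓ ((fun i => y i + α) : Fin n → ℤ)) := by
    intro a b α hα
    have hfab := hf (fun j => p j + a (δ.symm j)) (fun j => p j + b (δ.symm j)) α hα
    have e1 : (((fun j => (fun j => p j + a (δ.symm j)) j - α) : Fin n → ℤ)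
        ⊔ (fun j => p j + b (δ.symm j)))
        = fun j => p j + ((((fun i => a i - α) : Fin n → ℤ) ⊔ b) (δ.symm j)) := by
      funext j
      simp only [Pi.sup_apply]
      omega
    have e2 : ((fun j => p j + a (δ.symm j)) : Fin n → ℤ)
        ⊓ ((fun j => (fun j => p j + b (δ.symm j)) j + α) : Fin n → ℤ)
        = fun j => p j + ((a ⊓ ((fun i => b i + α) : Fin n → ℤ)) (δ.symm j)) := by
      funext j
      simp only [Pi.inf_apply]
      omega
    rw [e1, e2] at hfab
    exact hfab
  set z : Fin n → ℤ := fun j => x (δ j) - p (δ j) with hzdef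
  have hgz : g z = f x := by
    show f (fun j => p j + z (δ.symm j)) = f x
    congr 1
    funext j
    simp only [hzdef, Equiv.apply_symm_apply]
    ring
  have hmain := SEPI7.key g hg z
  rw [hgz] at hmain
  unfold SEPI7.lin at hmain
  rw [hgP 0] at hmain
  refine le_trans (le_of_eq ?_) hmain
  congr 1
  apply Finset.sum_congr rfl
  intro i _
  rw [hgP ((i:ℕ)+1), hgP (i:ℕ), hzdef]
  push_cast
  ring
end

section
/- Let ℓ, u ∈ ℤⁿ with ℓᵢ ≤ uᵢ − 1 for all i, let 𝒳 = {x ∈ ℤⁿ : ℓ ≤ x ≤ u}, and let f : 𝒳 → ℝ be L♮-convex. Let x̂ ∈ ℝⁿ with ℓ ≤ x̂ ≤ u. Define p ∈ ℤⁿ by pᵢ = x̂ᵢ − 1 if x̂ᵢ = uᵢ and pᵢ = ⌊x̂ᵢ⌋ otherwise, and let δ be any permutation of {1,…,n} such that x̂_{δ(1)} − p_{δ(1)} ≥ x̂_{δ(2)} − p_{δ(2)} ≥ … ≥ x̂_{δ(n)} − p_{δ(n)}. With p^k = p + Σ_{j=1}^k e_{δ(j)}, set θ = f(p⁰) + Σ_{i=1}^n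 [f(pⁱ) − f(pⁱ⁻¹)]·(x̂_{δ(i)} − p_{δ(i)}). Then (i) f(x) ≥ f(p⁰) + Σ_{i=1}^n [f(pⁱ) − f(pⁱ⁻¹)]·(x_{δ(i)} − p_{δ(i)}) for every x ∈ 𝒳, and (ii) for every π₀ ∈ ℝ and π ∈ ℝⁿ satisfying π₀ + πᵀx ≤ f(x) for all x ∈ 𝒳, one has π₀ + πᵀx̂ ≤ θ. Hence θ is the maximum of π₀ + πᵀx̂ over all affine minorants of f on 𝒳, i.e., the SEPI returned by the greedy construction is a most violated valid inequality. -/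
/-- Membership in the discrete hyperrectangle `𝒳 = {x ∈ ℤⁿ : l ≤ x ≤ u}`. -/
def inBox {n : ℕ} (l u x : Fin n → ℤ) : Prop := ∀ i, l i ≤ x i ∧ x i ≤ u i

/-- L♮-convexity of `f` on the box `{x ∈ ℤⁿ : l ≤ x ≤ u}`. -/
def IsLNatOn {n : ℕ} (l u : Fin n → ℤ) (f : (Fin n → ℤ) → ℝ) : Prop :=
  ∀ x y : Fin n → ℤ, inBox l u x → inBox l u y → ∀ α : ℤ, 0 ≤ α →
    inBox l u (((fun i => x i - α) : Fin n → ℤ) ⊔ y) →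
    inBox l u (x ⊓ ((fun i => y i + α) : Fin n → ℤ)) →
    f x + f y ≥ f (((fun i => x i - α) : Fin n → ℤ) ⊔ y)
      + f (x ⊓ ((fun i => y i + α) : Fin n → ℤ))

private lemma mm_id (a b α : ℤ) (hα : 0 ≤ α) : max (a - α) b + min a (b + α) = a + b := by
  rcases le_total (a - α) b with hc | hc
  · rw [max_eq_right hc, min_eq_left (by omega)]; ring
  · rw [max_eq_left hc, min_eq_right (by omega)]; ring

private lemma abel_id (F L : ℕ → ℝ) : ∀ m : ℕ,
    ∑ k ∈ Finset.range (m + 1), (L k - L (k + 1)) * F k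
      = L 0 * F 0 - L (m + 1) * F m
        + ∑ i ∈ Finset.range m, (F (i + 1) - F i) * L (i + 1) := by
  intro m
  induction m with
  | zero => simp; ring
  | succ m ih =>
      rw [Finset.sum_range_succ, ih, Finset.sum_range_succ]; ring

private lemma hln_max_min {n : ℕ} (l u : Fin n → ℤ) (h : (Fin n → ℤ) → ℝ)
    (hln : IsLNatOn l u h) :
    ∀ x y : Fin n → ℤ, inBox l u x → inBox l u y → ∀ α : ℤ, 0 ≤ α →
      inBox l u (fun i => max (x i - α) (y i)) →
      inBox l u (fun i => min (x i) (y i + α)) →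
      h (fun i => max (x i - α) (y i)) + h (fun i => min (x i) (y i + α)) ≤ h x + h y := by
  intro x y hx hy α hα h1 h2
  have e1 : (((fun i => x i - α) : Fin n → ℤ) ⊔ y) = fun i => max (x i - α) (y i) := by
    funext i; simp [Pi.sup_apply]
  have e2 : (x ⊓ ((fun i => y i + α) : Fin n → ℤ)) = fun i => min (x i) (y i + α) := by
    funext i; simp [Pi.inf_apply]
  have := hln x y hx hy α hα (by rw [e1]; exact h1) (by rw [e2]; exact h2)
  rw [e1, e2] at this
  linarith

private lemma core {n : ℕ} (l u : Fin n → ℤ) (h : (Fin n → ℤ) → ℝ)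
    (hln : IsLNatOn l u h) (p : Fin n → ℤ)
    (hpl : ∀ i, l i ≤ p i) (hpu : ∀ i, p i + 1 ≤ u i)
    (δ : Equiv.Perm (Fin n))
    (hchain : ∀ k : ℕ, k ≤ n →
      h (fun i => p i + if ((δ.symm i : Fin n) : ℕ) < k then 1 else 0) = 0) :
    ∀ x, inBox l u x → 0 ≤ h x := by
  have hln' := hln_max_min l u h hln
  set Q : ℕ → Fin n → ℤ :=
    fun k i => p i + if ((δ.symm i : Fin n) : ℕ) < k then 1 else 0 with hQdef
  have hQ : ∀ k, k ≤ n → h (Q k) = 0 := hchain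
  have hQbox : ∀ k, inBox l u (Q k) := by
    intro k i
    have h1 := hpl i; have h2 := hpu i
    simp only [hQdef]
    split_ifs <;> omega
  have hQn : Q n = fun i => p i + 1 := by
    funext i; simp [hQdef, (δ.symm i).isLt]
  have hQ0 : Q 0 = p := by
    funext i; simp [hQdef]
  -- cube lemma
  have cube : ∀ m : ℕ, ∀ x : Fin n → ℤ, (∀ i, p i ≤ x i ∧ x i ≤ p i + 1) →
      (Finset.univ.filter (fun j : Fin n => x (δ j) = p (δ j))).card ≤ m → 0 ≤ h x := by
    intro m
    induction m with
    | zero =>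
      intro x hx hcard
      have hS : (Finset.univ.filter (fun j : Fin n => x (δ j) = p (δ j))) = ∅ :=
        Finset.card_eq_zero.mp (Nat.le_zero.mp hcard)
      have hxe : x = Q n := by
        funext i
        have h1 := hx i
        have h2 : (δ.symm i) ∉ (Finset.univ.filter (fun j : Fin n => x (δ j) = p (δ j))) := by
          rw [hS]; exact Finset.notMem_empty _
        rw [Finset.mem_filter, Equiv.apply_symm_apply] at h2
        push_neg at h2
        have h3 := h2 (Finset.mem_univ _)
        simp only [hQdef, (δ.symm i).isLt, if_true]
        omega
      rw [hxe, hQ n le_rfl]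
    | succ m ih =>
      intro x hx hcard
      by_cases hemp : (Finset.univ.filter (fun j : Fin n => x (δ j) = p (δ j))) = ∅
      · -- no low coordinate: x = Q n
        have hxe : x = Q n := by
          funext i
          have h1 := hx i
          have h2 : (δ.symm i) ∉ (Finset.univ.filter (fun j : Fin n => x (δ j) = p (δ j))) := by
            rw [hemp]; exact Finset.notMem_empty _
          rw [Finset.mem_filter, Equiv.apply_symm_apply] at h2
          push_neg at h2
          have h3 := h2 (Finset.mem_univ _)
          simp only [hQdef, (δ.symm i).isLt, if_true]
          omega
        rw [hxe, hQ n le_rfl]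
      · set S := (Finset.univ.filter (fun j : Fin n => x (δ j) = p (δ j))) with hSdef
        have hne : S.Nonempty := Finset.nonempty_of_ne_empty hemp
        set k := S.min' hne with hkdef
        have hkS : k ∈ S := S.min'_mem hne
        have hkx : x (δ k) = p (δ k) := (Finset.mem_filter.mp hkS).2
        have hlow : ∀ j : Fin n, (j : ℕ) < (k : ℕ) → x (δ j) = p (δ j) + 1 := by
          intro j hj
          have hjS : j ∉ S := by
            intro hmem
            have := S.min'_le j hmem
            rw [← hkdef] at this
            exact absurd this (by omega)
          rw [hSdef, Finset.mem_filter] at hjS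
          push_neg at hjS
          have h3 := hjS (Finset.mem_univ _)
          have h4 := hx (δ j)
          omega
        -- the two lattice points
        have hbk : inBox l u x := by
          intro i; have h1 := hx i; have h2 := hpl i; have h3 := hpu i; omega
        have key := hln' x (Q ((k : ℕ) + 1)) hbk (hQbox _) 0 le_rfl ?_ ?_
        rotate_left
        · intro i
          have h1 := hx i; have h2 := hpl i; have h3 := hpu i
          simp only [hQdef]; split_ifs <;> omega
        · intro i
          have h1 := hx i; have h2 := hpl i; have h3 := hpu i
          simp only [hQdef]; split_ifs <;> omega
        have e1 : (fun i => max (x i - 0) (Q ((k : ℕ) + 1) i))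
            = fun i => if δ.symm i = k then p i + 1 else x i := by
          funext i
          have h1 := hx i
          rcases lt_trichotomy ((δ.symm i : Fin n) : ℕ) (k : ℕ) with hc | hc | hc
          · have hxi : x i = p i + 1 := by
              have := hlow (δ.symm i) hc
              rwa [Equiv.apply_symm_apply] at this
            have hne' : δ.symm i ≠ k := by intro hcon; rw [hcon] at hc; omega
            simp only [hQdef, if_neg hne', if_pos (by omega : ((δ.symm i : Fin n) : ℕ) < (k:ℕ)+1)]
            omega
          · have heq : δ.symm i = k := Fin.ext hc
            have hxi : x i = p i := by
              have : i = δ k := by rw [← heq, Equiv.apply_symm_apply]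
              rw [this]; exact hkx
            simp only [hQdef, if_pos heq, if_pos (by omega : ((δ.symm i : Fin n) : ℕ) < (k:ℕ)+1)]
            omega
          · have hne' : δ.symm i ≠ k := by intro hcon; rw [hcon] at hc; omega
            simp only [hQdef, if_neg hne',
              if_neg (by omega : ¬ (((δ.symm i : Fin n) : ℕ) < (k:ℕ)+1))]
            omega
        have e2 : (fun i => min (x i) (Q ((k : ℕ) + 1) i + 0)) = Q (k : ℕ) := by
          funext i
          have h1 := hx i
          rcases lt_trichotomy ((δ.symm i : Fin n) : ℕ) (k : ℕ) with hc | hc | hc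
          · have hxi : x i = p i + 1 := by
              have := hlow (δ.symm i) hc
              rwa [Equiv.apply_symm_apply] at this
            simp only [hQdef, if_pos hc, if_pos (by omega : ((δ.symm i : Fin n) : ℕ) < (k:ℕ)+1)]
            omega
          · have heq : δ.symm i = k := Fin.ext hc
            have hxi : x i = p i := by
              have : i = δ k := by rw [← heq, Equiv.apply_symm_apply]
              rw [this]; exact hkx
            simp only [hQdef, if_neg (by omega : ¬ (((δ.symm i : Fin n) : ℕ) < (k:ℕ))),
              if_pos (by omega : ((δ.symm i : Fin n) : ℕ) < (k:ℕ)+1)]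
            omega
          · simp only [hQdef, if_neg (by omega : ¬ (((δ.symm i : Fin n) : ℕ) < (k:ℕ))),
              if_neg (by omega : ¬ (((δ.symm i : Fin n) : ℕ) < (k:ℕ)+1))]
            omega
        rw [e1, e2] at key
        set z1 : Fin n → ℤ := fun i => if δ.symm i = k then p i + 1 else x i with hz1
        have hz1cube : ∀ i, p i ≤ z1 i ∧ z1 i ≤ p i + 1 := by
          intro i; have h1 := hx i; simp only [hz1]; split_ifs <;> omega
        have hz1card :
            (Finset.univ.filter (fun j : Fin n => z1 (δ j) = p (δ j))).card ≤ m := by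
          have hsub : (Finset.univ.filter (fun j : Fin n => z1 (δ j) = p (δ j))) ⊆ S.erase k := by
            intro j hj
            rw [Finset.mem_filter] at hj
            have hj2 := hj.2
            simp only [hz1, Equiv.symm_apply_apply] at hj2
            by_cases hjk : j = k
            · rw [if_pos hjk] at hj2; omega
            · rw [if_neg hjk] at hj2
              exact Finset.mem_erase.mpr ⟨hjk, Finset.mem_filter.mpr ⟨Finset.mem_univ _, hj2⟩⟩
          have := Finset.card_le_card hsub
          rw [Finset.card_erase_of_mem hkS] at this
          omega
        have hz1pos := ih z1 hz1cube hz1card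
        have hq1 := hQ ((k:ℕ)+1) (by omega)
        have hq2 := hQ (k:ℕ) (by omega)
        linarith
  have cube' : ∀ x : Fin n → ℤ, (∀ i, p i ≤ x i ∧ x i ≤ p i + 1) → 0 ≤ h x := by
    intro x hx
    exact cube n x hx (le_trans (Finset.card_filter_le _ _) (by simp))
  have cubebox : ∀ x : Fin n → ℤ, (∀ i, p i ≤ x i ∧ x i ≤ p i + 1) → inBox l u x := by
    intro x hx i; have h1 := hx i; have h2 := hpl i; have h3 := hpu i; omega
  -- Lemma A : no excess, bounded deficit
  have lemA : ∀ M : ℕ, ∀ x : Fin n → ℤ, inBox l u x → (∀ i, x i ≤ p i + 1) →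
      (∀ i, p i - x i ≤ (M : ℤ)) → 0 ≤ h x := by
    intro M
    induction M with
    | zero =>
      intro x hx hup hdef
      exact cube' x (fun i => by have := hdef i; have := hup i; constructor <;> omega)
    | succ M ih =>
      intro x hx hup hdef
      have key := hln' (fun i => p i + 1) x (cubebox _ (fun i => by omega)) hx
        ((M : ℤ) + 1) (by positivity) ?_ ?_
      rotate_left
      · intro i
        dsimp only
        have h1 := hx i; have h2 := hpl i; have h3 := hpu i
        constructor
        · exact le_max_of_le_right h1.1
        · apply max_le <;> omega
      · intro i
        dsimp only
        have h1 := hx i; have h2 := hpl i; have h3 := hpu i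
        constructor
        · apply le_min <;> omega
        · exact le_trans (min_le_left _ _) (by omega)
      have hz1 : 0 ≤ h (fun i => max (p i + 1 - ((M : ℤ) + 1)) (x i)) := by
        apply ih
        · intro i
          have h1 := hx i; have h2 := hpl i; have h3 := hpu i
          constructor
          · exact le_max_of_le_right h1.1
          · apply max_le <;> omega
        · intro i; have h1 := hup i; apply max_le <;> omega
        · intro i
          have := hdef i
          have : p i - max (p i + 1 - ((M : ℤ) + 1)) (x i) ≤ p i - (p i + 1 - ((M:ℤ)+1)) :=
            by have := le_max_left (p i + 1 - ((M : ℤ) + 1)) (x i); omega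
          omega
      have hz2 : 0 ≤ h (fun i => min (p i + 1) (x i + ((M : ℤ) + 1))) := by
        apply cube'
        intro i
        have h1 := hdef i; have h2 := hx i
        constructor
        · apply le_min <;> omega
        · exact le_trans (min_le_left _ _) (by omega)
      have hqn : h (fun i => p i + 1) = 0 := by rw [← hQn]; exact hQ n le_rfl
      linarith
  have lemA' : ∀ x : Fin n → ℤ, inBox l u x → (∀ i, x i ≤ p i + 1) → 0 ≤ h x := by
    intro x hx hup
    apply lemA (Finset.univ.sup fun i => (p i - l i).toNat) x hx hup
    intro i
    have h1 : p i - l i ≤ ((p i - l i).toNat : ℤ) := Int.self_le_toNat _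
    have h2 : (p i - l i).toNat ≤ Finset.univ.sup fun i => (p i - l i).toNat :=
      Finset.le_sup (f := fun i => (p i - l i).toNat) (Finset.mem_univ i)
    have h3 := (hx i).1
    have h4 : ((p i - l i).toNat : ℤ) ≤ ((Finset.univ.sup fun i => (p i - l i).toNat : ℕ) : ℤ) :=
      Int.ofNat_le.mpr h2
    omega
  -- Lemma B : bounded excess
  have lemB : ∀ M : ℕ, ∀ x : Fin n → ℤ, inBox l u x →
      (∀ i, x i ≤ p i + 1 + (M : ℤ)) → 0 ≤ h x := by
    intro M
    induction M with
    | zero =>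
      intro x hx hup
      exact lemA' x hx (fun i => by have := hup i; omega)
    | succ M ih =>
      intro x hx hup
      have key := hln' x p hx (cubebox p (fun i => by omega)) ((M : ℤ) + 1) (by positivity) ?_ ?_
      rotate_left
      · intro i
        have h1 := hx i; have h2 := hpl i; have h3 := hpu i; have h4 := hup i
        push_cast at h4 ⊢
        constructor
        · exact le_max_of_le_right h2
        · apply max_le <;> omega
      · intro i
        have h1 := hx i; have h2 := hpl i; have h3 := hpu i
        constructor
        · apply le_min <;> omega
        · exact le_trans (min_le_left _ _) h1.2
      have hz1 : 0 ≤ h (fun i => max (x i - ((M : ℤ) + 1)) (p i)) := by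
        apply cube'
        intro i
        have h1 := hup i
        push_cast at h1
        constructor
        · exact le_max_right _ _
        · apply max_le <;> omega
      have hz2 : 0 ≤ h (fun i => min (x i) (p i + ((M : ℤ) + 1))) := by
        apply ih
        · intro i
          have h1 := hx i; have h2 := hpl i; have h3 := hpu i
          constructor
          · apply le_min <;> omega
          · exact le_trans (min_le_left _ _) h1.2
        · intro i
          have := min_le_right (x i) (p i + ((M : ℤ) + 1))
          push_cast
          omega
      have hq0 : h p = 0 := by rw [← hQ0]; exact hQ 0 (by omega)
      linarith
  intro x hx
  apply lemB (Finset.univ.sup fun i => (u i - p i - 1).toNat) x hx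
  intro i
  have h1 : u i - p i - 1 ≤ ((u i - p i - 1).toNat : ℤ) := Int.self_le_toNat _
  have h2 : (u i - p i - 1).toNat ≤ Finset.univ.sup fun i => (u i - p i - 1).toNat :=
    Finset.le_sup (f := fun i => (u i - p i - 1).toNat) (Finset.mem_univ i)
  have h3 := (hx i).2
  have h4 : ((u i - p i - 1).toNat : ℤ)
      ≤ ((Finset.univ.sup fun i => (u i - p i - 1).toNat : ℕ) : ℤ) := Int.ofNat_le.mpr h2
  omega

/-- Exactness of the greedy separation of SEPIs. With
`p i = x̂ i − 1` if `x̂ i = u i` and `p i = ⌊x̂ i⌋` otherwise, and `δ` sorting the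
residuals `x̂_{δ(i)} − p_{δ(i)}` in descending order, the resulting SEPI is valid
for the epigraph of `f` on `𝒳`, and its value `θ` at `x̂` dominates
`π₀ + πᵀx̂` for every affine minorant `(π₀, π)` of `f` on `𝒳`. -/
theorem stmt_8 (n : ℕ) (l u : Fin n → ℤ) (hlu : ∀ i, l i ≤ u i - 1)
    (f : (Fin n → ℤ) → ℝ) (hf : IsLNatOn l u f)
    (xh : Fin n → ℝ) (hxh : ∀ i, (l i : ℝ) ≤ xh i ∧ xh i ≤ (u i : ℝ))
    (p : Fin n → ℤ)
    (hp : ∀ i, p i = if xh i = (u i : ℝ) then u i - 1 else ⌊xh i⌋)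
    (δ : Equiv.Perm (Fin n))
    (hδ : ∀ i j : Fin n, i ≤ j →
      xh (δ j) - (p (δ j) : ℝ) ≤ xh (δ i) - (p (δ i) : ℝ))
    (P : ℕ → Fin n → ℤ)
    (hP : ∀ k i, P k i = p i + if ((δ.symm i : Fin n) : ℕ) < k then 1 else 0)
    (θ : ℝ)
    (hθ : θ = f (P 0) + ∑ i : Fin n,
      (f (P ((i : ℕ) + 1)) - f (P (i : ℕ))) * (xh (δ i) - (p (δ i) : ℝ))) :
    (∀ x : Fin n → ℤ, inBox l u x →
      f x ≥ f (P 0) + ∑ i : Fin n,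
        (f (P ((i : ℕ) + 1)) - f (P (i : ℕ)))
          * ((x (δ i) : ℝ) - (p (δ i) : ℝ))) ∧
    (∀ (π₀ : ℝ) (π : Fin n → ℝ),
      (∀ x : Fin n → ℤ, inBox l u x → π₀ + ∑ i, π i * (x i : ℝ) ≤ f x) →
      π₀ + ∑ i, π i * xh i ≤ θ) := by
  classical
  -- basic bounds on p
  have hpl : ∀ i, l i ≤ p i := by
    intro i; rw [hp i]
    split_ifs with hc
    · have := hlu i; omega
    · exact Int.le_floor.mpr (hxh i).1
  have hpu : ∀ i, p i + 1 ≤ u i := by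
    intro i; rw [hp i]
    split_ifs with hc
    · omega
    · have hlt : xh i < (u i : ℝ) := lt_of_le_of_ne (hxh i).2 hc
      have := Int.floor_lt.mpr hlt
      omega
  have hlam : ∀ i : Fin n, 0 ≤ xh i - (p i : ℝ) ∧ xh i - (p i : ℝ) ≤ 1 := by
    intro i
    rw [hp i]
    split_ifs with hc
    · rw [hc]; push_cast; constructor <;> linarith
    · constructor
      · linarith [Int.floor_le (xh i)]
      · linarith [Int.lt_floor_add_one (xh i)]
  have hPbox : ∀ k, inBox l u (P k) := by
    intro k i
    rw [hP]
    have := hpl i; have := hpu i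
    split_ifs <;> omega
  -- f on the chain
  have key1 : ∀ k : ℕ, k ≤ n → f (P k) = f (P 0) + ∑ i : Fin n,
      (f (P ((i : ℕ) + 1)) - f (P (i : ℕ))) * ((P k (δ i) : ℝ) - (p (δ i) : ℝ)) := by
    intro k hk
    have t1 : ∀ i : Fin n, ((P k (δ i) : ℝ) - (p (δ i) : ℝ)) = if (i : ℕ) < k then 1 else 0 := by
      intro i
      rw [hP k (δ i), Equiv.symm_apply_apply]
      split_ifs <;> push_cast <;> ring
    have t2 : (∑ i : Fin n, (f (P ((i : ℕ) + 1)) - f (P (i : ℕ)))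
        * ((P k (δ i) : ℝ) - (p (δ i) : ℝ)))
        = ∑ i : Fin n, (if (i : ℕ) < k then f (P ((i : ℕ) + 1)) - f (P (i : ℕ)) else 0) := by
      refine Finset.sum_congr rfl fun i _ => ?_
      rw [t1 i]
      split_ifs <;> ring
    rw [t2, Fin.sum_univ_eq_sum_range (fun j => if j < k then f (P (j + 1)) - f (P j) else 0) n,
      ← Finset.sum_filter]
    have t3 : (Finset.range n).filter (fun j => j < k) = Finset.range k := by
      ext j
      simp only [Finset.mem_filter, Finset.mem_range]
      omega
    rw [t3, Finset.sum_range_sub (fun j => f (P j)) k]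
    ring
  -- the function h = f - (greedy affine minorant)
  set g : (Fin n → ℤ) → ℝ := fun x => f (P 0) + ∑ i : Fin n,
      (f (P ((i : ℕ) + 1)) - f (P (i : ℕ))) * ((x (δ i) : ℝ) - (p (δ i) : ℝ)) with hgdef
  have gkey : ∀ x y z₁ z₂ : Fin n → ℤ, (∀ i, z₁ i + z₂ i = x i + y i) →
      g z₁ + g z₂ = g x + g y := by
    intro x y z₁ z₂ hz
    simp only [hgdef]
    have : (∑ i : Fin n, (f (P ((i : ℕ) + 1)) - f (P (i : ℕ)))
          * ((z₁ (δ i) : ℝ) - (p (δ i) : ℝ)))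
        + (∑ i : Fin n, (f (P ((i : ℕ) + 1)) - f (P (i : ℕ)))
          * ((z₂ (δ i) : ℝ) - (p (δ i) : ℝ)))
        = (∑ i : Fin n, (f (P ((i : ℕ) + 1)) - f (P (i : ℕ)))
          * ((x (δ i) : ℝ) - (p (δ i) : ℝ)))
        + (∑ i : Fin n, (f (P ((i : ℕ) + 1)) - f (P (i : ℕ)))
          * ((y (δ i) : ℝ) - (p (δ i) : ℝ))) := by
      rw [← Finset.sum_add_distrib, ← Finset.sum_add_distrib]
      refine Finset.sum_congr rfl fun i _ => ?_
      have e : (z₁ (δ i) : ℝ) + (z₂ (δ i) : ℝ) = (x (δ i) : ℝ) + (y (δ i) : ℝ) := by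
        exact_mod_cast congrArg (Int.cast : ℤ → ℝ) (hz (δ i))
      linear_combination (f (P ((i : ℕ) + 1)) - f (P (i : ℕ))) * e
    linarith
  have hlnh : IsLNatOn l u (fun x => f x - g x) := by
    intro x y hx hy α hα h1 h2
    have hfq := hf x y hx hy α hα h1 h2
    have hz : ∀ i, (((fun i => x i - α) : Fin n → ℤ) ⊔ y) i
        + (x ⊓ ((fun i => y i + α) : Fin n → ℤ)) i = x i + y i := by
      intro i
      simp only [Pi.sup_apply, Pi.inf_apply]
      exact mm_id (x i) (y i) α hα
    have hgq := gkey x y _ _ hz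
    dsimp only
    linarith
  have hchain : ∀ k : ℕ, k ≤ n → (fun x => f x - g x)
      (fun i => p i + if ((δ.symm i : Fin n) : ℕ) < k then 1 else 0) = 0 := by
    intro k hk
    have hPk : P k = fun i => p i + if ((δ.symm i : Fin n) : ℕ) < k then 1 else 0 :=
      funext fun i => hP k i
    rw [← hPk]
    dsimp only
    rw [key1 k hk]
    simp only [hgdef]
    ring
  have hpos := core l u (fun x => f x - g x) hlnh p hpl hpu δ hchain
  constructor
  · -- part (i)
    intro x hx
    have := hpos x hx
    rw [hgdef] at this
    dsimp only at this
    linarith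
  · -- part (ii)
    intro π₀ π hmin
    set lam : ℕ → ℝ :=
      fun j => if hj : j < n then xh (δ ⟨j, hj⟩) - (p (δ ⟨j, hj⟩) : ℝ) else 0 with hlamdef
    set Λ : ℕ → ℝ := fun k => if k = 0 then 1 else lam (k - 1) with hΛdef
    have hΛ0 : Λ 0 = 1 := by simp [hΛdef]
    have hΛs : ∀ k : ℕ, Λ (k + 1) = lam k := by intro k; simp [hΛdef]
    have hΛn1 : Λ (n + 1) = 0 := by
      rw [hΛs, hlamdef]
      exact dif_neg (by omega)
    have hΛi : ∀ i : Fin n, Λ ((i : ℕ) + 1) = xh (δ i) - (p (δ i) : ℝ) := by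
      intro i
      rw [hΛs]
      simp only [hlamdef]
      rw [dif_pos i.isLt]
    have hlam01 : ∀ j : ℕ, 0 ≤ lam j ∧ lam j ≤ 1 := by
      intro j
      simp only [hlamdef]
      split_ifs with hj
      · exact hlam (δ ⟨j, hj⟩)
      · norm_num
    have hmono : ∀ k : ℕ, Λ (k + 1) ≤ Λ k := by
      intro k
      match k with
      | 0 => rw [hΛ0, hΛs]; exact (hlam01 0).2
      | (m + 1) =>
        rw [hΛs, hΛs]
        simp only [hlamdef]
        split_ifs with h1 h2 h2
        · exact hδ ⟨m, by omega⟩ ⟨m + 1, h1⟩ (Fin.mk_le_mk.mpr (by omega))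
        · omega
        · exact (hlam (δ ⟨m, h2⟩)).1
        · exact le_refl 0
    -- chain values of the minorant and of f
    set F : ℕ → ℝ := fun k => f (P k) with hFdef
    set G : ℕ → ℝ := fun k => π₀ + ∑ i : Fin n, π i * (P k i : ℝ) with hGdef
    have hGF : ∀ k, G k ≤ F k := fun k => hmin (P k) (hPbox k)
    have hG : ∀ k : ℕ, ∀ hk : k < n, G (k + 1) - G k = π (δ ⟨k, hk⟩) := by
      intro k hk
      have e : ∀ i : Fin n, π i * ((P (k + 1) i : ℝ)) - π i * ((P k i : ℝ))
          = if i = δ ⟨k, hk⟩ then π i else 0 := by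
        intro i
        have hint : (P (k + 1) i) - P k i = if δ.symm i = ⟨k, hk⟩ then 1 else 0 := by
          rw [hP, hP]
          by_cases hc : δ.symm i = ⟨k, hk⟩
          · have hval : ((δ.symm i : Fin n) : ℕ) = k := by rw [hc]
            rw [if_pos hc]
            split_ifs <;> omega
          · have hval : ((δ.symm i : Fin n) : ℕ) ≠ k := fun hcon => hc (Fin.ext hcon)
            rw [if_neg hc]
            split_ifs <;> omega
        have hcond : (δ.symm i = ⟨k, hk⟩) ↔ (i = δ ⟨k, hk⟩) := by
          constructor
          · intro hc; rw [← hc, Equiv.apply_symm_apply]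
          · intro hc; rw [hc, Equiv.symm_apply_apply]
        have hreal : (P (k + 1) i : ℝ) - (P k i : ℝ) = if i = δ ⟨k, hk⟩ then 1 else 0 := by
          by_cases hc : i = δ ⟨k, hk⟩
          · rw [if_pos hc]
            rw [if_pos (hcond.mpr hc)] at hint
            exact_mod_cast hint
          · rw [if_neg hc]
            rw [if_neg (fun hcon => hc (hcond.mp hcon))] at hint
            have heq : (P (k + 1) i) = P k i := by omega
            rw [heq]; ring
        calc π i * ((P (k + 1) i : ℝ)) - π i * ((P k i : ℝ))
            = π i * ((P (k + 1) i : ℝ) - (P k i : ℝ)) := by ring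
          _ = π i * (if i = δ ⟨k, hk⟩ then 1 else 0) := by rw [hreal]
          _ = if i = δ ⟨k, hk⟩ then π i else 0 := by split_ifs <;> ring
      have e2 : G (k + 1) - G k
          = ∑ i : Fin n, (π i * ((P (k + 1) i : ℝ)) - π i * ((P k i : ℝ))) := by
        simp only [hGdef]
        rw [Finset.sum_sub_distrib]
        ring
      rw [e2]
      rw [Finset.sum_congr rfl (fun i _ => e i)]
      rw [Finset.sum_ite_eq' Finset.univ (δ ⟨k, hk⟩) π]
      simp
    -- decomposition of θ
    have hθd : θ = F 0 + ∑ j ∈ Finset.range n, (F (j + 1) - F j) * Λ (j + 1) := by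
      rw [hθ, ← Fin.sum_univ_eq_sum_range (fun j => (F (j + 1) - F j) * Λ (j + 1)) n]
      congr 1
      refine Finset.sum_congr rfl fun i _ => ?_
      rw [hΛi i]
    -- decomposition of the affine value
    have hG0 : G 0 = π₀ + ∑ i : Fin n, π i * (p i : ℝ) := by
      simp only [hGdef]
      congr 1
      refine Finset.sum_congr rfl fun i _ => ?_
      rw [hP]
      norm_num
    have hxd : π₀ + ∑ i, π i * xh i
        = G 0 + ∑ j ∈ Finset.range n, (G (j + 1) - G j) * Λ (j + 1) := by
      have hxi : ∀ i : Fin n, xh i = (p i : ℝ) + Λ (((δ.symm i : Fin n) : ℕ) + 1) := by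
        intro i
        have := hΛi (δ.symm i)
        rw [Equiv.apply_symm_apply] at this
        rw [this]; ring
      have s1 : ∑ i : Fin n, π i * xh i
          = (∑ i : Fin n, π i * (p i : ℝ))
            + ∑ i : Fin n, π i * Λ (((δ.symm i : Fin n) : ℕ) + 1) := by
        rw [← Finset.sum_add_distrib]
        refine Finset.sum_congr rfl fun i _ => ?_
        rw [hxi i]; ring
      have s2 : ∑ i : Fin n, π i * Λ (((δ.symm i : Fin n) : ℕ) + 1)
          = ∑ j : Fin n, π (δ j) * Λ ((j : ℕ) + 1) := by
        rw [← Equiv.sum_comp δ (fun i => π i * Λ (((δ.symm i : Fin n) : ℕ) + 1))]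
        refine Finset.sum_congr rfl fun j _ => ?_
        rw [Equiv.symm_apply_apply]
      have s3 : ∑ j ∈ Finset.range n, (G (j + 1) - G j) * Λ (j + 1)
          = ∑ j : Fin n, π (δ j) * Λ ((j : ℕ) + 1) := by
        rw [← Fin.sum_univ_eq_sum_range (fun j => (G (j + 1) - G j) * Λ (j + 1)) n]
        refine Finset.sum_congr rfl fun j _ => ?_
        rw [hG (j : ℕ) j.isLt]
      rw [s1, s2, ← s3, hG0]
      ring
    -- Abel summation on both sides
    have habF := abel_id F Λ n
    have habG := abel_id G Λ n
    rw [hΛ0, hΛn1] at habF habG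
    have hsum : ∑ k ∈ Finset.range (n + 1), (Λ k - Λ (k + 1)) * G k
        ≤ ∑ k ∈ Finset.range (n + 1), (Λ k - Λ (k + 1)) * F k := by
      refine Finset.sum_le_sum fun k _ => ?_
      have h1 : 0 ≤ Λ k - Λ (k + 1) := by have := hmono k; linarith
      exact mul_le_mul_of_nonneg_left (hGF k) h1
    rw [hxd, hθd]
    linarith
end

section
/- Let ℓ, u ∈ ℤⁿ with ℓ ≤ u componentwise, let 𝒳 = {x ∈ ℤⁿ : ℓ ≤ x ≤ u}, and let f : 𝒳 → ℝ. Fix p ∈ ℤⁿ with ℓ ≤ p and p + 1 ≤ u componentwise, and a permutation δ of {1,…,n}; put p^k = p + Σ_{j=1}^k e_{δ(j)} for k = 0,…,n. Then: (a) the n + 2 points (p, f(p) + 1), (p⁰, f(p⁰)), (p¹, f(p¹)), …, (pⁿ, f(pⁿ)) of ℝⁿ × ℝ all lie in the epigraph 𝒫 = {(x, w) : x ∈ 𝒳, w ≥ f(x)} and are affinely independent (so the convex hull of 𝒫 is full-dimensional); and (b) each of the n + 1 points (p^k, f(p^k)), k = 0,…,n, satisfies the SEPI associated with p and δ with equality: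 f(p^k) = f(p⁰) + Σ_{i=1}^n [f(pⁱ) − f(pⁱ⁻¹)]·(p^k_{δ(i)} − p_{δ(i)}). -/
private lemma stmt9_aux (n : ℕ)
    (f : (Fin n → ℤ) → ℝ)
    (p : Fin n → ℤ)
    (δ : Equiv.Perm (Fin n))
    (P : ℕ → Fin n → ℤ)
    (hP : ∀ k i, P k i = p i + if ((δ.symm i : Fin n) : ℕ) < k then 1 else 0)
    (pts : Fin (n + 2) → (Fin n → ℝ) × ℝ)
    (hpts0 : pts 0 = ((fun i => (p i : ℝ)), f p + 1))
    (hptsk : ∀ k : Fin (n + 1),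
      pts k.succ = ((fun i => (P (k : ℕ) i : ℝ)), f (P (k : ℕ))))
    (hP0 : P 0 = p) :
    AffineIndependent ℝ pts := by
  rw [affineIndependent_iff]
  intro s w hw hwp m hm
  set W : Fin (n+2) → ℝ := fun j => if j ∈ s then w j else 0 with hWdef
  have hW1 : ∑ j : Fin (n+2), W j = 0 := by
    rw [← hw]; rw [Finset.sum_ite_mem]; simp
  have hwp' : ∑ j : Fin (n+2), W j • pts j = 0 := by
    rw [← hwp]
    rw [show ∑ j : Fin (n+2), W j • pts j
        = ∑ j : Fin (n+2), (if j ∈ s then w j • pts j else 0) from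
      Finset.sum_congr rfl fun j _ => by by_cases h : j ∈ s <;> simp [hWdef, h]]
    rw [Finset.sum_ite_mem]; simp
  -- coordinate equations
  have hS : ∀ m : ℕ, m ≤ n →
      (∑ k : Fin (n+1), if m < (k : ℕ) then W k.succ else 0) = 0 := by
    intro m hm
    rcases lt_or_eq_of_le hm with hmn | hmn
    · have h := congrArg (fun q => q.1 (δ ⟨m, hmn⟩)) hwp'
      simp only [Finset.sum_apply, Prod.fst_sum, Pi.smul_apply, Prod.smul_fst,
        smul_eq_mul, Prod.fst_zero, Pi.zero_apply] at h
      have expand : ∑ j : Fin (n+2), W j * (pts j).1 (δ ⟨m, hmn⟩)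
          = (∑ j : Fin (n+2), W j) * ((p (δ ⟨m, hmn⟩) : ℤ) : ℝ)
            + ∑ k : Fin (n+1), (if m < (k : ℕ) then W k.succ else 0) := by
        rw [Fin.sum_univ_succ (f := fun j => W j * (pts j).1 (δ ⟨m, hmn⟩))]
        rw [show ∑ k : Fin (n+1), W k.succ * (pts k.succ).1 (δ ⟨m, hmn⟩)
            = ∑ k : Fin (n+1), (W k.succ * ((p (δ ⟨m, hmn⟩) : ℤ):ℝ)
              + if m < (k:ℕ) then W k.succ else 0) from
          Finset.sum_congr rfl fun k _ => by
            simp only [hptsk, hP, Equiv.symm_apply_apply]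
            split <;> push_cast <;> ring]
        rw [Finset.sum_add_distrib, ← Finset.sum_mul, Fin.sum_univ_succ (f := W), hpts0]
        ring
      rw [expand, hW1] at h
      linarith
    · apply Finset.sum_eq_zero
      intro k _
      rw [if_neg (by subst hmn; have := k.isLt; omega)]
  -- W of interior successors vanish
  have hv : ∀ k : Fin (n+1), 1 ≤ (k : ℕ) → W k.succ = 0 := by
    intro k hk
    have h1 := hS ((k : ℕ) - 1) (by have := k.isLt; omega)
    have h2 := hS (k : ℕ) (by have := k.isLt; omega)
    have key : ∑ j : Fin (n+1),
        ((if (k:ℕ) - 1 < (j:ℕ) then W j.succ else 0)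
          - (if (k:ℕ) < (j:ℕ) then W j.succ else 0))
        = ∑ j : Fin (n+1), (if j = k then W j.succ else 0) := by
      apply Finset.sum_congr rfl
      intro j _
      rcases eq_or_ne j k with h | h
      · subst h
        rw [if_pos (by omega), if_neg (by omega), if_pos rfl]; ring
      · have hne : (j : ℕ) ≠ (k : ℕ) := fun hc => h (Fin.ext hc)
        rw [if_neg h]
        rcases lt_or_gt_of_ne hne with hlt | hgt
        · rw [if_neg (by omega), if_neg (by omega)]; ring
        · rw [if_pos (by omega), if_pos (by omega)]; ring
    rw [Finset.sum_ite_eq' Finset.univ k (fun j => W j.succ)] at key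
    simp only [Finset.mem_univ, if_pos] at key
    rw [← key, Finset.sum_sub_distrib, h1, h2]; ring
  -- second component
  have hsnd := congrArg Prod.snd hwp'
  simp only [Prod.snd_sum, Prod.smul_snd, smul_eq_mul, Prod.snd_zero] at hsnd
  rw [Fin.sum_univ_succ (f := fun j => W j * (pts j).2)] at hsnd
  rw [Fin.sum_univ_succ (f := fun k : Fin (n+1) => W k.succ * (pts k.succ).2)] at hsnd
  simp only [hpts0, hptsk, Fin.val_zero, hP0] at hsnd
  have hzero : ∑ x : Fin n, W x.succ.succ * f (P ((x.succ : Fin (n+1)) : ℕ)) = 0 := by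
    apply Finset.sum_eq_zero
    intro k _
    rw [hv k.succ (by simp)]
    ring
  rw [hzero] at hsnd
  -- sum of W: W 0 + W 1 = 0
  rw [Fin.sum_univ_succ (f := W), Fin.sum_univ_succ (f := fun k : Fin (n+1) => W k.succ)] at hW1
  have hzero2 : ∑ k : Fin n, W k.succ.succ = 0 :=
    Finset.sum_eq_zero fun k _ => hv k.succ (by simp)
  rw [hzero2] at hW1
  have hW0 : W 0 = 0 := by
    have h01 : (Fin.succ (0 : Fin (n+1))) = (1 : Fin (n+2)) := rfl
    rw [h01] at hsnd hW1
    linear_combination hsnd - f p * hW1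
  have hW1' : W (Fin.succ (0 : Fin (n+1))) = 0 := by
    have h01 : (Fin.succ (0 : Fin (n+1))) = (1 : Fin (n+2)) := rfl
    rw [h01] at hW1 ⊢
    linarith
  have hall : ∀ j : Fin (n+2), W j = 0 := by
    intro j
    refine Fin.cases hW0 ?_ j
    intro k
    rcases Nat.eq_zero_or_pos (k : ℕ) with hk | hk
    · have : k = 0 := Fin.ext hk
      rw [this]; exact hW1'
    · exact hv k hk
  simpa [hWdef, hm] using hall m


/-- (a) The `n + 2` points `(p, f(p) + 1)` and `(p^k, f(p^k))`,
`k = 0,…,n`, lie in the epigraph `𝒫 = {(x, w) : x ∈ 𝒳, w ≥ f(x)}` and are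
affinely independent (so the convex hull of `𝒫` is full-dimensional);
(b) each point `(p^k, f(p^k))` satisfies the SEPI associated with `p` and `δ`
with equality. -/
theorem stmt_9 (n : ℕ) (l u : Fin n → ℤ) (hlu : ∀ i, l i ≤ u i)
    (f : (Fin n → ℤ) → ℝ)
    (p : Fin n → ℤ) (hp : ∀ i, l i ≤ p i ∧ p i + 1 ≤ u i)
    (δ : Equiv.Perm (Fin n))
    (P : ℕ → Fin n → ℤ)
    (hP : ∀ k i, P k i = p i + if ((δ.symm i : Fin n) : ℕ) < k then 1 else 0)
    (pts : Fin (n + 2) → (Fin n → ℝ) × ℝ)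
    (hpts0 : pts 0 = ((fun i => (p i : ℝ)), f p + 1))
    (hptsk : ∀ k : Fin (n + 1),
      pts k.succ = ((fun i => (P (k : ℕ) i : ℝ)), f (P (k : ℕ)))) :
    ((∀ m : Fin (n + 2), pts m ∈
        {q : (Fin n → ℝ) × ℝ | ∃ x : Fin n → ℤ,
          inBox l u x ∧ q.1 = (fun i => (x i : ℝ)) ∧ f x ≤ q.2}) ∧
      AffineIndependent ℝ pts) ∧
    (∀ k : ℕ, k ≤ n →
      f (P k) = f (P 0) + ∑ i : Fin n,
        (f (P ((i : ℕ) + 1)) - f (P (i : ℕ)))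
          * ((P k (δ i) : ℝ) - (p (δ i) : ℝ))) := by
  have hP0 : P 0 = p := by
    funext i; rw [hP]; simp
  constructor
  · constructor
    · -- membership
      intro m
      refine Fin.cases ?_ ?_ m
      · exact ⟨p, fun i => ⟨(hp i).1, by have := (hp i).2; omega⟩,
          by rw [hpts0], by rw [hpts0]; simp⟩
      · intro k
        refine ⟨P (k : ℕ), fun i => ?_, by rw [hptsk], by rw [hptsk]⟩
        rw [hP]
        have h1 := (hp i).1; have h2 := (hp i).2
        constructor <;> split <;> omega
    · exact stmt9_aux n f p δ P hP pts hpts0 hptsk hP0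
  · -- part (b)
    intro k hk
    have key : ∀ i : Fin n, (f (P ((i : ℕ) + 1)) - f (P (i : ℕ)))
          * ((P k (δ i) : ℝ) - (p (δ i) : ℝ))
        = if (i : ℕ) < k then f (P ((i : ℕ) + 1)) - f (P (i : ℕ)) else 0 := by
      intro i
      rw [hP]
      simp only [Equiv.symm_apply_apply]
      split <;> simp
    simp only [key]
    rw [Fin.sum_univ_eq_sum_range (fun i => if i < k then f (P (i + 1)) - f (P i) else 0)]
    rw [← Finset.sum_filter]
    have hfil : (Finset.range n).filter (· < k) = Finset.range k := by
      ext x; simp; omega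
    rw [hfil, Finset.sum_range_sub (fun i => f (P i))]
    ring
end

section
/- Let ℓ, u ∈ ℤⁿ with ℓᵢ ≤ uᵢ − 1 for all i, let 𝒳 = {x ∈ ℤⁿ : ℓ ≤ x ≤ u}, and let f : 𝒳 → ℝ be L♮-convex. Let 𝒫 = {(x, w) ∈ ℝⁿ × ℝ : x ∈ 𝒳, w ≥ f(x)}. Then the convex hull of 𝒫 in ℝⁿ × ℝ equals the set of all (x, w) ∈ ℝⁿ × ℝ such that ℓ ≤ x ≤ u componentwise and, for every p ∈ ℤⁿ with ℓ ≤ p ≤ u − 1 componentwise and every permutation δ of {1,…,n}, the inequality w ≥ f(p⁰) + Σ_{i=1}^n [f(pⁱ) − f(pⁱ⁻¹)]·(x_{δ(i)} − p_{δ(i)}) holds, where p^k = p + Σ_{j=1}^k e_{δ(j)}. -/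
/-- The epigraph `{(x, w) ∈ ℝⁿ × ℝ : x ∈ 𝒳, w ≥ f(x)}` viewed inside `ℝⁿ × ℝ`. -/
def epiSet {n : ℕ} (l u : Fin n → ℤ) (f : (Fin n → ℤ) → ℝ) :
    Set ((Fin n → ℝ) × ℝ) :=
  {q | ∃ x : Fin n → ℤ, inBox l u x ∧ q.1 = (fun i => (x i : ℝ)) ∧ f x ≤ q.2}

namespace Stmt10

variable {n : ℕ} {l u : Fin n → ℤ} {g : (Fin n → ℤ) → ℝ}

/-- unit step up in coordinate `j` -/
def eUp (x : Fin n → ℤ) (j : Fin n) : Fin n → ℤ := fun m => x m + if m = j then 1 else 0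

/-- Marginal monotonicity: one application of the L♮ inequality. -/
lemma mm (hg : IsLNatOn l u g) {a b : Fin n → ℤ} {j : Fin n}
    (ha : inBox l u a) (hb : inBox l u b)
    (haj : inBox l u (eUp a j)) (hbj : inBox l u (eUp b j))
    (h1 : a j ≤ b j) (h2 : ∀ i, b i ≤ a i + (b j - a j)) :
    g (eUp a j) + g b ≤ g (eUp b j) + g a := by
  have e1 : ((fun i => eUp b j i - (b j - a j)) : Fin n → ℤ) ⊔ a = eUp a j := by
    funext m
    have := h2 m
    simp only [Pi.sup_apply, eUp]
    split_ifs with h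
    · subst h; omega
    · omega
  have e2 : eUp b j ⊓ ((fun i => a i + (b j - a j)) : Fin n → ℤ) = b := by
    funext m
    have := h2 m
    simp only [Pi.inf_apply, eUp]
    split_ifs with h
    · subst h; omega
    · omega
  have key := hg (eUp b j) a hbj ha (b j - a j) (by omega)
    (by rw [e1]; exact haj) (by rw [e2]; exact hb)
  rw [e1, e2] at key
  linarith

/-- Local minimality over `{p ± χ_S}` implies global minimality on the box. -/
lemma descent (hg : IsLNatOn l u g) {p : Fin n → ℤ} (hp : inBox l u p)
    (hup : ∀ s : Fin n → Bool,
      inBox l u (fun m => p m + if s m then 1 else 0) →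
      g p ≤ g (fun m => p m + if s m then 1 else 0))
    (hdn : ∀ s : Fin n → Bool,
      inBox l u (fun m => p m - if s m then 1 else 0) →
      g p ≤ g (fun m => p m - if s m then 1 else 0)) :
    ∀ x, inBox l u x → g p ≤ g x := by
  suffices H : ∀ N : ℕ, ∀ x, inBox l u x → (∑ i, (x i - p i).natAbs) = N → g p ≤ g x by
    intro x hx; exact H _ x hx rfl
  intro N
  induction N using Nat.strong_induction_on with
  | _ N ih =>
    intro x hx hN
    by_cases hex : ∃ i, p i < x i
    · obtain ⟨i0, hi0⟩ := hex
      have hne : (Finset.univ : Finset (Fin n)).Nonempty := ⟨i0, Finset.mem_univ _⟩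
      set α := Finset.univ.sup' hne (fun i => x i - p i) with hα
      have hle : ∀ i, x i - p i ≤ α := fun i =>
        Finset.le_sup' (fun i => x i - p i) (Finset.mem_univ i)
      obtain ⟨iM, -, hiM⟩ := Finset.exists_mem_eq_sup' hne (fun i => x i - p i)
      have hα1 : 1 ≤ α := le_trans (by omega) (hle i0)
      set s : Fin n → Bool := fun i => decide (x i - p i = α) with hs
      have hsiff : ∀ m, s m = true ↔ x m - p m = α := by
        intro m; simp [hs]
      set a : Fin n → ℤ := fun m => p m + if s m then 1 else 0 with hadef
      set y' : Fin n → ℤ := fun m => x m - if s m then 1 else 0 with hydef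
      have e1 : ((fun i => x i - (α - 1)) : Fin n → ℤ) ⊔ p = a := by
        funext m; have h4 := hle m; have h5 := (hsiff m)
        simp only [Pi.sup_apply, hadef]
        split_ifs with h
        · rw [h5] at h; omega
        · have : ¬ (x m - p m = α) := fun hc => h (h5.mpr hc); omega
      have e2 : x ⊓ ((fun i => p i + (α - 1)) : Fin n → ℤ) = y' := by
        funext m; have h4 := hle m; have h5 := (hsiff m)
        simp only [Pi.inf_apply, hydef]
        split_ifs with h
        · rw [h5] at h; omega
        · have : ¬ (x m - p m = α) := fun hc => h (h5.mpr hc); omega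
      have hboxa : inBox l u a := by
        intro m
        have h1 := (hp m).1; have h2 := (hp m).2; have h3 := (hx m).2; have h4 := hle m
        have h5 := (hsiff m)
        simp only [hadef]; split_ifs with h
        · rw [h5] at h; omega
        · omega
      have hboxy' : inBox l u y' := by
        intro m
        have h1 := (hx m).1; have h2 := (hx m).2; have h3 := (hp m).1
        have h5 := (hsiff m)
        simp only [hydef]; split_ifs with h
        · rw [h5] at h; omega
        · omega
      have key := hg x p hx hp (α - 1) (by omega)
        (by rw [e1]; exact hboxa) (by rw [e2]; exact hboxy')
      rw [e1, e2] at key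
      have hupa : g p ≤ g a := hup s hboxa
      have hmeas : (∑ i, (y' i - p i).natAbs) < N := by
        rw [← hN]
        apply Finset.sum_lt_sum
        · intro i _
          have h4 := hle i; have h5 := (hsiff i)
          simp only [hydef]; split_ifs with h
          · rw [h5] at h; omega
          · omega
        · refine ⟨iM, Finset.mem_univ _, ?_⟩
          have h5 := (hsiff iM)
          simp only [hydef]
          rw [if_pos (h5.mpr hiM.symm)]
          omega
      have hih : g p ≤ g y' := ih _ hmeas y' hboxy' rfl
      linarith
    · by_cases hex2 : ∃ i, x i < p i
      · obtain ⟨i0, hi0⟩ := hex2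
        have hne : (Finset.univ : Finset (Fin n)).Nonempty := ⟨i0, Finset.mem_univ _⟩
        set β := Finset.univ.sup' hne (fun i => p i - x i) with hβ
        have hle : ∀ i, p i - x i ≤ β := fun i =>
          Finset.le_sup' (fun i => p i - x i) (Finset.mem_univ i)
        obtain ⟨iM, -, hiM⟩ := Finset.exists_mem_eq_sup' hne (fun i => p i - x i)
        have hβ1 : 1 ≤ β := le_trans (by omega) (hle i0)
        set s : Fin n → Bool := fun i => decide (p i - x i = β) with hs
        have hsiff : ∀ m, s m = true ↔ p m - x m = β := by
          intro m; simp [hs]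
        set a : Fin n → ℤ := fun m => x m + if s m then 1 else 0 with hadef
        set b : Fin n → ℤ := fun m => p m - if s m then 1 else 0 with hbdef
        have e1 : ((fun i => p i - (β - 1)) : Fin n → ℤ) ⊔ x = a := by
          funext m; have h4 := hle m; have h5 := (hsiff m)
          simp only [Pi.sup_apply, hadef]
          split_ifs with h
          · rw [h5] at h; omega
          · have : ¬ (p m - x m = β) := fun hc => h (h5.mpr hc); omega
        have e2 : p ⊓ ((fun i => x i + (β - 1)) : Fin n → ℤ) = b := by
          funext m; have h4 := hle m; have h5 := (hsiff m)
          simp only [Pi.inf_apply, hbdef]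
          split_ifs with h
          · rw [h5] at h; omega
          · have : ¬ (p m - x m = β) := fun hc => h (h5.mpr hc); omega
        have hboxa : inBox l u a := by
          intro m
          have h1 := (hx m).1; have h2 := (hp m).2; have h4 := hle m
          have h5 := (hsiff m)
          simp only [hadef]; split_ifs with h
          · rw [h5] at h; omega
          · have h3 := (hx m).2; omega
        have hboxb : inBox l u b := by
          intro m
          have h1 := (hp m).1; have h2 := (hp m).2; have h3 := (hx m).1
          have h5 := (hsiff m)
          simp only [hbdef]; split_ifs with h
          · rw [h5] at h; omega
          · omega
        have key := hg p x hp hx (β - 1) (by omega)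
          (by rw [e1]; exact hboxa) (by rw [e2]; exact hboxb)
        rw [e1, e2] at key
        have hdnb : g p ≤ g b := hdn s hboxb
        have hmeas : (∑ i, (a i - p i).natAbs) < N := by
          rw [← hN]
          apply Finset.sum_lt_sum
          · intro i _
            have h4 := hle i; have h5 := (hsiff i)
            simp only [hadef]; split_ifs with h
            · rw [h5] at h; omega
            · omega
          · refine ⟨iM, Finset.mem_univ _, ?_⟩
            have h5 := (hsiff iM)
            simp only [hadef]
            rw [if_pos (h5.mpr hiM.symm)]
            omega
        have hih : g p ≤ g a := ih _ hmeas a hboxa rfl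
        linarith
      · push_neg at hex hex2
        have : x = p := funext fun i => le_antisymm (hex i) (hex2 i)
        rw [this]

/-- chain vertex `p + χ_{first k elements in δ-order}` -/
def V (p : Fin n → ℤ) (δ : Equiv.Perm (Fin n)) (k : ℕ) : Fin n → ℤ :=
  fun m => p m + if ((δ.symm m : Fin n) : ℕ) < k then 1 else 0

variable {p : Fin n → ℤ} {δ : Equiv.Perm (Fin n)}

lemma boxV (hp : ∀ i, l i ≤ p i ∧ p i ≤ u i - 1) (k : ℕ) : inBox l u (V p δ k) := by
  intro m; have := hp m; simp only [V]; split_ifs <;> omega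

lemma eUpV {k : ℕ} (hk : k < n) : eUp (V p δ k) (δ ⟨k, hk⟩) = V p δ (k+1) := by
  funext m
  by_cases hm : m = δ ⟨k, hk⟩
  · subst hm; simp [eUp, V]
  · have hne : ((δ.symm m : Fin n) : ℕ) ≠ k := by
      intro hc
      apply hm
      have h1 : δ.symm m = ⟨k, hk⟩ := Fin.ext hc
      have := congrArg δ h1
      simpa using this
    simp only [eUp, V, if_neg hm, add_zero]
    congr 1
    apply if_congr _ rfl rfl
    omega

lemma chain_up (hg : IsLNatOn l u g) (hp : ∀ i, l i ≤ p i ∧ p i ≤ u i - 1)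
    (hflat : ∀ k < n, g (V p δ (k+1)) = g (V p δ k))
    (s : Fin n → Bool) :
    g p ≤ g (fun m => p m + if s m then 1 else 0) := by
  have main : ∀ k, k ≤ n →
      g p ≤ g (fun m => p m + if s m ∧ ((δ.symm m : Fin n) : ℕ) < k then 1 else 0) := by
    intro k
    induction k with
    | zero => intro _; simp
    | succ k IH =>
      intro hk
      have hkn : k < n := hk
      have hIH := IH (le_of_lt hkn)
      set j := δ ⟨k, hkn⟩ with hj
      have hrj : ((δ.symm j : Fin n) : ℕ) = k := by simp [hj]
      set W : Fin n → ℤ := fun m => p m + if s m ∧ ((δ.symm m : Fin n) : ℕ) < k then 1 else 0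
        with hW
      have hboxW : inBox l u W := by
        intro m; have := hp m; simp only [hW]; split_ifs <;> omega
      by_cases hsj : s j = true
      · have eW : (fun m => p m + if s m ∧ ((δ.symm m : Fin n) : ℕ) < k+1 then 1 else 0)
            = eUp W j := by
          funext m
          by_cases hm : m = j
          · subst hm
            simp [eUp, hW, hrj, hsj]
          · have hne : ((δ.symm m : Fin n) : ℕ) ≠ k := by
              intro hc
              apply hm
              have h1 : δ.symm m = ⟨k, hkn⟩ := Fin.ext hc
              have := congrArg δ h1
              simpa [hj] using this
            simp only [eUp, hW, if_neg hm, add_zero]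
            congr 1
            apply if_congr _ rfl rfl
            constructor
            · rintro ⟨h1, h2⟩; exact ⟨h1, by omega⟩
            · rintro ⟨h1, h2⟩; exact ⟨h1, by omega⟩
        have hbWj : inBox l u (eUp W j) := by
          intro m; have hpm := hp m
          by_cases hm : m = j
          · subst hm
            simp only [eUp, hW, if_pos rfl, hrj]
            simp only [lt_irrefl, and_false, if_false]
            omega
          · simp only [eUp, hW, if_neg hm, add_zero]
            split_ifs <;> omega
        have hVj : V p δ k j = p j := by
          simp [V, hrj]
        have hWj : W j = p j := by
          simp [hW, hrj]
        have hcomp : ∀ i, W i ≤ V p δ k i + (W j - V p δ k j) := by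
          intro i
          rw [hVj, hWj]
          simp only [hW, V]
          by_cases h1 : ((δ.symm i : Fin n) : ℕ) < k
          · by_cases h2 : s i = true <;> simp [h1, h2]
          · simp [h1]
        have hmm := mm hg (boxV hp k) hboxW
          (by rw [eUpV hkn]; exact boxV hp (k+1)) hbWj (by rw [hVj, hWj]) hcomp
        rw [eUpV hkn] at hmm
        rw [eW]
        have := hflat k hkn
        linarith
      · have eW : (fun m => p m + if s m ∧ ((δ.symm m : Fin n) : ℕ) < k+1 then 1 else 0)
            = W := by
          funext m
          by_cases hm : m = j
          · subst hm
            simp [hW, hsj, hrj]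
          · have hne : ((δ.symm m : Fin n) : ℕ) ≠ k := by
              intro hc
              apply hm
              have h1 : δ.symm m = ⟨k, hkn⟩ := Fin.ext hc
              have := congrArg δ h1
              simpa [hj] using this
            simp only [hW]
            congr 1
            apply if_congr _ rfl rfl
            constructor
            · rintro ⟨h1, h2⟩; exact ⟨h1, by omega⟩
            · rintro ⟨h1, h2⟩; exact ⟨h1, by omega⟩
        rw [eW]; exact hIH
  have := main n le_rfl
  have e : (fun m => p m + if s m ∧ ((δ.symm m : Fin n) : ℕ) < n then 1 else 0)
      = (fun m => p m + if s m then 1 else 0) := by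
    funext m
    congr 1
    apply if_congr _ rfl rfl
    simp [Fin.is_lt]
  rwa [e] at this

lemma chain_down (hg : IsLNatOn l u g) (hp : ∀ i, l i ≤ p i ∧ p i ≤ u i - 1)
    (hflat : ∀ k < n, g (V p δ (k+1)) = g (V p δ k))
    (s : Fin n → Bool)
    (hbx : inBox l u (fun m => p m - if s m then 1 else 0)) :
    g p ≤ g (fun m => p m - if s m then 1 else 0) := by
  have main : ∀ d, d ≤ n →
      g p ≤ g (fun m => p m - if s m ∧ n - d ≤ ((δ.symm m : Fin n) : ℕ) then 1 else 0) := by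
    intro d
    induction d with
    | zero =>
      intro _
      have e : (fun m => p m - if s m ∧ n - 0 ≤ ((δ.symm m : Fin n) : ℕ) then 1 else 0) = p := by
        funext m
        have := (δ.symm m).is_lt
        rw [if_neg (by omega : ¬ (s m = true ∧ n - 0 ≤ ((δ.symm m : Fin n) : ℕ)))]
        omega
      rw [e]
    | succ d IH =>
      intro hd
      have hkn : n - (d+1) < n := by omega
      set k := n - (d+1) with hkdef
      have hnd : n - d = k + 1 := by omega
      have hIH := IH (by omega)
      rw [hnd] at hIH
      set j := δ ⟨k, hkn⟩ with hj
      have hrj : ((δ.symm j : Fin n) : ℕ) = k := by simp [hj]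
      set M : Fin n → ℤ := fun m => p m - if s m ∧ k + 1 ≤ ((δ.symm m : Fin n) : ℕ) then 1 else 0
        with hM
      set M' : Fin n → ℤ := fun m => p m - if s m ∧ k ≤ ((δ.symm m : Fin n) : ℕ) then 1 else 0
        with hM'
      have hboxAux : ∀ K : ℕ,
          inBox l u (fun m => p m - if s m ∧ K ≤ ((δ.symm m : Fin n) : ℕ) then 1 else 0) := by
        intro K m
        have h1 := (hbx m).1
        have h2 := (hp m).2
        have h3 := (hp m).1
        simp only at h1 ⊢
        by_cases hs : s m = true
        · rw [if_pos hs] at h1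
          split_ifs <;> omega
        · rw [if_neg hs] at h1
          rw [if_neg (fun h => hs h.1)]
          omega
      have hboxM' : inBox l u M' := by rw [hM']; exact hboxAux k
      have hboxM : inBox l u M := by rw [hM]; exact hboxAux (k+1)
      show g p ≤ g M'
      by_cases hsj : s j = true
      · have hM'j : M' j = p j - 1 := by
          simp only [hM']; rw [if_pos ⟨hsj, hrj.ge⟩]
        have hcnd : ¬ (s j = true ∧ k + 1 ≤ ((δ.symm j : Fin n) : ℕ)) := by
          rintro ⟨-, h2⟩
          rw [hrj] at h2
          omega
        have eM : eUp M' j = M := by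
          funext m
          by_cases hm : m = j
          · subst hm
            simp only [eUp, hM, if_pos rfl]
            rw [hM'j, if_neg hcnd]
            simp only [if_true]
            omega
          · have hne : ((δ.symm m : Fin n) : ℕ) ≠ k := by
              intro hc
              apply hm
              have h1 : δ.symm m = ⟨k, hkn⟩ := Fin.ext hc
              have := congrArg δ h1
              simpa [hj] using this
            simp only [eUp, hM, hM', if_neg hm, add_zero]
            congr 1
            apply if_congr _ rfl rfl
            constructor
            · rintro ⟨h1, h2⟩; exact ⟨h1, by omega⟩
            · rintro ⟨h1, h2⟩; exact ⟨h1, by omega⟩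
        have hVj : V p δ k j = p j := by simp [V, hrj]
        have hcomp : ∀ i, V p δ k i ≤ M' i + (V p δ k j - M' j) := by
          intro i
          rw [hVj, hM'j]
          simp only [hM', V]
          by_cases h1 : ((δ.symm i : Fin n) : ℕ) < k
          · rw [if_neg (by omega : ¬ (s i = true ∧ k ≤ ((δ.symm i : Fin n) : ℕ)))]
            omega
          · split_ifs <;> omega
        have hmm := mm hg hboxM' (boxV hp k) (by rw [eM]; exact hboxM)
          (by rw [eUpV hkn]; exact boxV hp (k+1)) (by rw [hM'j, hVj]; omega) hcomp
        rw [eM, eUpV hkn] at hmm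
        have := hflat k hkn
        linarith
      · have eM : M' = M := by
          funext m
          by_cases hm : m = j
          · subst hm
            simp only [hM, hM']
            rw [if_neg (by simp [hsj]), if_neg (by simp [hsj])]
          · have hne : ((δ.symm m : Fin n) : ℕ) ≠ k := by
              intro hc
              apply hm
              have h1 : δ.symm m = ⟨k, hkn⟩ := Fin.ext hc
              have := congrArg δ h1
              simpa [hj] using this
            simp only [hM, hM']
            congr 1
            apply if_congr _ rfl rfl
            constructor
            · rintro ⟨h1, h2⟩; exact ⟨h1, by omega⟩
            · rintro ⟨h1, h2⟩; exact ⟨h1, by omega⟩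
        rw [eM]; exact hIH
  have := main n le_rfl
  have e : (fun m => p m - if s m ∧ n - n ≤ ((δ.symm m : Fin n) : ℕ) then 1 else 0)
      = (fun m => p m - if s m then 1 else 0) := by
    funext m
    congr 1
    apply if_congr _ rfl rfl
    simp
  rwa [e] at this

/-- The affine function associated with a SEPI. -/
noncomputable def Hlin (f : (Fin n → ℤ) → ℝ) (p : Fin n → ℤ) (δ : Equiv.Perm (Fin n))
    (y : Fin n → ℤ) : ℝ :=
  f p + ∑ i : Fin n,
    (f (V p δ ((i : ℕ) + 1)) - f (V p δ (i : ℕ))) * ((y (δ i) : ℝ) - (p (δ i) : ℝ))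

variable {f : (Fin n → ℤ) → ℝ}

lemma Hmod (f : (Fin n → ℤ) → ℝ) (p : Fin n → ℤ) (δ : Equiv.Perm (Fin n))
    {x y A B : Fin n → ℤ} (h : ∀ j, A j + B j = x j + y j) :
    Hlin f p δ A + Hlin f p δ B = Hlin f p δ x + Hlin f p δ y := by
  unfold Hlin
  have e : ∑ i : Fin n,
        (f (V p δ ((i : ℕ) + 1)) - f (V p δ (i : ℕ))) * ((A (δ i) : ℝ) - (p (δ i) : ℝ))
      + ∑ i : Fin n,
        (f (V p δ ((i : ℕ) + 1)) - f (V p δ (i : ℕ))) * ((B (δ i) : ℝ) - (p (δ i) : ℝ))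
      = ∑ i : Fin n,
        (f (V p δ ((i : ℕ) + 1)) - f (V p δ (i : ℕ))) * ((x (δ i) : ℝ) - (p (δ i) : ℝ))
      + ∑ i : Fin n,
        (f (V p δ ((i : ℕ) + 1)) - f (V p δ (i : ℕ))) * ((y (δ i) : ℝ) - (p (δ i) : ℝ)) := by
    rw [← Finset.sum_add_distrib, ← Finset.sum_add_distrib]
    apply Finset.sum_congr rfl
    intro i _
    have h2 : ((A (δ i) : ℝ)) + (B (δ i) : ℝ) = (x (δ i) : ℝ) + (y (δ i) : ℝ) := by
      exact_mod_cast congrArg (fun z : ℤ => (z : ℝ)) (h (δ i))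
    linear_combination (f (V p δ ((i : ℕ) + 1)) - f (V p δ (i : ℕ))) * h2
  linarith

lemma LNat_sub_H (hf : IsLNatOn l u f) (p : Fin n → ℤ) (δ : Equiv.Perm (Fin n)) :
    IsLNatOn l u (fun y => f y - Hlin f p δ y) := by
  intro x y hx hy α hα h1 h2
  have hineq := hf x y hx hy α hα h1 h2
  have hm := Hmod f p δ (x := x) (y := y)
      (A := ((fun i => x i - α) : Fin n → ℤ) ⊔ y) (B := x ⊓ ((fun i => y i + α) : Fin n → ℤ))
      (by
        intro j
        simp only [Pi.sup_apply, Pi.inf_apply]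
        omega)
  simp only [ge_iff_le] at *
  linarith

lemma Hlin_V (f : (Fin n → ℤ) → ℝ) (p : Fin n → ℤ) (δ : Equiv.Perm (Fin n)) (K : ℕ) :
    Hlin f p δ (V p δ K) = f p + ∑ i : Fin n,
      (if (i : ℕ) < K then f (V p δ ((i : ℕ) + 1)) - f (V p δ (i : ℕ)) else 0) := by
  unfold Hlin
  congr 1
  apply Finset.sum_congr rfl
  intro i _
  have e : ((V p δ K (δ i) : ℝ)) - (p (δ i) : ℝ) = if (i : ℕ) < K then 1 else 0 := by
    simp only [V, Equiv.symm_apply_apply]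
    push_cast
    split_ifs <;> ring
  rw [e]
  split_ifs <;> ring

lemma Hlin_p (f : (Fin n → ℤ) → ℝ) (p : Fin n → ℤ) (δ : Equiv.Perm (Fin n)) :
    Hlin f p δ p = f p := by
  unfold Hlin
  simp

lemma flatness (f : (Fin n → ℤ) → ℝ) (p : Fin n → ℤ) (δ : Equiv.Perm (Fin n)) :
    ∀ k, k < n → (fun y => f y - Hlin f p δ y) (V p δ (k+1)) =
      (fun y => f y - Hlin f p δ y) (V p δ k) := by
  intro k hk
  simp only
  rw [Hlin_V, Hlin_V]
  have e : ∑ i : Fin n,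
        (if (i : ℕ) < k + 1 then f (V p δ ((i : ℕ) + 1)) - f (V p δ (i : ℕ)) else 0)
      - ∑ i : Fin n,
        (if (i : ℕ) < k then f (V p δ ((i : ℕ) + 1)) - f (V p δ (i : ℕ)) else 0)
      = f (V p δ (k + 1)) - f (V p δ k) := by
    rw [← Finset.sum_sub_distrib]
    have e2 : ∀ i : Fin n,
        (if (i : ℕ) < k + 1 then f (V p δ ((i : ℕ) + 1)) - f (V p δ (i : ℕ)) else 0)
      - (if (i : ℕ) < k then f (V p δ ((i : ℕ) + 1)) - f (V p δ (i : ℕ)) else 0)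
      = if i = (⟨k, hk⟩ : Fin n) then
          f (V p δ ((i : ℕ) + 1)) - f (V p δ (i : ℕ)) else 0 := by
      intro i
      by_cases hik : i = (⟨k, hk⟩ : Fin n)
      · subst hik
        simp
      · have : (i : ℕ) ≠ k := fun hc => hik (Fin.ext hc)
        rw [if_neg hik]
        split_ifs with a b
        · ring
        · omega
        · omega
        · ring
    rw [Finset.sum_congr rfl (fun i _ => e2 i)]
    rw [Finset.sum_ite_eq' Finset.univ (⟨k, hk⟩ : Fin n)]
    simp
  linarith

lemma sepi_valid (hf : IsLNatOn l u f) (hp : ∀ i, l i ≤ p i ∧ p i ≤ u i - 1)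
    (x : Fin n → ℤ) (hx : inBox l u x) : Hlin f p δ x ≤ f x := by
  have hg := LNat_sub_H hf p δ
  have hflat := flatness f p δ
  have hpbox : inBox l u p := fun i => ⟨(hp i).1, by have := (hp i).2; omega⟩
  have hmain := descent hg hpbox
    (fun s hb => chain_up hg hp hflat s)
    (fun s hb => chain_down hg hp hflat s hb) x hx
  have hHp := Hlin_p f p δ
  linarith

lemma construct (hlu : ∀ i, l i ≤ u i - 1) (f : (Fin n → ℤ) → ℝ)
    (q : (Fin n → ℝ) × ℝ)
    (hbd : ∀ i, (l i : ℝ) ≤ q.1 i ∧ q.1 i ≤ (u i : ℝ))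
    (hsepi : ∀ p : Fin n → ℤ, (∀ i, l i ≤ p i ∧ p i ≤ u i - 1) →
      ∀ δ : Equiv.Perm (Fin n),
      f p + ∑ i : Fin n, (f (V p δ ((i : ℕ) + 1)) - f (V p δ (i : ℕ)))
        * (q.1 (δ i) - (p (δ i) : ℝ)) ≤ q.2) :
    q ∈ convexHull ℝ (epiSet l u f) := by
  classical
  set p : Fin n → ℤ := fun i => min ⌊q.1 i⌋ (u i - 1) with hpdef
  have hp : ∀ i, l i ≤ p i ∧ p i ≤ u i - 1 := by
    intro i
    refine ⟨le_min (Int.le_floor.mpr (by exact_mod_cast (hbd i).1)) (hlu i), min_le_right _ _⟩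
  set t : Fin n → ℝ := fun i => q.1 i - (p i : ℝ) with htdef
  have ht0 : ∀ i, 0 ≤ t i := by
    intro i
    have h1 : (p i : ℝ) ≤ (⌊q.1 i⌋ : ℝ) := by exact_mod_cast min_le_left _ _
    have h2 := Int.floor_le (q.1 i)
    simp only [htdef]
    linarith
  have ht1 : ∀ i, t i ≤ 1 := by
    intro i
    rcases le_or_gt ⌊q.1 i⌋ (u i - 1) with h | h
    · have hpe : p i = ⌊q.1 i⌋ := min_eq_left h
      have := Int.lt_floor_add_one (q.1 i)
      simp only [htdef, hpe]
      push_cast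
      linarith
    · have hpe : p i = u i - 1 := min_eq_right (by omega)
      have := (hbd i).2
      simp only [htdef, hpe]
      push_cast
      linarith
  set δ : Equiv.Perm (Fin n) := (Fin.revPerm).trans (Tuple.sort t) with hδdef
  have hanti : ∀ k k' : Fin n, k ≤ k' → t (δ k') ≤ t (δ k) := by
    intro k k' hkk
    have := Tuple.monotone_sort t (Fin.rev_le_rev.mpr hkk)
    simpa [hδdef, Equiv.trans_apply, Fin.revPerm_apply] using this
  set T : ℕ → ℝ := fun k => if h : k < n then t (δ ⟨k, h⟩) else 0 with hT
  set P : ℕ → ℝ := fun k => if k = 0 then 1 else T (k - 1) with hP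
  have hTnn : ∀ k, 0 ≤ T k := by
    intro k; simp only [hT]; split_ifs
    · exact ht0 _
    · exact le_refl 0
  have hTmono : ∀ k, T (k + 1) ≤ T k := by
    intro k
    simp only [hT]
    split_ifs with h1 h2 h2
    · exact hanti ⟨k, h2⟩ ⟨k + 1, h1⟩ (by simp [Fin.le_def])
    · omega
    · exact ht0 _
    · exact le_refl 0
  have hP0 : P 0 = 1 := by simp [hP]
  have hPT : ∀ k : ℕ, P (k + 1) = T k := by
    intro k; simp [hP]
  have hPmono : ∀ k, P (k + 1) ≤ P k := by
    intro k
    match k with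
    | 0 =>
      have h2 : T 0 ≤ 1 := by
        simp only [hT]; split_ifs
        · exact ht1 _
        · exact zero_le_one
      rw [hPT, hP0]; exact h2
    | (k + 1) =>
      rw [hPT, hPT]; exact hTmono k
  have hPnn : ∀ k, 0 ≤ P k := by
    intro k; simp only [hP]; split_ifs
    · exact zero_le_one
    · exact hTnn _
  have hPn1 : P (n + 1) = 0 := by
    rw [hPT]
    simp only [hT]
    rw [dif_neg (by omega)]
  set lam : ℕ → ℝ := fun k => P k - P (k + 1) with hlam
  have hlamnn : ∀ k, 0 ≤ lam k := fun k => by simp only [hlam]; linarith [hPmono k]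
  have hlamsum : ∑ k ∈ Finset.range (n + 1), lam k = 1 := by
    simp only [hlam]
    rw [Finset.sum_range_sub' P (n + 1), hP0, hPn1]
    ring
  have hTt : ∀ i : Fin n, T (i : ℕ) = t (δ i) := by
    intro i
    simp only [hT]
    rw [dif_pos i.is_lt]
  -- coordinate identity
  have hVx : ∀ m : Fin n, ∑ k ∈ Finset.range (n + 1), lam k * ((V p δ k m : ℤ) : ℝ) = q.1 m := by
    intro m
    have hrn : ((δ.symm m : Fin n) : ℕ) < n := (δ.symm m).is_lt
    set r : ℕ := ((δ.symm m : Fin n) : ℕ) with hr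
    set ind : ℕ → ℝ := fun k => if r < k then 1 else 0 with hind
    have hVcast : ∀ k, ((V p δ k m : ℤ) : ℝ) = (p m : ℝ) + ind k := by
      intro k
      have e0 : V p δ k m = p m + (if r < k then 1 else 0 : ℤ) := rfl
      rw [e0]
      push_cast
      simp only [hind]
    have key : ∑ k ∈ Finset.range (n + 1), lam k * ind k = P (r + 1) := by
      have e : ∀ k, lam k * ind k
          = (P k * ind k - P (k + 1) * ind (k + 1)) + P (k + 1) * (if k = r then 1 else 0) := by
        intro k
        have eind : ind (k + 1) - ind k = if k = r then 1 else 0 := by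
          by_cases hkr : k = r
          · subst hkr
            simp only [hind]
            rw [if_pos (by omega), if_neg (by omega)]
            norm_num
          · have h1 : (r < k + 1) ↔ r < k := by omega
            simp only [hind]
            rw [if_neg hkr]
            by_cases h2 : r < k
            · rw [if_pos (h1.mpr h2), if_pos h2]; ring
            · rw [if_neg (fun hc => h2 (h1.mp hc)), if_neg h2]; ring
        have : ind (k + 1) = ind k + (if k = r then 1 else 0) := by linarith [eind]
        rw [this]
        simp only [hlam]
        ring
      rw [Finset.sum_congr rfl (fun k _ => e k), Finset.sum_add_distrib,
        Finset.sum_range_sub' (fun k => P k * ind k) (n + 1)]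
      have hind0 : ind 0 = 0 := by simp [hind]
      have e3 : ∑ k ∈ Finset.range (n + 1), P (k + 1) * (if k = r then 1 else 0)
          = P (r + 1) := by
        have e4 : ∀ k, P (k + 1) * (if k = r then 1 else 0)
            = if k = r then P (k + 1) else 0 := by
          intro k; rw [mul_ite, mul_one, mul_zero]
        rw [Finset.sum_congr rfl (fun k _ => e4 k)]
        rw [Finset.sum_ite_eq' (Finset.range (n + 1)) r (fun k => P (k + 1))]
        rw [if_pos (Finset.mem_range.mpr (by omega))]
      rw [hind0, hPn1, e3]
      ring
    have e5 : ∀ k, lam k * ((V p δ k m : ℤ) : ℝ) = lam k * (p m : ℝ) + lam k * ind k := by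
      intro k; rw [hVcast k]; ring
    rw [Finset.sum_congr rfl (fun k _ => e5 k), Finset.sum_add_distrib, ← Finset.sum_mul,
      hlamsum, key]
    have e6 : P (r + 1) = t m := by
      rw [hPT]
      have : (⟨r, hrn⟩ : Fin n) = δ.symm m := Fin.ext rfl
      simp only [hT]
      rw [dif_pos hrn, this]
      simp
    rw [e6]
    simp only [htdef]
    ring
  -- Abel summation for the f-values
  set F : ℕ → ℝ := fun k => f (V p δ k) with hF
  have habel : ∑ k ∈ Finset.range (n + 1), lam k * F k
      = f p + ∑ i : Fin n, (f (V p δ ((i : ℕ) + 1)) - f (V p δ (i : ℕ))) * T (i : ℕ) := by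
    have e : ∀ k, lam k * F k
        = (P k * F k - P (k + 1) * F (k + 1)) + P (k + 1) * (F (k + 1) - F k) := by
      intro k; simp only [hlam]; ring
    rw [Finset.sum_congr rfl (fun k _ => e k), Finset.sum_add_distrib,
      Finset.sum_range_sub' (fun k => P k * F k) (n + 1), hP0, hPn1]
    have hV0 : V p δ 0 = p := by funext m; simp [V]
    have e2 : ∑ k ∈ Finset.range (n + 1), P (k + 1) * (F (k + 1) - F k)
        = ∑ k ∈ Finset.range n, P (k + 1) * (F (k + 1) - F k) := by
      rw [Finset.sum_range_succ, hPn1]; ring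
    have e3 : ∑ k ∈ Finset.range n, P (k + 1) * (F (k + 1) - F k)
        = ∑ i : Fin n, P ((i : ℕ) + 1) * (F ((i : ℕ) + 1) - F (i : ℕ)) :=
      (Fin.sum_univ_eq_sum_range (fun k => P (k + 1) * (F (k + 1) - F k)) n).symm
    have e4 : ∀ i : Fin n, P ((i : ℕ) + 1) * (F ((i : ℕ) + 1) - F (i : ℕ))
        = (f (V p δ ((i : ℕ) + 1)) - f (V p δ (i : ℕ))) * T (i : ℕ) := by
      intro i
      rw [hPT]
      simp only [hF]
      ring
    rw [e2, e3, Finset.sum_congr rfl (fun i _ => e4 i)]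
    simp only [hF, hV0]
    ring
  have hsum_eq : ∑ i : Fin n, (f (V p δ ((i : ℕ) + 1)) - f (V p δ (i : ℕ)))
        * (q.1 (δ i) - (p (δ i) : ℝ))
      = ∑ i : Fin n, (f (V p δ ((i : ℕ) + 1)) - f (V p δ (i : ℕ))) * T (i : ℕ) := by
    apply Finset.sum_congr rfl
    intro i _
    rw [hTt i]
  have hwge : ∑ k ∈ Finset.range (n + 1), lam k * F k ≤ q.2 := by
    rw [habel]
    have := hsepi p hp δ
    rw [hsum_eq] at this
    exact this
  set sl : ℝ := q.2 - ∑ k ∈ Finset.range (n + 1), lam k * F k with hsl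
  have hslnn : 0 ≤ sl := by simp only [hsl]; linarith
  set z : ℕ → (Fin n → ℝ) × ℝ := fun k => (fun i => ((V p δ k i : ℤ) : ℝ), F k + sl) with hz
  have hzmem : ∀ k ∈ Finset.range (n + 1), z k ∈ epiSet l u f := by
    intro k _
    refine ⟨V p δ k, ?_, rfl, by simp only [hz]; linarith⟩
    intro m; have := hp m; simp only [V]; split_ifs <;> omega
  have hcm := Finset.centerMass_mem_convexHull (Finset.range (n + 1)) (w := lam)
    (fun k _ => hlamnn k) (by rw [hlamsum]; norm_num) hzmem
  have hq : (Finset.range (n + 1)).centerMass lam z = q := by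
    rw [Finset.centerMass_eq_of_sum_1 _ z hlamsum]
    apply Prod.ext
    · rw [Prod.fst_sum]
      funext m
      rw [Finset.sum_apply]
      have e7 : ∀ k, (lam k • z k).1 m = lam k * ((V p δ k m : ℤ) : ℝ) := by
        intro k; simp [hz]
      rw [Finset.sum_congr rfl (fun k _ => e7 k)]
      exact hVx m
    · rw [Prod.snd_sum]
      have e8 : ∀ k, (lam k • z k).2 = lam k * F k + lam k * sl := by
        intro k; simp [hz]; ring
      rw [Finset.sum_congr rfl (fun k _ => e8 k), Finset.sum_add_distrib, ← Finset.sum_mul,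
        hlamsum]
      simp only [hsl]
      ring
  rwa [hq] at hcm

end Stmt10

/-- The convex hull of the epigraph of an L♮-convex function `f`
over `𝒳 = {x ∈ ℤⁿ : l ≤ x ≤ u}` (with `lᵢ ≤ uᵢ − 1`) is described exactly by the
trivial bounds `l ≤ x ≤ u` together with all SEPIs associated with `p ∈ ℤⁿ`,
`l ≤ p ≤ u − 1`, and permutations `δ`. -/



theorem stmt_10 (n : ℕ) (l u : Fin n → ℤ) (hlu : ∀ i, l i ≤ u i - 1)
    (f : (Fin n → ℤ) → ℝ) (hf : IsLNatOn l u f) :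
    convexHull ℝ (epiSet l u f)
      = {q : (Fin n → ℝ) × ℝ |
          (∀ i, (l i : ℝ) ≤ q.1 i ∧ q.1 i ≤ (u i : ℝ)) ∧
          ∀ p : Fin n → ℤ, (∀ i, l i ≤ p i ∧ p i ≤ u i - 1) →
          ∀ δ : Equiv.Perm (Fin n),
            f p + ∑ i : Fin n,
              (f (fun m => p m + if ((δ.symm m : Fin n) : ℕ) < (i : ℕ) + 1 then 1 else 0)
                - f (fun m => p m + if ((δ.symm m : Fin n) : ℕ) < (i : ℕ) then 1 else 0))
              * (q.1 (δ i) - (p (δ i) : ℝ)) ≤ q.2} := by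
  apply Set.Subset.antisymm
  · apply convexHull_min
    · rintro q ⟨x, hx, hx1, hx2⟩
      simp only [Set.mem_setOf_eq]
      constructor
      · intro i
        simp only [hx1]
        exact ⟨by exact_mod_cast (hx i).1, by exact_mod_cast (hx i).2⟩
      · intro p hp δ
        have hv := Stmt10.sepi_valid (δ := δ) hf hp x hx
        have e : (f p + ∑ i : Fin n,
            (f (fun m => p m + if ((δ.symm m : Fin n) : ℕ) < (i : ℕ) + 1 then 1 else 0)
              - f (fun m => p m + if ((δ.symm m : Fin n) : ℕ) < (i : ℕ) then 1 else 0))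
            * (q.1 (δ i) - (p (δ i) : ℝ))) = Stmt10.Hlin f p δ x := by
          rw [hx1]
          rfl
        rw [e]
        exact le_trans hv hx2
    · intro q1 hq1 q2 hq2 a b ha hb hab
      simp only [Set.mem_setOf_eq] at hq1 hq2 ⊢
      constructor
      · intro i
        have h1 := hq1.1 i
        have h2 := hq2.1 i
        have e : (a • q1 + b • q2).1 i = a * q1.1 i + b * q2.1 i := rfl
        rw [e]
        have t1 := mul_le_mul_of_nonneg_left h1.1 ha
        have t2 := mul_le_mul_of_nonneg_left h2.1 hb
        have t3 := mul_le_mul_of_nonneg_left h1.2 ha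
        have t4 := mul_le_mul_of_nonneg_left h2.2 hb
        have t5 : a * (l i : ℝ) + b * (l i : ℝ) = (l i : ℝ) := by rw [← add_mul, hab, one_mul]
        have t6 : a * (u i : ℝ) + b * (u i : ℝ) = (u i : ℝ) := by rw [← add_mul, hab, one_mul]
        constructor
        · linarith
        · linarith
      · intro p hp δ
        have h1 := hq1.2 p hp δ
        have h2 := hq2.2 p hp δ
        set c : Fin n → ℝ := fun i =>
          (f (fun m => p m + if ((δ.symm m : Fin n) : ℕ) < (i : ℕ) + 1 then 1 else 0)
            - f (fun m => p m + if ((δ.symm m : Fin n) : ℕ) < (i : ℕ) then 1 else 0)) with hc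
        have e1 : ∀ i : Fin n,
            (a • q1 + b • q2).1 (δ i) = a * q1.1 (δ i) + b * q2.1 (δ i) := fun i => rfl
        have hsum : ∑ i : Fin n, c i * ((a • q1 + b • q2).1 (δ i) - (p (δ i) : ℝ))
            = a * ∑ i : Fin n, c i * (q1.1 (δ i) - (p (δ i) : ℝ))
            + b * ∑ i : Fin n, c i * (q2.1 (δ i) - (p (δ i) : ℝ)) := by
          rw [Finset.mul_sum, Finset.mul_sum, ← Finset.sum_add_distrib]
          apply Finset.sum_congr rfl
          intro i _
          rw [e1 i]
          have hb1 : b = 1 - a := by linarith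
          rw [hb1]
          ring
        have e2 : (a • q1 + b • q2).2 = a * q1.2 + b * q2.2 := rfl
        rw [hsum, e2]
        have h3 := mul_le_mul_of_nonneg_left h1 ha
        have h4 := mul_le_mul_of_nonneg_left h2 hb
        have h5 : a * (f p) + b * (f p) = f p := by rw [← add_mul, hab, one_mul]
        nlinarith [h3, h4, h5]
  · intro q hq
    simp only [Set.mem_setOf_eq] at hq
    exact Stmt10.construct hlu f q hq.1 (fun p hp δ => hq.2 p hp δ)
end

section
/- Let ℓ, u ∈ ℤⁿ with ℓ ≤ u componentwise, let 𝒳 = {x ∈ ℤⁿ : ℓ ≤ x ≤ u}, let k ≥ 1, and let f₁, …, f_k : 𝒳 → ℝ each be L♮-convex. Define Q = {(w, x) ∈ ℝᵏ × ℝⁿ : x ∈ 𝒳 and wᵢ ≥ fᵢ(x) for all i ∈ {1,…,k}}. Then the convex hull of Q in ℝᵏ × ℝⁿ equals {(w, x) ∈ ℝᵏ × ℝⁿ : ℓ ≤ x ≤ u componentwise, and for every i ∈ {1,…,k}, the point (x, wᵢ) lies in the convex hull of the epigraph 𝒫ᵢ = {(x′, t) ∈ ℝⁿ × ℝ : x′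 ∈ 𝒳, t ≥ fᵢ(x′)}}. -/
namespace Stmt11Aux

open Finset

variable {n : ℕ} (l u : Fin n → ℤ)

noncomputable def boxF : Finset (Fin n → ℤ) := Finset.Icc l u

lemma mem_boxF {v : Fin n → ℤ} : v ∈ boxF l u ↔ inBox l u v := by
  simp [boxF, Finset.mem_Icc, inBox, Pi.le_def, forall_and]

abbrev X := {v : Fin n → ℤ // v ∈ boxF l u}

/-- A discrete convex-combination representation of `x` by box points. -/
def Rep (x : Fin n → ℝ) (μ : X l u → ℝ) : Prop :=
  (∀ v, 0 ≤ μ v) ∧ (∑ v, μ v = 1) ∧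
    ∀ i, (∑ v, μ v * ((v : Fin n → ℤ) i : ℝ)) = x i

/-- Support is a "chain with unit spread". -/
def Good (μ : X l u → ℝ) : Prop :=
  ∀ y z : X l u, 0 < μ y → 0 < μ z →
    ((y : Fin n → ℤ) ≤ z ∧ (z : Fin n → ℤ) ≤ (y : Fin n → ℤ) + 1) ∨
    ((z : Fin n → ℤ) ≤ y ∧ (y : Fin n → ℤ) ≤ (z : Fin n → ℤ) + 1)

lemma fiber_sum {ι : Type} (t : Finset ι) (w : ι → ℝ) (g : ι → X l u) (F : X l u → ℝ) :
    ∑ v : X l u, (∑ j ∈ t.filter (fun j => g j = v), w j) * F v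
      = ∑ j ∈ t, w j * F (g j) := by
  classical
  have : ∀ v : X l u, (∑ j ∈ t.filter (fun j => g j = v), w j) * F v
      = ∑ j ∈ t.filter (fun j => g j = v), w j * F (g j) := by
    intro v
    rw [Finset.sum_mul]
    refine Finset.sum_congr rfl fun j hj => ?_
    rw [(Finset.mem_filter.1 hj).2]
  rw [Finset.sum_congr rfl fun v _ => this v]
  exact Finset.sum_fiberwise_of_maps_to (fun j _ => Finset.mem_univ (g j)) _

lemma rep_of_mem_hull (hlu : l ≤ u) (f : (Fin n → ℤ) → ℝ) (p : Fin n → ℝ) (r : ℝ)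
    (h : (p, r) ∈ convexHull ℝ (epiSet l u f)) :
    ∃ μ : X l u → ℝ, Rep l u p μ ∧ ∑ v, μ v * f ↑v ≤ r := by
  classical
  rw [_root_.convexHull_eq] at h
  obtain ⟨ι, t, w, z, hw0, hw1, hz, hcm⟩ := h
  have hsum : ∑ j ∈ t, w j • z j = (p, r) := by
    rwa [Finset.centerMass, hw1, inv_one, one_smul] at hcm
  have hx : ∀ j ∈ t, ∃ xj : Fin n → ℤ, inBox l u xj ∧
      (z j).1 = (fun i => (xj i : ℝ)) ∧ f xj ≤ (z j).2 := fun j hj => hz j hj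
  set g : ι → X l u := fun j =>
    if h : j ∈ t then ⟨(hx j h).choose, (mem_boxF l u).2 (hx j h).choose_spec.1⟩
    else ⟨l, (mem_boxF l u).2 fun i => ⟨le_refl _, hlu i⟩⟩ with hg
  have hg1 : ∀ j ∈ t, (z j).1 = fun i => (((g j : Fin n → ℤ)) i : ℝ) := by
    intro j hj; simp only [hg, dif_pos hj]; exact (hx j hj).choose_spec.2.1
  have hg2 : ∀ j ∈ t, f ↑(g j) ≤ (z j).2 := by
    intro j hj; simp only [hg, dif_pos hj]; exact (hx j hj).choose_spec.2.2
  refine ⟨fun v => ∑ j ∈ t.filter (fun j => g j = v), w j, ⟨?_, ?_, ?_⟩, ?_⟩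
  · intro v; exact Finset.sum_nonneg fun j hj => hw0 j (Finset.mem_filter.1 hj).1
  · have := fiber_sum l u t w g (fun _ => 1)
    simpa [hw1] using this
  · intro i
    have h1 : (∑ j ∈ t, w j • z j).1 i = p i := by rw [hsum]
    have h2 : (∑ j ∈ t, w j • z j).1 i = ∑ j ∈ t, w j * (z j).1 i := by
      rw [Prod.fst_sum]
      rw [Finset.sum_apply]
      simp [Pi.smul_apply, smul_eq_mul]
    have := fiber_sum l u t w g (fun v => ((v : Fin n → ℤ) i : ℝ))
    rw [this, ← h1, h2]
    refine Finset.sum_congr rfl fun j hj => ?_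
    rw [hg1 j hj]
  · have := fiber_sum l u t w g (fun v => f ↑v)
    rw [this]
    have h1 : (∑ j ∈ t, w j • z j).2 = r := by rw [hsum]
    have h2 : (∑ j ∈ t, w j • z j).2 = ∑ j ∈ t, w j * (z j).2 := by
      rw [Prod.snd_sum]; simp [smul_eq_mul]
    rw [← h1, h2]
    exact Finset.sum_le_sum fun j hj =>
      mul_le_mul_of_nonneg_left (hg2 j hj) (hw0 j hj)



def Bc : ℤ := ∑ i, (|l i| + |u i|)

def Nc : ℤ := 2 * (Bc l u) ^ 2 + 1

def hfun (v : Fin n → ℤ) : ℤ := Nc l u * (∑ i, (v i) ^ 2) - (∑ i, v i) ^ 2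

lemma sum_sq_le {v : Fin n → ℤ} (hv : inBox l u v) : (∑ i, v i) ^ 2 ≤ (Bc l u) ^ 2 := by
  have habs : |∑ i, v i| ≤ Bc l u := by
    refine le_trans (Finset.abs_sum_le_sum_abs _ _) (Finset.sum_le_sum fun i _ => ?_)
    have h1 := (hv i).1; have h2 := (hv i).2
    have := abs_nonneg (l i); have := abs_nonneg (u i)
    have := le_abs_self (u i); have := neg_abs_le (l i)
    rw [abs_le]; constructor <;> linarith
  have := abs_le.1 habs
  exact sq_le_sq' (by linarith) (by linarith)

lemma sup_inf_sq (a b : ℤ) : (a ⊔ b) ^ 2 + (a ⊓ b) ^ 2 = a ^ 2 + b ^ 2 := by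
  rcases le_total a b with h | h
  · rw [sup_eq_right.2 h, inf_eq_left.2 h]; try ring
  · rw [sup_eq_left.2 h, inf_eq_right.2 h]; try ring

lemma sup_inf_add (a b : ℤ) : (a ⊔ b) + (a ⊓ b) = a + b := by
  rcases le_total a b with h | h
  · rw [sup_eq_right.2 h, inf_eq_left.2 h]; try ring
  · rw [sup_eq_left.2 h, inf_eq_right.2 h]; try ring

lemma B_coord_add (a b : ℤ) (h : b ≤ a) : ((a - 1) ⊔ b) + (a ⊓ (b + 1)) = a + b := by
  rcases le_or_gt (b + 1) a with h' | h'
  · rw [sup_eq_left.2 (by linarith), inf_eq_right.2 (by linarith)]; try ring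
  · have : a = b := le_antisymm (by linarith) h
    subst this
    rw [sup_eq_right.2 (by linarith), inf_eq_left.2 (by linarith)]; try ring

lemma B_coord_le (a b : ℤ) (h : b ≤ a) :
    ((a - 1) ⊔ b) ^ 2 + (a ⊓ (b + 1)) ^ 2 ≤ a ^ 2 + b ^ 2 := by
  rcases le_or_gt (b + 1) a with h' | h'
  · rw [sup_eq_left.2 (by linarith), inf_eq_right.2 (by linarith)]; nlinarith
  · have : a = b := le_antisymm (by linarith) h
    subst this
    rw [sup_eq_right.2 (by linarith), inf_eq_left.2 (by linarith)]; try linarith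

lemma B_coord_lt (a b : ℤ) (h : b + 2 ≤ a) :
    ((a - 1) ⊔ b) ^ 2 + (a ⊓ (b + 1)) ^ 2 ≤ a ^ 2 + b ^ 2 - 2 := by
  rw [sup_eq_left.2 (by linarith), inf_eq_right.2 (by linarith)]; nlinarith

/-- Core exchange, "comparable with spread ≥ 2" case, oriented `z ≤ y`. -/
lemma exchange_core_cmp (y z : Fin n → ℤ) (hy : inBox l u y) (hz : inBox l u z)
    (hzy : z ≤ y) (i0 : Fin n) (hi0 : z i0 + 2 ≤ y i0) :
    ∃ p q : Fin n → ℤ, inBox l u p ∧ inBox l u q ∧ (∀ i, p i + q i = y i + z i) ∧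
      hfun l u p + hfun l u q + 2 ≤ hfun l u y + hfun l u z ∧
      p ≠ y ∧ p ≠ z ∧ q ≠ y ∧ q ≠ z ∧
      (∀ f, IsLNatOn l u f → f p + f q ≤ f y + f z) := by
  set p : Fin n → ℤ := ((fun i => y i - 1) : Fin n → ℤ) ⊔ z with hp
  set q : Fin n → ℤ := y ⊓ ((fun i => z i + 1) : Fin n → ℤ) with hq
  have hpi : ∀ i, p i = (y i - 1) ⊔ z i := fun i => rfl
  have hqi : ∀ i, q i = y i ⊓ (z i + 1) := fun i => rfl
  have hpbox : inBox l u p := by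
    intro i; rw [hpi i]
    refine ⟨le_trans (hz i).1 le_sup_right, sup_le (by linarith [(hy i).2]) (le_trans (hz i).2 (by linarith [(hy i).2, hzy i]))⟩
  have hqbox : inBox l u q := by
    intro i; rw [hqi i]
    refine ⟨le_inf (hy i).1 (by linarith [(hz i).1]), le_trans inf_le_left (hy i).2⟩
  have hadd : ∀ i, p i + q i = y i + z i := by
    intro i; rw [hpi i, hqi i]; exact B_coord_add _ _ (hzy i)
  have hsq : (∑ i, (p i) ^ 2) + (∑ i, (q i) ^ 2) + 2 ≤ (∑ i, (y i) ^ 2) + (∑ i, (z i) ^ 2) := by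
    have key : ∀ i, 0 ≤ ((y i) ^ 2 + (z i) ^ 2) - ((p i) ^ 2 + (q i) ^ 2) := by
      intro i; rw [hpi i, hqi i]; linarith [B_coord_le (y i) (z i) (hzy i)]
    have key0 : 2 ≤ ((y i0) ^ 2 + (z i0) ^ 2) - ((p i0) ^ 2 + (q i0) ^ 2) := by
      rw [hpi i0, hqi i0]; linarith [B_coord_lt (y i0) (z i0) hi0]
    have hs : 2 ≤ ∑ i, (((y i) ^ 2 + (z i) ^ 2) - ((p i) ^ 2 + (q i) ^ 2)) :=
      le_trans key0 (Finset.single_le_sum (fun i _ => key i) (Finset.mem_univ i0))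
    rw [Finset.sum_sub_distrib] at hs
    rw [Finset.sum_add_distrib] at hs
    rw [Finset.sum_add_distrib] at hs
    linarith
  have hhf : hfun l u p + hfun l u q + 2 ≤ hfun l u y + hfun l u z := by
    unfold hfun
    have hNpos : (0:ℤ) ≤ Nc l u := by unfold Nc; positivity
    have h1 := sum_sq_le l u hy
    have h2 := sum_sq_le l u hz
    have h3 : (0:ℤ) ≤ (∑ i, p i) ^ 2 := sq_nonneg _
    have h4 : (0:ℤ) ≤ (∑ i, q i) ^ 2 := sq_nonneg _
    have hN : Nc l u = 2 * (Bc l u) ^ 2 + 1 := rfl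
    nlinarith [hsq, hNpos]
  have hne1 : p ≠ y := fun h => by
    have := congrFun h i0; rw [hpi i0] at this
    rw [sup_eq_left.2 (by linarith : z i0 ≤ y i0 - 1)] at this; omega
  have hne2 : p ≠ z := fun h => by
    have := congrFun h i0; rw [hpi i0] at this
    rw [sup_eq_left.2 (by linarith : z i0 ≤ y i0 - 1)] at this; omega
  have hne3 : q ≠ y := fun h => by
    have := congrFun h i0; rw [hqi i0] at this
    rw [inf_eq_right.2 (by linarith : z i0 + 1 ≤ y i0)] at this; omega
  have hne4 : q ≠ z := fun h => by
    have := congrFun h i0; rw [hqi i0] at this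
    rw [inf_eq_right.2 (by linarith : z i0 + 1 ≤ y i0)] at this; omega
  refine ⟨p, q, hpbox, hqbox, hadd, hhf, hne1, hne2, hne3, hne4, fun f hf => ?_⟩
  have := hf y z hy hz 1 (by norm_num) hpbox hqbox
  linarith

/-- Core exchange, incomparable case. -/
lemma exchange_core_inc (y z : Fin n → ℤ) (hy : inBox l u y) (hz : inBox l u z)
    (h1 : ¬ y ≤ z) (h2 : ¬ z ≤ y) :
    ∃ p q : Fin n → ℤ, inBox l u p ∧ inBox l u q ∧ (∀ i, p i + q i = y i + z i) ∧
      hfun l u p + hfun l u q + 2 ≤ hfun l u y + hfun l u z ∧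
      p ≠ y ∧ p ≠ z ∧ q ≠ y ∧ q ≠ z ∧
      (∀ f, IsLNatOn l u f → f p + f q ≤ f y + f z) := by
  rw [Pi.le_def] at h1 h2; push_neg at h1 h2
  obtain ⟨i1, hi1⟩ := h1  -- z i1 < y i1
  obtain ⟨i0, hi0⟩ := h2  -- y i0 < z i0
  set p : Fin n → ℤ := ((fun i => y i - 0) : Fin n → ℤ) ⊔ z with hp
  set q : Fin n → ℤ := y ⊓ ((fun i => z i + 0) : Fin n → ℤ) with hq
  have hpi : ∀ i, p i = y i ⊔ z i := fun i => by
    show (y i - 0) ⊔ z i = _ ; rw [sub_zero]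
  have hqi : ∀ i, q i = y i ⊓ z i := fun i => by
    show y i ⊓ (z i + 0) = _ ; rw [add_zero]
  have hpbox : inBox l u p := by
    intro i; rw [hpi i]
    exact ⟨le_trans (hy i).1 le_sup_left, sup_le (hy i).2 (hz i).2⟩
  have hqbox : inBox l u q := by
    intro i; rw [hqi i]
    exact ⟨le_inf (hy i).1 (hz i).1, le_trans inf_le_left (hy i).2⟩
  have hadd : ∀ i, p i + q i = y i + z i := by
    intro i; rw [hpi i, hqi i]; exact sup_inf_add _ _
  have hsq : (∑ i, (p i) ^ 2) + (∑ i, (q i) ^ 2) = (∑ i, (y i) ^ 2) + (∑ i, (z i) ^ 2) := by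
    rw [← Finset.sum_add_distrib, ← Finset.sum_add_distrib]
    refine Finset.sum_congr rfl fun i _ => ?_
    rw [hpi i, hqi i]; exact sup_inf_sq _ _
  -- sums of coordinates
  have hd : 1 ≤ (∑ i, p i) - (∑ i, y i) := by
    rw [← Finset.sum_sub_distrib]
    refine le_trans ?_ (Finset.single_le_sum (f := fun i => p i - y i)
      (fun i _ => by show (0:ℤ) ≤ p i - y i; rw [hpi i]; simp [le_sup_left]) (Finset.mem_univ i0))
    show (1:ℤ) ≤ p i0 - y i0
    rw [hpi i0]; have : z i0 ≤ y i0 ⊔ z i0 := le_sup_right; omega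
  have he : 1 ≤ (∑ i, p i) - (∑ i, z i) := by
    rw [← Finset.sum_sub_distrib]
    refine le_trans ?_ (Finset.single_le_sum (f := fun i => p i - z i)
      (fun i _ => by show (0:ℤ) ≤ p i - z i; rw [hpi i]; simp [le_sup_right]) (Finset.mem_univ i1))
    show (1:ℤ) ≤ p i1 - z i1
    rw [hpi i1]; have : y i1 ≤ y i1 ⊔ z i1 := le_sup_left; omega
  have hst : (∑ i, p i) + (∑ i, q i) = (∑ i, y i) + (∑ i, z i) := by
    rw [← Finset.sum_add_distrib, ← Finset.sum_add_distrib]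
    exact Finset.sum_congr rfl fun i _ => hadd i
  have hhf : hfun l u p + hfun l u q + 2 ≤ hfun l u y + hfun l u z := by
    unfold hfun
    have hNpos : (0:ℤ) ≤ Nc l u := by unfold Nc; positivity
    have hprod : (1:ℤ) ≤ ((∑ i, p i) - (∑ i, y i)) * ((∑ i, p i) - (∑ i, z i)) := by
      have := mul_le_mul hd he (by norm_num) (by linarith)
      linarith
    have hNQ : Nc l u * ((∑ i, (p i)^2) + (∑ i, (q i)^2))
        = Nc l u * ((∑ i, (y i)^2) + (∑ i, (z i)^2)) := by rw [hsq]
    rw [mul_add, mul_add] at hNQ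
    have hkey : (∑ i, p i)^2 + (∑ i, q i)^2
        = (∑ i, y i)^2 + (∑ i, z i)^2
          + 2*(((∑ i, p i) - (∑ i, y i)) * ((∑ i, p i) - (∑ i, z i))) := by
      have hq' : (∑ i, q i) = (∑ i, y i) + (∑ i, z i) - (∑ i, p i) := by linarith
      rw [hq']; ring
    linarith [hprod, hNQ, hkey]
  have hne1 : p ≠ y := fun h => by
    have := congrFun h i0; rw [hpi i0] at this
    have : z i0 ≤ y i0 ⊔ z i0 := le_sup_right; omega
  have hne2 : p ≠ z := fun h => by
    have := congrFun h i1; rw [hpi i1] at this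
    have : y i1 ≤ y i1 ⊔ z i1 := le_sup_left; omega
  have hne3 : q ≠ y := fun h => by
    have := congrFun h i1; rw [hqi i1] at this
    have : y i1 ⊓ z i1 ≤ z i1 := inf_le_right; omega
  have hne4 : q ≠ z := fun h => by
    have := congrFun h i0; rw [hqi i0] at this
    have : y i0 ⊓ z i0 ≤ y i0 := inf_le_left; omega
  refine ⟨p, q, hpbox, hqbox, hadd, hhf, hne1, hne2, hne3, hne4, fun f hf => ?_⟩
  have := hf y z hy hz 0 (by norm_num) hpbox hqbox
  linarith

/-- Combined exchange from a "bad pair". -/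
lemma exchange (y z : Fin n → ℤ) (hy : inBox l u y) (hz : inBox l u z)
    (hbad : ¬ ((y ≤ z ∧ z ≤ y + 1) ∨ (z ≤ y ∧ y ≤ z + 1))) :
    ∃ p q : Fin n → ℤ, inBox l u p ∧ inBox l u q ∧ (∀ i, p i + q i = y i + z i) ∧
      hfun l u p + hfun l u q + 2 ≤ hfun l u y + hfun l u z ∧
      p ≠ y ∧ p ≠ z ∧ q ≠ y ∧ q ≠ z ∧
      (∀ f, IsLNatOn l u f → f p + f q ≤ f y + f z) := by
  by_cases h1 : y ≤ z
  · have h2 : ¬ z ≤ y + 1 := fun h => hbad (Or.inl ⟨h1, h⟩)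
    rw [Pi.le_def] at h2; push_neg at h2
    obtain ⟨i0, hi0⟩ := h2
    have hi0' : y i0 + 2 ≤ z i0 := by
      have : (y + 1) i0 = y i0 + 1 := rfl
      omega
    obtain ⟨p, q, c1, c2, c3, c4, c5, c6, c7, c8, c9⟩ :=
      exchange_core_cmp l u z y hz hy h1 i0 hi0'
    exact ⟨p, q, c1, c2, fun i => by rw [c3 i]; ring, by linarith, c6, c5, c8, c7,
      fun f hf => by linarith [c9 f hf]⟩
  · by_cases h2 : z ≤ y
    · have h3 : ¬ y ≤ z + 1 := fun h => hbad (Or.inr ⟨h2, h⟩)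
      rw [Pi.le_def] at h3; push_neg at h3
      obtain ⟨i0, hi0⟩ := h3
      have hi0' : z i0 + 2 ≤ y i0 := by
        have : (z + 1) i0 = z i0 + 1 := rfl
        omega
      exact exchange_core_cmp l u y z hy hz h2 i0 hi0'
    · exact exchange_core_inc l u y z hy hz h1 h2


end Stmt11Aux

section Chunk3
namespace Stmt11Aux
open Finset

variable {n : ℕ} (l u : Fin n → ℤ)

lemma sum_ind (P : X l u) (F : X l u → ℝ) :
    ∑ v, (if v = P then (1:ℝ) else 0) * F v = F P := by
  have h : ∀ v, (if v = P then (1:ℝ) else 0) * F v = if v = P then F v else 0 := by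
    intro v; split <;> simp
  rw [Finset.sum_congr rfl fun v _ => h v, Finset.sum_ite_eq' Finset.univ P F]
  simp

lemma sum_pert (μ : X l u → ℝ) (ε : ℝ) (P Q Y Z : X l u) (F : X l u → ℝ) :
    ∑ v, (μ v + ε * ((if v = P then (1:ℝ) else 0) + (if v = Q then 1 else 0)
        - (if v = Y then 1 else 0) - (if v = Z then 1 else 0))) * F v
      = (∑ v, μ v * F v) + ε * (F P + F Q - F Y - F Z) := by
  have h : ∀ v, (μ v + ε * ((if v = P then (1:ℝ) else 0) + (if v = Q then 1 else 0)
        - (if v = Y then 1 else 0) - (if v = Z then 1 else 0))) * F v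
      = μ v * F v + ε * ((if v = P then (1:ℝ) else 0) * F v + (if v = Q then (1:ℝ) else 0) * F v
        - (if v = Y then (1:ℝ) else 0) * F v - (if v = Z then (1:ℝ) else 0) * F v) := by
    intro v; ring
  rw [Finset.sum_congr rfl fun v _ => h v, Finset.sum_add_distrib, ← Finset.mul_sum]
  congr 1
  rw [Finset.sum_sub_distrib, Finset.sum_sub_distrib, Finset.sum_add_distrib,
    sum_ind l u P F, sum_ind l u Q F, sum_ind l u Y F, sum_ind l u Z F]

lemma exists_good_rep (x : Fin n → ℝ) (f : (Fin n → ℤ) → ℝ) (hf : IsLNatOn l u f)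
    (ν : X l u → ℝ) (hν : Rep l u x ν) :
    ∃ μ : X l u → ℝ, Rep l u x μ ∧ Good l u μ ∧
      ∑ v, μ v * f ↑v ≤ ∑ v, ν v * f ↑v := by
  classical
  set c : ℝ := ∑ v, ν v * f ↑v with hc
  set K : Set (X l u → ℝ) := {μ | Rep l u x μ ∧ ∑ v, μ v * f ↑v ≤ c} with hK
  have hKcl : IsClosed K := by
    have c1 : IsClosed {μ : X l u → ℝ | ∀ v, 0 ≤ μ v} := by
      have : {μ : X l u → ℝ | ∀ v, 0 ≤ μ v}
          = ⋂ v, (fun μ : X l u → ℝ => μ v) ⁻¹' (Set.Ici 0) := by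
        ext μ; simp [Set.mem_iInter]
      rw [this]
      exact isClosed_iInter fun v => isClosed_Ici.preimage (continuous_apply v)
    have c2 : IsClosed {μ : X l u → ℝ | ∑ v, μ v = 1} :=
      isClosed_eq (continuous_finset_sum _ fun v _ => continuous_apply v) continuous_const
    have c3 : IsClosed {μ : X l u → ℝ | ∀ i, (∑ v, μ v * ((v : Fin n → ℤ) i : ℝ)) = x i} := by
      have : {μ : X l u → ℝ | ∀ i, (∑ v, μ v * ((v : Fin n → ℤ) i : ℝ)) = x i}
          = ⋂ i, {μ : X l u → ℝ | (∑ v, μ v * ((v : Fin n → ℤ) i : ℝ)) = x i} := by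
        ext μ; simp [Set.mem_iInter]
      rw [this]
      exact isClosed_iInter fun i => isClosed_eq
        (continuous_finset_sum _ fun v _ => (continuous_apply v).mul continuous_const)
        continuous_const
    have c4 : IsClosed {μ : X l u → ℝ | ∑ v, μ v * f ↑v ≤ c} :=
      isClosed_le (continuous_finset_sum _ fun v _ => (continuous_apply v).mul continuous_const)
        continuous_const
    have : K = ({μ : X l u → ℝ | ∀ v, 0 ≤ μ v} ∩ {μ | ∑ v, μ v = 1}
        ∩ {μ | ∀ i, (∑ v, μ v * ((v : Fin n → ℤ) i : ℝ)) = x i})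
        ∩ {μ | ∑ v, μ v * f ↑v ≤ c} := by
      ext μ; simp only [hK, Set.mem_setOf_eq, Set.mem_inter_iff, Rep]; tauto
    rw [this]
    exact ((c1.inter c2).inter c3).inter c4
  have hKsub : K ⊆ Set.Icc (0 : X l u → ℝ) 1 := by
    rintro μ ⟨⟨h0, h1, _⟩, _⟩
    constructor
    · intro v; exact h0 v
    · intro v
      calc μ v ≤ ∑ w, μ w := Finset.single_le_sum (fun w _ => h0 w) (Finset.mem_univ v)
      _ = 1 := h1
  have hKcp : IsCompact K := IsCompact.of_isClosed_subset isCompact_Icc hKcl hKsub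
  have hKne : K.Nonempty := ⟨ν, hν, le_refl _⟩
  have hΦcont : Continuous (fun μ : X l u → ℝ => ∑ v, μ v * ((hfun l u ↑v : ℤ) : ℝ)) :=
    continuous_finset_sum _ fun v _ => (continuous_apply v).mul continuous_const
  obtain ⟨μ, hμK, hmin⟩ := hKcp.exists_isMinOn hKne hΦcont.continuousOn
  refine ⟨μ, hμK.1, ?_, hμK.2⟩
  -- Good
  intro Y Z hY hZ
  by_contra hbad
  obtain ⟨p, q, hpb, hqb, hadd, hhf, hne1, hne2, hne3, hne4, hLN⟩ :=
    exchange l u (↑Y) (↑Z) ((mem_boxF l u).1 Y.2) ((mem_boxF l u).1 Z.2) hbad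
  set P : X l u := ⟨p, (mem_boxF l u).2 hpb⟩ with hP
  set Q : X l u := ⟨q, (mem_boxF l u).2 hqb⟩ with hQ
  have hPY : P ≠ Y := fun h => hne1 (congrArg Subtype.val h)
  have hPZ : P ≠ Z := fun h => hne2 (congrArg Subtype.val h)
  have hQY : Q ≠ Y := fun h => hne3 (congrArg Subtype.val h)
  have hQZ : Q ≠ Z := fun h => hne4 (congrArg Subtype.val h)
  have hYZ : Y ≠ Z := by
    intro h; subst h
    exact hbad (Or.inl ⟨le_refl _, fun i => by simp [Pi.add_apply]⟩)
  set ε : ℝ := min (μ Y) (μ Z) with hε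
  have hεpos : 0 < ε := lt_min hY hZ
  set μ' : X l u → ℝ := fun v => μ v + ε * ((if v = P then (1:ℝ) else 0)
      + (if v = Q then 1 else 0) - (if v = Y then 1 else 0) - (if v = Z then 1 else 0)) with hμ'
  have hμ'K : μ' ∈ K := by
    refine ⟨⟨?_, ?_, ?_⟩, ?_⟩
    · intro v
      by_cases h1 : v = Y
      · subst h1
        simp only [hμ', if_neg hPY.symm, if_neg hQY.symm, if_pos rfl, if_neg hYZ, if_true, eq_self_iff_true]
        have : ε ≤ μ v := min_le_left _ _
        linarith
      · by_cases h2 : v = Z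
        · subst h2
          simp only [hμ', if_neg hPZ.symm, if_neg hQZ.symm, if_neg (Ne.symm hYZ), if_pos rfl, if_true, eq_self_iff_true]
          have : ε ≤ μ v := min_le_right _ _
          linarith
        · have h0 : 0 ≤ μ v := hμK.1.1 v
          have e1 : (0:ℝ) ≤ (if v = P then (1:ℝ) else 0) := by split <;> norm_num
          have e2 : (0:ℝ) ≤ (if v = Q then (1:ℝ) else 0) := by split <;> norm_num
          simp only [hμ', if_neg h1, if_neg h2]
          nlinarith
    · have e0 := sum_pert l u μ ε P Q Y Z (fun _ => 1)
      simp only [mul_one] at e0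
      calc ∑ v, μ' v = (∑ v, μ v) + ε * (1 + 1 - 1 - 1) := e0
        _ = 1 := by rw [hμK.1.2.1]; ring
    · intro i
      have e0 := sum_pert l u μ ε P Q Y Z (fun v => ((v : Fin n → ℤ) i : ℝ))
      have hz : (((P : Fin n → ℤ) i : ℝ) + ((Q : Fin n → ℤ) i : ℝ)
          - ((Y : Fin n → ℤ) i : ℝ) - ((Z : Fin n → ℤ) i : ℝ)) = 0 := by
        have h := hadd i
        have h2 : ((p i + q i : ℤ) : ℝ) = (((Y : Fin n → ℤ) i + (Z : Fin n → ℤ) i : ℤ) : ℝ) := by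
          exact_mod_cast congrArg (fun t : ℤ => (t : ℝ)) h
        push_cast at h2
        show ((p i : ℝ) + (q i : ℝ) - _ - _) = 0
        linarith
      calc ∑ v, μ' v * ((v : Fin n → ℤ) i : ℝ)
          = (∑ v, μ v * ((v : Fin n → ℤ) i : ℝ)) + ε * (((P : Fin n → ℤ) i : ℝ)
            + ((Q : Fin n → ℤ) i : ℝ) - ((Y : Fin n → ℤ) i : ℝ) - ((Z : Fin n → ℤ) i : ℝ)) := e0
        _ = x i := by rw [hμK.1.2.2 i, hz]; ring
    · have e0 := sum_pert l u μ ε P Q Y Z (fun v => f ↑v)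
      have hl : f ↑P + f ↑Q - f ↑Y - f ↑Z ≤ 0 := by
        have := hLN f hf
        show f p + f q - f ↑Y - f ↑Z ≤ 0
        linarith
      calc ∑ v, μ' v * f ↑v
          = (∑ v, μ v * f ↑v) + ε * (f ↑P + f ↑Q - f ↑Y - f ↑Z) := e0
        _ ≤ ∑ v, μ v * f ↑v := by nlinarith [hεpos.le]
        _ ≤ c := hμK.2
  -- Φ decreases: contradiction
  have hΦ : (∑ v, μ' v * ((hfun l u ↑v : ℤ) : ℝ)) < ∑ v, μ v * ((hfun l u ↑v : ℤ) : ℝ) := by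
    have e0 := sum_pert l u μ ε P Q Y Z (fun v => ((hfun l u ↑v : ℤ) : ℝ))
    have hint : ((hfun l u ↑P : ℤ) : ℝ) + ((hfun l u ↑Q : ℤ) : ℝ)
        - ((hfun l u ↑Y : ℤ) : ℝ) - ((hfun l u ↑Z : ℤ) : ℝ) ≤ -2 := by
      have h2 : ((hfun l u p + hfun l u q : ℤ) : ℝ)
          ≤ ((hfun l u ↑Y + hfun l u ↑Z - 2 : ℤ) : ℝ) := by
        exact_mod_cast (by linarith :
          hfun l u p + hfun l u q ≤ hfun l u (↑Y) + hfun l u (↑Z) - 2)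
      push_cast at h2
      show ((hfun l u p : ℤ) : ℝ) + ((hfun l u q : ℤ) : ℝ) - _ - _ ≤ -2
      linarith
    calc ∑ v, μ' v * ((hfun l u ↑v : ℤ) : ℝ)
        = (∑ v, μ v * ((hfun l u ↑v : ℤ) : ℝ)) + ε * (((hfun l u ↑P : ℤ) : ℝ)
          + ((hfun l u ↑Q : ℤ) : ℝ) - ((hfun l u ↑Y : ℤ) : ℝ) - ((hfun l u ↑Z : ℤ) : ℝ)) := e0
      _ < ∑ v, μ v * ((hfun l u ↑v : ℤ) : ℝ) := by nlinarith [hεpos]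
  exact absurd (hmin hμ'K) (not_le.2 hΦ)

end Stmt11Aux
end Chunk3

section Chunk4a
namespace Stmt11Aux
open Finset

variable {n : ℕ} (l u : Fin n → ℤ)

lemma supp_nonempty {lam : X l u → ℝ} (h : Rep l u x lam) :
    (univ.filter fun v : X l u => 0 < lam v).Nonempty := by
  by_contra hne
  rw [Finset.not_nonempty_iff_eq_empty, Finset.filter_eq_empty_iff] at hne
  have : ∑ v : X l u, lam v = 0 := Finset.sum_eq_zero fun v _ => by
    have h1 := h.1 v
    have h2 := hne (Finset.mem_univ v)
    push_neg at h2
    linarith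
  rw [h.2.1] at this; norm_num at this

/-- The core "floor" facts for a good representation. -/
lemma floor_facts (x : Fin n → ℝ) (lam : X l u → ℝ)
    (h : Rep l u x lam) (hg : Good l u lam) (i : Fin n) :
    (∀ v : X l u, 0 < lam v →
        (v : Fin n → ℤ) i = ⌊x i⌋ ∨ (v : Fin n → ℤ) i = ⌊x i⌋ + 1) ∧
    (x i - (⌊x i⌋ : ℝ)
      = ∑ v ∈ univ.filter (fun v : X l u => 0 < lam v ∧ (v : Fin n → ℤ) i = ⌊x i⌋ + 1),
          lam v) := by
  classical
  obtain ⟨m, hmsupp, hmmin⟩ :=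
    Finset.exists_min_image _ (fun v : X l u => (v : Fin n → ℤ) i) (supp_nonempty l u h)
  have hmpos : 0 < lam m := (Finset.mem_filter.1 hmsupp).2
  set c : ℤ := (m : Fin n → ℤ) i with hcdef
  have claim1 : ∀ v : X l u, 0 < lam v → c ≤ (v : Fin n → ℤ) i := by
    intro v hv
    exact hmmin v (Finset.mem_filter.2 ⟨Finset.mem_univ v, hv⟩)
  have claim2 : ∀ v : X l u, 0 < lam v → (v : Fin n → ℤ) i ≤ c + 1 := by
    intro v hv
    rw [hcdef]
    rcases hg m v hmpos hv with h' | h'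
    · have h2 := h'.2 i
      simp only [Pi.add_apply, Pi.one_apply] at h2
      omega
    · have h1 := h'.1
      rw [Pi.le_def] at h1
      have := h1 i
      omega
  -- the expansion of x i - c
  have expand : ∑ v : X l u, lam v * (((v : Fin n → ℤ) i : ℝ) - (c : ℝ)) = x i - (c : ℝ) := by
    have e1 : ∀ v : X l u, lam v * (((v : Fin n → ℤ) i : ℝ) - (c : ℝ))
        = lam v * ((v : Fin n → ℤ) i : ℝ) - lam v * (c : ℝ) := fun v => by ring
    rw [Finset.sum_congr rfl fun v _ => e1 v, Finset.sum_sub_distrib, h.2.2 i,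
      ← Finset.sum_mul, h.2.1, one_mul]
  have term_nonneg : ∀ v : X l u, 0 ≤ lam v * (((v : Fin n → ℤ) i : ℝ) - (c : ℝ)) := by
    intro v
    rcases eq_or_lt_of_le (h.1 v) with hv | hv
    · rw [← hv]; simp
    · have := claim1 v hv
      have : (c : ℝ) ≤ ((v : Fin n → ℤ) i : ℝ) := by exact_mod_cast this
      have h2 : 0 ≤ ((v : Fin n → ℤ) i : ℝ) - (c : ℝ) := by linarith
      positivity
  have F1 : (c : ℝ) ≤ x i := by
    have := Finset.sum_nonneg (fun v (_ : v ∈ univ) => term_nonneg v)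
    rw [expand] at this; linarith
  have F2 : x i < (c : ℝ) + 1 := by
    have hterm_le : ∀ v : X l u, lam v * (((v : Fin n → ℤ) i : ℝ) - (c : ℝ)) ≤ lam v := by
      intro v
      rcases eq_or_lt_of_le (h.1 v) with hv | hv
      · rw [← hv]; simp
      · have h2 := claim2 v hv
        have h2' : ((v : Fin n → ℤ) i : ℝ) - (c : ℝ) ≤ 1 := by
          have : ((v : Fin n → ℤ) i : ℝ) ≤ (c : ℝ) + 1 := by exact_mod_cast h2
          linarith
        nlinarith
    have hm0 : lam m * (((m : Fin n → ℤ) i : ℝ) - (c : ℝ)) = 0 := by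
      rw [hcdef]; ring_nf
    have split : lam m * (((m : Fin n → ℤ) i : ℝ) - (c : ℝ))
        + ∑ v ∈ univ.erase m, lam v * (((v : Fin n → ℤ) i : ℝ) - (c : ℝ))
        = ∑ v : X l u, lam v * (((v : Fin n → ℤ) i : ℝ) - (c : ℝ)) :=
      Finset.add_sum_erase _ (fun v : X l u => lam v * (((v : Fin n → ℤ) i : ℝ) - (c : ℝ)))
        (Finset.mem_univ m)
    have hbound : ∑ v ∈ univ.erase m, lam v * (((v : Fin n → ℤ) i : ℝ) - (c : ℝ))
        ≤ ∑ v ∈ univ.erase m, lam v := Finset.sum_le_sum fun v _ => hterm_le v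
    have hsplit2 : lam m + ∑ v ∈ univ.erase m, lam v = 1 :=
      (Finset.add_sum_erase univ (fun v : X l u => lam v) (Finset.mem_univ m)).trans h.2.1
    have : x i - (c : ℝ) ≤ 1 - lam m := by
      rw [← expand, ← split, hm0, zero_add]
      linarith
    linarith
  have hfloor : ⌊x i⌋ = c := by
    rw [Int.floor_eq_iff]; exact ⟨F1, by exact_mod_cast F2⟩
  -- dichotomy
  have dich : ∀ v : X l u, 0 < lam v →
      (v : Fin n → ℤ) i = ⌊x i⌋ ∨ (v : Fin n → ℤ) i = ⌊x i⌋ + 1 := by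
    intro v hv
    have := claim1 v hv; have := claim2 v hv
    omega
  refine ⟨dich, ?_⟩
  -- theta identity
  have dich' : ∀ v : X l u, 0 < lam v →
      (v : Fin n → ℤ) i = c ∨ (v : Fin n → ℤ) i = c + 1 := by
    intro v hv; rcases dich v hv with hd | hd <;> omega
  have e2 : ∀ v : X l u, lam v * (((v : Fin n → ℤ) i : ℝ) - (c : ℝ))
      = if (0 < lam v ∧ (v : Fin n → ℤ) i = c + 1) then lam v else 0 := by
    intro v
    by_cases hv : 0 < lam v
    · rcases dich' v hv with hd | hd
      · rw [if_neg (by simp [hd]), hd]; ring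
      · rw [if_pos ⟨hv, hd⟩, hd]
        push_cast; ring
    · have h0 : lam v = 0 := le_antisymm (not_lt.1 hv) (h.1 v)
      rw [if_neg (fun hc => hv hc.1), h0, zero_mul]
  have goal2 : x i - (c : ℝ)
      = ∑ v ∈ univ.filter (fun v : X l u => 0 < lam v ∧ (v : Fin n → ℤ) i = c + 1), lam v := by
    rw [← expand, Finset.sum_congr rfl fun v _ => e2 v, Finset.sum_filter]
  rw [hfloor]
  exact goal2

end Stmt11Aux
end Chunk4a

section Chunk4b
namespace Stmt11Aux
open Finset

variable {n : ℕ} (l u : Fin n → ℤ)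

open Classical in
noncomputable def Fse (x : Fin n → ℝ) : Finset (Fin n) :=
  univ.filter (fun i => (⌊x i⌋ : ℝ) < x i)

open Classical in
noncomputable def bpt (x : Fin n → ℝ) : Fin n → ℤ :=
  fun i => ⌊x i⌋ + (if (⌊x i⌋ : ℝ) < x i then 1 else 0)

open Classical in
noncomputable def cval (x : Fin n → ℝ) : ℝ :=
  if h : (Fse x).Nonempty then (Fse x).inf' h (fun i => x i - ⌊x i⌋) else 0

lemma top_mass (x : Fin n → ℝ) (lam : X l u → ℝ)
    (hrep : Rep l u x lam) (hg : Good l u lam) (hne : (Fse x).Nonempty) :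
    ∃ hbm : bpt x ∈ boxF l u,
      lam ⟨bpt x, hbm⟩ = cval x ∧ 0 < cval x ∧ cval x < 1 := by
  classical
  obtain ⟨i1, hi1F, hi1v⟩ := Finset.exists_mem_eq_inf' hne (fun i => x i - ⌊x i⌋)
  have hc : cval x = x i1 - (⌊x i1⌋ : ℝ) := by rw [cval, dif_pos hne]; exact hi1v
  have hi1pos : (⌊x i1⌋ : ℝ) < x i1 := (Finset.mem_filter.1 hi1F).2
  have hcpos : 0 < cval x := by rw [hc]; linarith
  have hclt : cval x < 1 := by
    rw [hc]; have := Int.lt_floor_add_one (x i1); linarith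
  have hcmin : ∀ i, (⌊x i⌋ : ℝ) < x i → cval x ≤ x i - (⌊x i⌋ : ℝ) := by
    intro i hi
    rw [cval, dif_pos hne]
    exact Finset.inf'_le _ (Finset.mem_filter.2 ⟨Finset.mem_univ i, hi⟩)
  have ff := fun i => floor_facts l u x lam hrep hg i
  set tS : Fin n → Finset (X l u) := fun i =>
    univ.filter (fun v : X l u => 0 < lam v ∧ (v : Fin n → ℤ) i = ⌊x i⌋ + 1) with htS
  have hts : ∀ i, x i - (⌊x i⌋ : ℝ) = ∑ v ∈ tS i, lam v := fun i => (ff i).2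
  have htne : ∀ i, (⌊x i⌋ : ℝ) < x i → (tS i).Nonempty := by
    intro i hi
    by_contra hcon
    rw [Finset.not_nonempty_iff_eq_empty] at hcon
    have := hts i
    rw [hcon, Finset.sum_empty] at this
    linarith
  have hint0 : ∀ i, ¬ ((⌊x i⌋ : ℝ) < x i) → ∀ v : X l u, 0 < lam v →
      (v : Fin n → ℤ) i = ⌊x i⌋ := by
    intro i hi v hv
    have hzero : x i - (⌊x i⌋ : ℝ) = 0 := by
      have := Int.floor_le (x i); push_neg at hi; linarith
    have hsum0 : ∑ w ∈ tS i, lam w = 0 := by rw [← hts i]; exact hzero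
    rcases (ff i).1 v hv with hd | hd
    · exact hd
    · exfalso
      have hvm : v ∈ tS i := Finset.mem_filter.2 ⟨Finset.mem_univ v, hv, hd⟩
      have := Finset.sum_eq_zero_iff_of_nonneg (fun w (_ : w ∈ tS i) => hrep.1 w)
      rw [this] at hsum0
      have := hsum0 v hvm
      linarith
  -- step1 : any support point at top in coordinate i1 equals bpt x
  have step1 : ∀ Y : X l u, 0 < lam Y → (Y : Fin n → ℤ) i1 = ⌊x i1⌋ + 1 →
      (Y : Fin n → ℤ) = bpt x := by
    intro Y hY hYi1
    funext i
    by_cases hF : (⌊x i⌋ : ℝ) < x i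
    · have hbi : bpt x i = ⌊x i⌋ + 1 := by rw [bpt, if_pos hF]
      rcases (ff i).1 Y hY with hd | hd
      · exfalso
        -- tS i ⊆ (tS i1).erase Y, giving a strict decrease
        have hsub : tS i ⊆ (tS i1).erase Y := by
          intro W hW
          obtain ⟨-, hWpos, hWi⟩ := Finset.mem_filter.1 hW
          have hWY : W ≠ Y := by
            intro hWY; rw [hWY] at hWi; omega
          have hYle : (Y : Fin n → ℤ) ≤ W := by
            rcases hg Y W hY hWpos with h' | h'
            · exact h'.1
            · exfalso
              have hle := h'.1
              rw [Pi.le_def] at hle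
              have := hle i
              omega
          have hWi1 : (W : Fin n → ℤ) i1 = ⌊x i1⌋ + 1 := by
            rw [Pi.le_def] at hYle
            have h1 := hYle i1
            rcases (ff i1).1 W hWpos with hd2 | hd2 <;> omega
          exact Finset.mem_erase.2 ⟨hWY, Finset.mem_filter.2 ⟨Finset.mem_univ W, hWpos, hWi1⟩⟩
        have hYmem : Y ∈ tS i1 := Finset.mem_filter.2 ⟨Finset.mem_univ Y, hY, hYi1⟩
        have h1 : ∑ w ∈ tS i, lam w ≤ ∑ w ∈ (tS i1).erase Y, lam w :=
          Finset.sum_le_sum_of_subset_of_nonneg hsub (fun w _ _ => hrep.1 w)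
        have h2 : lam Y + ∑ w ∈ (tS i1).erase Y, lam w = ∑ w ∈ tS i1, lam w :=
          Finset.add_sum_erase _ lam hYmem
        have h3 := hts i
        have h4 := hts i1
        have h5 := hcmin i hF
        rw [← hc] at h4
        linarith
      · rw [hd, hbi]
    · have hbi : bpt x i = ⌊x i⌋ := by rw [bpt, if_neg hF]; ring
      rw [hint0 i hF Y hY, hbi]
  -- conclude
  obtain ⟨Y0, hY0⟩ := htne i1 hi1pos
  obtain ⟨-, hY0pos, hY0i1⟩ := Finset.mem_filter.1 hY0
  have hco : (Y0 : Fin n → ℤ) = bpt x := step1 Y0 hY0pos hY0i1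
  have hbm : bpt x ∈ boxF l u := hco ▸ Y0.2
  refine ⟨hbm, ?_, hcpos, hclt⟩
  have hbXY0 : (⟨bpt x, hbm⟩ : X l u) = Y0 := Subtype.ext hco.symm
  have hsingle : tS i1 = {Y0} := by
    apply Finset.Subset.antisymm
    · intro W hW
      obtain ⟨-, hWpos, hWi1⟩ := Finset.mem_filter.1 hW
      have := step1 W hWpos hWi1
      rw [Finset.mem_singleton]
      exact Subtype.ext (this.trans hco.symm)
    · intro W hW
      rw [Finset.mem_singleton] at hW
      rw [hW]; exact hY0
  have := hts i1
  rw [hsingle, Finset.sum_singleton] at this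
  rw [hbXY0, ← this, hc]

end Stmt11Aux
end Chunk4b

section Chunk4c
namespace Stmt11Aux
open Finset

variable {n : ℕ} (l u : Fin n → ℤ)

lemma shrink (x : Fin n → ℝ) (lam : X l u → ℝ) (hrep : Rep l u x lam) (hg : Good l u lam)
    (bX : X l u) (c : ℝ) (hc0 : 0 < c) (hc1 : c < 1) (hlb : lam bX = c) :
    Rep l u (fun i => (x i - c * (((bX : Fin n → ℤ)) i : ℝ)) / (1 - c))
      (fun v => (lam v - (if v = bX then c else 0)) / (1 - c)) ∧
    Good l u (fun v => (lam v - (if v = bX then c else 0)) / (1 - c)) ∧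
    (univ.filter fun v => 0 < (lam v - (if v = bX then c else 0)) / (1 - c))
      ⊆ (univ.filter fun v => 0 < lam v).erase bX := by
  classical
  have hd : (0:ℝ) < 1 - c := by linarith
  have hdne : (1:ℝ) - c ≠ 0 := ne_of_gt hd
  have hpos_iff : ∀ v, 0 < (lam v - (if v = bX then c else 0)) / (1 - c) →
      v ≠ bX ∧ 0 < lam v := by
    intro v hv
    by_cases h : v = bX
    · exfalso; rw [h, if_pos rfl, hlb, sub_self, zero_div] at hv; exact lt_irrefl _ hv
    · rw [if_neg h, sub_zero] at hv
      rcases div_pos_iff.1 hv with ⟨h1, _⟩ | ⟨_, h2⟩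
      · exact ⟨h, h1⟩
      · linarith
  refine ⟨⟨?_, ?_, ?_⟩, ?_, ?_⟩
  · intro v
    show 0 ≤ (lam v - (if v = bX then c else 0)) / (1 - c)
    by_cases h : v = bX
    · subst h; rw [if_pos rfl, hlb, sub_self, zero_div]
    · rw [if_neg h, sub_zero]
      exact div_nonneg (hrep.1 v) hd.le
  · show ∑ v : X l u, (lam v - (if v = bX then c else 0)) / (1 - c) = 1
    rw [← Finset.sum_div, Finset.sum_sub_distrib, hrep.2.1]
    have : ∑ v : X l u, (if v = bX then c else 0) = c := by
      rw [Finset.sum_ite_eq' Finset.univ bX (fun _ => c)]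
      simp
    rw [this, div_self hdne]
  · intro i
    show ∑ v : X l u, ((lam v - (if v = bX then c else 0)) / (1 - c)) * ((v : Fin n → ℤ) i : ℝ)
      = (x i - c * (((bX : Fin n → ℤ)) i : ℝ)) / (1 - c)
    have e : ∀ v : X l u, ((lam v - (if v = bX then c else 0)) / (1 - c)) * ((v : Fin n → ℤ) i : ℝ)
        = (lam v * ((v : Fin n → ℤ) i : ℝ)
            - (if v = bX then c * (((bX : Fin n → ℤ)) i : ℝ) else 0)) / (1 - c) := by
      intro v
      by_cases h : v = bX
      · subst h
        rw [if_pos rfl, if_pos rfl]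
        field_simp
      · rw [if_neg h, if_neg h, sub_zero, sub_zero, div_mul_eq_mul_div]
    rw [Finset.sum_congr rfl fun v _ => e v, ← Finset.sum_div, Finset.sum_sub_distrib,
      hrep.2.2 i]
    have : ∑ v : X l u, (if v = bX then c * (((bX : Fin n → ℤ)) i : ℝ) else 0)
        = c * (((bX : Fin n → ℤ)) i : ℝ) := by
      rw [Finset.sum_ite_eq' Finset.univ bX (fun _ => c * (((bX : Fin n → ℤ)) i : ℝ))]
      simp
    rw [this]
  · intro y z hy hz
    exact hg y z (hpos_iff y hy).2 (hpos_iff z hz).2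
  · intro v hv
    have := hpos_iff v (Finset.mem_filter.1 hv).2
    exact Finset.mem_erase.2 ⟨this.1, Finset.mem_filter.2 ⟨Finset.mem_univ v, this.2⟩⟩

lemma int_case (x : Fin n → ℝ) (lam : X l u → ℝ) (hrep : Rep l u x lam) (hg : Good l u lam)
    (hint : ∀ i, ¬ ((⌊x i⌋ : ℝ) < x i)) :
    lam = fun v : X l u => if (v : Fin n → ℤ) = (fun i => ⌊x i⌋) then (1:ℝ) else 0 := by
  classical
  have hall : ∀ v : X l u, 0 < lam v → (v : Fin n → ℤ) = fun i => ⌊x i⌋ := by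
    intro v hv
    funext i
    have ff := floor_facts l u x lam hrep hg i
    have hzero : x i - (⌊x i⌋ : ℝ) = 0 := by
      have := Int.floor_le (x i); have := hint i; push_neg at this; linarith
    have hsum0 : ∑ w ∈ univ.filter
        (fun w : X l u => 0 < lam w ∧ (w : Fin n → ℤ) i = ⌊x i⌋ + 1), lam w = 0 := by
      rw [← ff.2]; exact hzero
    rcases ff.1 v hv with hd | hd
    · exact hd
    · exfalso
      have hvm : v ∈ univ.filter
          (fun w : X l u => 0 < lam w ∧ (w : Fin n → ℤ) i = ⌊x i⌋ + 1) :=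
        Finset.mem_filter.2 ⟨Finset.mem_univ v, hv, hd⟩
      rw [Finset.sum_eq_zero_iff_of_nonneg (fun w _ => hrep.1 w)] at hsum0
      have := hsum0 v hvm
      linarith
  obtain ⟨v0, hv0mem⟩ := supp_nonempty l u hrep
  have hv0pos : 0 < lam v0 := (Finset.mem_filter.1 hv0mem).2
  have hv0 : (v0 : Fin n → ℤ) = fun i => ⌊x i⌋ := hall v0 hv0pos
  have huniq : ∀ v : X l u, 0 < lam v → v = v0 := by
    intro v hv
    exact Subtype.ext ((hall v hv).trans hv0.symm)
  funext v
  by_cases h : (v : Fin n → ℤ) = fun i => ⌊x i⌋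
  · rw [if_pos h]
    have hv : v = v0 := Subtype.ext (h.trans hv0.symm)
    subst hv
    have hothers : ∀ w : X l u, w ∈ univ → w ≠ v → lam w = 0 := by
      intro w _ hw
      rcases eq_or_lt_of_le (hrep.1 w) with h' | h'
      · exact h'.symm
      · exact absurd (huniq w h') hw
    have := Finset.sum_eq_single v (fun w hw hne => hothers w hw hne)
      (fun h => absurd (Finset.mem_univ v) h)
    rw [← this, hrep.2.1]
  · rw [if_neg h]
    by_contra hc
    have hpos : 0 < lam v := lt_of_le_of_ne (hrep.1 v) (Ne.symm hc)
    exact h (hall v hpos)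

lemma good_unique_aux : ∀ (N : ℕ) (x : Fin n → ℝ) (lam mu : X l u → ℝ),
    (univ.filter fun v : X l u => 0 < lam v).card ≤ N →
    Rep l u x lam → Rep l u x mu → Good l u lam → Good l u mu → lam = mu := by
  intro N
  induction N with
  | zero =>
    intro x lam mu hcard hrl hrm _ _
    exfalso
    have := (supp_nonempty l u hrl).card_pos
    omega
  | succ N ih =>
    intro x lam mu hcard hrl hrm hgl hgm
    classical
    by_cases hne : (Fse x).Nonempty
    · obtain ⟨hbm, hlb, hc0, hc1⟩ := top_mass l u x lam hrl hgl hne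
      obtain ⟨hbm2, hmb, -, -⟩ := top_mass l u x mu hrm hgm hne
      set bX : X l u := ⟨bpt x, hbm⟩ with hbX
      have hmb' : mu bX = cval x := hmb
      obtain ⟨hrepl', hgl', hsubl⟩ := shrink l u x lam hrl hgl bX (cval x) hc0 hc1 hlb
      obtain ⟨hrepm', hgm', hsubm⟩ := shrink l u x mu hrm hgm bX (cval x) hc0 hc1 hmb'
      have hbmem : bX ∈ univ.filter fun v : X l u => 0 < lam v :=
        Finset.mem_filter.2 ⟨Finset.mem_univ _, by rw [hlb]; exact hc0⟩
      have hcard' : (univ.filter fun v : X l u =>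
          0 < (lam v - (if v = bX then cval x else 0)) / (1 - cval x)).card ≤ N := by
        have h1 := Finset.card_le_card hsubl
        rw [Finset.card_erase_of_mem hbmem] at h1
        omega
      have heq := ih _ _ _ hcard' hrepl' hrepm' hgl' hgm'
      funext v
      have h1 := congrFun heq v
      have recov : ∀ t : ℝ, (1 - cval x) * ((t - (if v = bX then cval x else 0)) / (1 - cval x))
          + (if v = bX then cval x else 0) = t := by
        intro t
        have : (1:ℝ) - cval x ≠ 0 := by linarith
        field_simp
        ring
      calc lam v = (1 - cval x) * ((lam v - (if v = bX then cval x else 0)) / (1 - cval x))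
            + (if v = bX then cval x else 0) := (recov (lam v)).symm
        _ = (1 - cval x) * ((mu v - (if v = bX then cval x else 0)) / (1 - cval x))
            + (if v = bX then cval x else 0) := by rw [h1]
        _ = mu v := recov (mu v)
    · have hint : ∀ i, ¬ ((⌊x i⌋ : ℝ) < x i) := by
        intro i hi
        exact hne ⟨i, Finset.mem_filter.2 ⟨Finset.mem_univ i, hi⟩⟩
      rw [int_case l u x lam hrl hgl hint, int_case l u x mu hrm hgm hint]

lemma good_unique (x : Fin n → ℝ) (lam mu : X l u → ℝ)
    (hrl : Rep l u x lam) (hrm : Rep l u x mu)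
    (hgl : Good l u lam) (hgm : Good l u mu) : lam = mu :=
  good_unique_aux l u _ x lam mu (le_refl _) hrl hrm hgl hgm

end Stmt11Aux
end Chunk4c


open Finset

/-- For L♮-convex `f₁,…,f_k` on a common box `𝒳`, the convex hull
of `Q = {(w, x) : x ∈ 𝒳, wᵢ ≥ fᵢ(x) ∀ i}` equals the intersection of the trivial
bounds with the individual epigraph convex hulls. -/
theorem stmt_11 (n k : ℕ) (hk : 1 ≤ k) (l u : Fin n → ℤ) (hlu : ∀ i, l i ≤ u i)
    (f : Fin k → (Fin n → ℤ) → ℝ) (hf : ∀ i, IsLNatOn l u (f i)) :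
    convexHull ℝ
        {q : (Fin k → ℝ) × (Fin n → ℝ) | ∃ x : Fin n → ℤ,
          inBox l u x ∧ q.2 = (fun i => (x i : ℝ)) ∧ ∀ i, f i x ≤ q.1 i}
      = {q : (Fin k → ℝ) × (Fin n → ℝ) |
          (∀ i, (l i : ℝ) ≤ q.2 i ∧ q.2 i ≤ (u i : ℝ)) ∧
          ∀ i : Fin k, (q.2, q.1 i) ∈ convexHull ℝ (epiSet l u (f i))} := by
  classical
  open Stmt11Aux in
  apply Set.Subset.antisymm
  · -- hull Q ⊆ RHS
    apply convexHull_min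
    · rintro ⟨w, xr⟩ ⟨xz, hbox, hx2, hw⟩
      refine ⟨?_, ?_⟩
      · intro i
        simp only at hx2
        rw [hx2]
        exact ⟨Int.cast_le.2 (hbox i).1, Int.cast_le.2 (hbox i).2⟩
      · intro i
        apply subset_convexHull
        exact ⟨xz, hbox, by simpa using hx2, hw i⟩
    · -- RHS convex
      rintro q1 ⟨hb1, hh1⟩ q2 ⟨hb2, hh2⟩ a b ha hb hab
      refine ⟨?_, ?_⟩
      · intro i
        have e : (a • q1 + b • q2).2 i = a * q1.2 i + b * q2.2 i := by
          simp [Prod.snd_add, Prod.smul_snd, Pi.add_apply, Pi.smul_apply, smul_eq_mul]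
        rw [e]
        have h1 := (hb1 i).1
        have h2 := (hb1 i).2
        have h3 := (hb2 i).1
        have h4 := (hb2 i).2
        have keyl : a * ((l i : ℝ)) + b * ((l i : ℝ)) = (l i : ℝ) := by
          rw [← add_mul, hab, one_mul]
        have keyu : a * ((u i : ℝ)) + b * ((u i : ℝ)) = (u i : ℝ) := by
          rw [← add_mul, hab, one_mul]
        constructor
        · linarith [mul_le_mul_of_nonneg_left h1 ha, mul_le_mul_of_nonneg_left h3 hb]
        · linarith [mul_le_mul_of_nonneg_left h2 ha, mul_le_mul_of_nonneg_left h4 hb]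
      · intro i
        have hpt : (((a • q1 + b • q2).2), (a • q1 + b • q2).1 i)
            = a • (q1.2, q1.1 i) + b • (q2.2, q2.1 i) := by
          refine Prod.ext ?_ ?_
          · simp [Prod.snd_add, Prod.smul_snd]
          · simp [Prod.fst_add, Prod.smul_fst, Pi.add_apply, Pi.smul_apply, smul_eq_mul]
        rw [hpt]
        exact (convex_convexHull ℝ (epiSet l u (f i))) (hh1 i) (hh2 i) ha hb hab
  · -- RHS ⊆ hull Q
    rintro q ⟨hbound, hhull⟩
    have hlu' : l ≤ u := fun i => hlu i
    choose ν hν hνval using fun i : Fin k =>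
      rep_of_mem_hull l u hlu' (f i) q.2 (q.1 i) (hhull i)
    choose μ hμrep hμgood hμval using fun i : Fin k =>
      exists_good_rep l u q.2 (f i) (hf i) (ν i) (hν i)
    set i0 : Fin k := ⟨0, hk⟩ with hi0
    set lam : X l u → ℝ := μ i0 with hlam
    have hall : ∀ i, μ i = lam := fun i =>
      good_unique l u q.2 (μ i) lam (hμrep i) (hμrep i0) (hμgood i) (hμgood i0)
    have hlamrep : Rep l u q.2 lam := hμrep i0
    have hval : ∀ i, ∑ v : X l u, lam v * f i ↑v ≤ q.1 i := by
      intro i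
      have h1 := hμval i
      rw [hall i] at h1
      exact le_trans h1 (hνval i)
    set S : Fin k → ℝ := fun i => ∑ v : X l u, lam v * f i ↑v with hS
    set z : X l u → (Fin k → ℝ) × (Fin n → ℝ) := fun v =>
      (fun i => f i ↑v + (q.1 i - S i), fun j => (((v : Fin n → ℤ)) j : ℝ)) with hz
    have hmem : ∀ v : X l u, v ∈ univ → z v ∈
        {q : (Fin k → ℝ) × (Fin n → ℝ) | ∃ x : Fin n → ℤ,
          inBox l u x ∧ q.2 = (fun i => (x i : ℝ)) ∧ ∀ i, f i x ≤ q.1 i} := by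
      intro v _
      refine ⟨(v : Fin n → ℤ), (mem_boxF l u).1 v.2, rfl, fun i => ?_⟩
      have := hval i
      show f i ↑v ≤ f i ↑v + (q.1 i - S i)
      rw [hS]
      linarith
    have hsumpos : 0 < ∑ v : X l u, lam v := by rw [hlamrep.2.1]; norm_num
    have hcm := Finset.centerMass_mem_convexHull Finset.univ
      (fun v _ => hlamrep.1 v) hsumpos hmem
    have hcmq : Finset.univ.centerMass lam z = q := by
      rw [Finset.centerMass, hlamrep.2.1, inv_one, one_smul]
      refine Prod.ext ?_ ?_
      · rw [Prod.fst_sum]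
        funext i
        rw [Finset.sum_apply]
        have e : ∀ v : X l u, ((lam v • z v).1) i
            = lam v * f i ↑v + lam v * (q.1 i - S i) := by
          intro v
          simp only [hz, Prod.smul_fst, Pi.smul_apply, smul_eq_mul]
          ring
        rw [Finset.sum_congr rfl fun v _ => e v, Finset.sum_add_distrib, ← Finset.sum_mul,
          hlamrep.2.1, one_mul]
        show S i + (q.1 i - S i) = q.1 i
        ring
      · rw [Prod.snd_sum]
        funext j
        rw [Finset.sum_apply]
        have e : ∀ v : X l u, ((lam v • z v).2) j
            = lam v * (((v : Fin n → ℤ)) j : ℝ) := by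
          intro v
          simp only [hz, Prod.smul_snd, Pi.smul_apply, smul_eq_mul]
        rw [Finset.sum_congr rfl fun v _ => e v, hlamrep.2.2 j]
    rw [← hcmq]
    exact hcm
end
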